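/- arXiv:2304.02679 — 11 statements merged into one kernel-verified Lean document; each statement's English description precedes it below -/
import Mathlib

section
/- Let G be the covalent modification network (n,m,φ) with bifunctional enzyme C_α, where φ: [1,m] → [1,N] is injective. Then the deficiency of G equals 0 if [1,n] ∩ φ([1,m]) = ∅, and equals #([1,n] ∩ φ([1,m])) − 1 otherwise. -/
/-!
Call two substrates equivalent when both lie on the forward chain `[1,n]` or both on the
backward chain `φ[1,m]`, and let `c` pick a root in each class. The reaction vectors span the
same space as the binding vectors `C i - S i - E`, `D j - S (φ j) - C α` together with the
differences `S x - S (c x)` over the non-root substrates: the dissociation vectors are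
negatives of binding vectors, and each catalytic vector is a binding vector plus a
difference of substrates in one class. This family is linearly independent by a
triangularity argument (pivot coordinates `D j`, then `C i`, then `S x`), so
`s = (n - 1) + (m - 1) + #([1,n] ∪ φ[1,m]) - #classes`, with two classes when the chains are
disjoint and one otherwise.
-/

open Finset

/-- Indicator vector of substrate species `S i` (coded at index `4 i`). -/
noncomputable def eS (i : ℕ) : ℕ → ℝ := Pi.single (4 * i) 1
/-- Indicator vector of the enzyme `E` (coded at index `1`). -/
noncomputable def eE : ℕ → ℝ := Pi.single 1 1
/-- Indicator vector of the intermediate complex `C i` (coded at index `4 i + 2`). -/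
noncomputable def eC (i : ℕ) : ℕ → ℝ := Pi.single (4 * i + 2) 1
/-- Indicator vector of the intermediate complex `D j` (coded at index `4 j + 3`). -/
noncomputable def eD (j : ℕ) : ℕ → ℝ := Pi.single (4 * j + 3) 1

/-- The set of reaction vectors of the covalent modification network `(n, m, φ)`
with bifunctional enzyme `C α`: forward chain `S i + E ⇌ C i → S (i+1) + E` for
`i ∈ [1, n-1]`, backward chain `S (φ j) + C α ⇌ D j → S (φ (j+1)) + C α` for
`j ∈ [1, m-1]`. -/
def CMNReactionVectors (n m α : ℕ) (φ : ℕ → ℕ) : Set (ℕ → ℝ) :=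
  {v | (∃ i, 1 ≤ i ∧ i ≤ n - 1 ∧
          (v = eC i - eS i - eE ∨ v = eS i + eE - eC i ∨ v = eS (i + 1) + eE - eC i))
    ∨ (∃ j, 1 ≤ j ∧ j ≤ m - 1 ∧
          (v = eD j - eS (φ j) - eC α ∨ v = eS (φ j) + eC α - eD j
            ∨ v = eS (φ (j + 1)) + eC α - eD j))}

theorem linearIndependent_of_pivot {ι κ R : Type*} [Ring R] [NoZeroDivisors R]
    {v : ι → κ → R} (p : ι → κ) (r : ι → ℕ) (hpiv : ∀ i, v i (p i) ≠ 0)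
    (htri : ∀ i j, j ≠ i → v j (p i) ≠ 0 → r j < r i) :
    LinearIndependent R v := by
  rw [linearIndependent_iff']
  intro s g hg i
  induction hr : r i using Nat.strong_induction_on generalizing i with
  | _ k ih =>
    intro hi
    have hcoord : ∑ j ∈ s, g j * v j (p i) = 0 := by simpa using congrFun hg (p i)
    rw [sum_eq_single_of_mem i hi] at hcoord
    · exact (mul_eq_zero.mp hcoord).resolve_right (hpiv i)
    · intro j hj hji
      by_cases hz : v j (p i) = 0
      · rw [hz, mul_zero]
      · rw [ih (r j) (hr ▸ htri i j hji hz) j rfl hj, zero_mul]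

theorem sub_mem_of_forall_succ_sub_mem {G S : Type*} [AddCommGroup G] [SetLike S G]
    [AddSubgroupClass S G] {P : S} {w : ℕ → G} {lo hi : ℕ}
    (h : ∀ t ∈ Ico lo hi, w (t + 1) - w t ∈ P) {a b : ℕ}
    (ha : a ∈ Icc lo hi) (hb : b ∈ Icc lo hi) : w b - w a ∈ P := by
  have hle : ∀ {a b : ℕ}, a ∈ Icc lo hi → b ∈ Icc lo hi → a ≤ b → w b - w a ∈ P :=
    fun ha hb hab => by
      rw [← sum_Ico_sub w hab]
      refine sum_mem fun t ht => h t ?_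
      simp only [mem_Ico, mem_Icc] at ha hb ht ⊢
      omega
  rcases le_total a b with hab | hba
  · exact hle ha hb hab
  · exact sub_mem_comm_iff.mp (hle hb ha hba)

theorem card_image_Icc_of_injOn {m : ℕ} {φ : ℕ → ℕ} (hφ : Set.InjOn φ (Set.Icc 1 m)) :
    #((Icc 1 m).image φ) = m := by
  rw [card_image_of_injOn (by rwa [coe_Icc]), Nat.card_Icc, Nat.add_sub_cancel]

namespace CMN

/-- `T₃` stands for the non-root substrates and `c` for the choice of a root in each class. -/
noncomputable def basisFamily (α : ℕ) (φ c : ℕ → ℕ) (T₁ T₂ T₃ : Finset ℕ) :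
    T₁ ⊕ T₂ ⊕ T₃ → ℕ → ℝ
  | .inl i => eC i - eS i - eE
  | .inr (.inl j) => eD j - eS (φ j) - eC α
  | .inr (.inr x) => eS x - eS (c x)

theorem linearIndependent_basisFamily (α : ℕ) (φ c : ℕ → ℕ) (T₁ T₂ T₃ : Finset ℕ)
    (hc : ∀ x ∈ T₃, c x ∉ T₃) : LinearIndependent ℝ (basisFamily α φ c T₁ T₂ T₃) := by
  -- pivots: `D j` at its own coordinate, then `C i` (hit also by the `D`s through `C α`),
  -- then `S x` (hit also by the `C`s and `D`s, but by no other `S x' - S (c x')`)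
  refine linearIndependent_of_pivot
    (fun | .inl i => 4 * i + 2 | .inr (.inl j) => 4 * j + 3 | .inr (.inr x) => 4 * x)
    (fun | .inl _ => 1 | .inr (.inl _) => 0 | .inr (.inr _) => 2) ?_ ?_
  · rintro (i | j | ⟨x, hx⟩)
    all_goals simp only [basisFamily, eS, eE, eC, eD, Pi.sub_apply, Pi.single_apply]
    · split_ifs <;> first | omega | norm_num
    · split_ifs <;> first | omega | norm_num
    · have hxc : x ≠ c x := fun h => hc x hx (h ▸ hx)
      split_ifs <;> first | omega | norm_num
  · rintro (⟨i, _⟩ | ⟨j, _⟩ | ⟨x, hx⟩) (⟨i', _⟩ | ⟨j', _⟩ | ⟨x', hx'⟩) hne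
    all_goals simp only [ne_eq, Sum.inl.injEq, Sum.inr.injEq, Subtype.mk.injEq] at hne
    all_goals simp only [basisFamily, eS, eE, eC, eD, Pi.sub_apply, Pi.single_apply]
    all_goals intro h
    all_goals split_ifs at h <;> try first | omega | (norm_num at h; done)
    -- the one surviving case is `x = c x'`, excluded since `c` maps `T₃` out of itself
    exact absurd ((show x = c x' by omega) ▸ hx) (hc x' hx')

open Submodule

variable (n m α : ℕ) (φ : ℕ → ℕ)

theorem forward_step_mem_span {i : ℕ} (hi : i ∈ Icc 1 (n - 1)) :
    eS (i + 1) - eS i ∈ span ℝ (CMNReactionVectors n m α φ) := by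
  obtain ⟨hi₁, hi₂⟩ := mem_Icc.mp hi
  have hbind : eC i - eS i - eE ∈ CMNReactionVectors n m α φ :=
    Or.inl ⟨i, hi₁, hi₂, Or.inl rfl⟩
  have hcat : eS (i + 1) + eE - eC i ∈ CMNReactionVectors n m α φ :=
    Or.inl ⟨i, hi₁, hi₂, Or.inr (Or.inr rfl)⟩
  rw [show eS (i + 1) - eS i = (eC i - eS i - eE) + (eS (i + 1) + eE - eC i) by abel]
  exact add_mem (subset_span hbind) (subset_span hcat)

theorem backward_step_mem_span {j : ℕ} (hj : j ∈ Icc 1 (m - 1)) :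
    eS (φ (j + 1)) - eS (φ j) ∈ span ℝ (CMNReactionVectors n m α φ) := by
  obtain ⟨hj₁, hj₂⟩ := mem_Icc.mp hj
  have hbind : eD j - eS (φ j) - eC α ∈ CMNReactionVectors n m α φ :=
    Or.inr ⟨j, hj₁, hj₂, Or.inl rfl⟩
  have hcat : eS (φ (j + 1)) + eC α - eD j ∈ CMNReactionVectors n m α φ :=
    Or.inr ⟨j, hj₁, hj₂, Or.inr (Or.inr rfl)⟩
  rw [show eS (φ (j + 1)) - eS (φ j) = (eD j - eS (φ j) - eC α) + (eS (φ (j + 1)) + eC α - eD j)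
    by abel]
  exact add_mem (subset_span hbind) (subset_span hcat)

theorem forward_sub_mem_span {x y : ℕ} (hx : x ∈ Icc 1 n) (hy : y ∈ Icc 1 n) :
    eS x - eS y ∈ span ℝ (CMNReactionVectors n m α φ) :=
  sub_mem_of_forall_succ_sub_mem (fun t ht => forward_step_mem_span n m α φ <| by
    simp only [mem_Ico, mem_Icc] at ht ⊢; omega) hy hx

theorem backward_sub_mem_span {a b : ℕ} (ha : a ∈ Icc 1 m) (hb : b ∈ Icc 1 m) :
    eS (φ a) - eS (φ b) ∈ span ℝ (CMNReactionVectors n m α φ) :=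
  sub_mem_of_forall_succ_sub_mem (w := fun j => eS (φ j))
    (fun t ht => backward_step_mem_span n m α φ <| by
      simp only [mem_Ico, mem_Icc] at ht ⊢; omega) hb ha

theorem span_reactionVectors_le {Q : Submodule ℝ (ℕ → ℝ)}
    (hC : ∀ i ∈ Icc 1 (n - 1), eC i - eS i - eE ∈ Q)
    (hD : ∀ j ∈ Icc 1 (m - 1), eD j - eS (φ j) - eC α ∈ Q)
    (hfwd : ∀ i ∈ Icc 1 (n - 1), eS (i + 1) - eS i ∈ Q)
    (hbwd : ∀ j ∈ Icc 1 (m - 1), eS (φ (j + 1)) - eS (φ j) ∈ Q) :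
    span ℝ (CMNReactionVectors n m α φ) ≤ Q := by
  rw [span_le]
  rintro v (⟨i, hi₁, hi₂, hv⟩ | ⟨j, hj₁, hj₂, hv⟩)
  · have hi : i ∈ Icc 1 (n - 1) := mem_Icc.mpr ⟨hi₁, hi₂⟩
    rcases hv with rfl | rfl | rfl
    · exact hC i hi
    · rw [show eS i + eE - eC i = -(eC i - eS i - eE) by abel]
      exact Q.neg_mem (hC i hi)
    · rw [show eS (i + 1) + eE - eC i = (eS (i + 1) - eS i) - (eC i - eS i - eE) by abel]
      exact Q.sub_mem (hfwd i hi) (hC i hi)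
  · have hj : j ∈ Icc 1 (m - 1) := mem_Icc.mpr ⟨hj₁, hj₂⟩
    rcases hv with rfl | rfl | rfl
    · exact hD j hj
    · rw [show eS (φ j) + eC α - eD j = -(eD j - eS (φ j) - eC α) by abel]
      exact Q.neg_mem (hD j hj)
    · rw [show eS (φ (j + 1)) + eC α - eD j
        = (eS (φ (j + 1)) - eS (φ j)) - (eD j - eS (φ j) - eC α) by abel]
      exact Q.sub_mem (hbwd j hj) (hD j hj)

theorem span_basisFamily_eq (c : ℕ → ℕ) (T : Finset ℕ)
    (hroot : ∀ x ∈ Icc 1 n ∪ (Icc 1 m).image φ, x ∉ T → c x = x)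
    (hcfwd : ∀ x ∈ Icc 1 n, ∀ y ∈ Icc 1 n, c x = c y)
    (hcbwd : ∀ a ∈ Icc 1 m, ∀ b ∈ Icc 1 m, c (φ a) = c (φ b))
    (hcR : ∀ x ∈ T, eS x - eS (c x) ∈ span ℝ (CMNReactionVectors n m α φ)) :
    span ℝ (Set.range (basisFamily α φ c (Icc 1 (n - 1)) (Icc 1 (m - 1)) T))
      = span ℝ (CMNReactionVectors n m α φ) := by
  set F := span ℝ (Set.range (basisFamily α φ c (Icc 1 (n - 1)) (Icc 1 (m - 1)) T))
  apply le_antisymm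
  · rw [span_le]
    rintro _ ⟨⟨i, hi⟩ | ⟨j, hj⟩ | ⟨x, hx⟩, rfl⟩
    · exact subset_span (Or.inl ⟨i, (mem_Icc.mp hi).1, (mem_Icc.mp hi).2, Or.inl rfl⟩)
    · exact subset_span (Or.inr ⟨j, (mem_Icc.mp hj).1, (mem_Icc.mp hj).2, Or.inl rfl⟩)
    · exact hcR x hx
  have hS : ∀ x ∈ Icc 1 n ∪ (Icc 1 m).image φ, eS x - eS (c x) ∈ F := by
    intro x hx
    by_cases hxT : x ∈ T
    · exact subset_span ⟨.inr (.inr ⟨x, hxT⟩), rfl⟩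
    · rw [hroot x hx hxT, sub_self]
      exact F.zero_mem
  have hfwd : ∀ x ∈ Icc 1 n, eS x - eS (c x) ∈ F := fun x hx => hS x (mem_union_left _ hx)
  have hbwd : ∀ a ∈ Icc 1 m, eS (φ a) - eS (c (φ a)) ∈ F :=
    fun a ha => hS _ (mem_union_right _ (mem_image_of_mem φ ha))
  apply span_reactionVectors_le
  · exact fun i hi => subset_span ⟨.inl ⟨i, hi⟩, rfl⟩
  · exact fun j hj => subset_span ⟨.inr (.inl ⟨j, hj⟩), rfl⟩
  · intro i hi
    obtain ⟨hi₁, hi₂⟩ := mem_Icc.mp hi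
    have hi' : i ∈ Icc 1 n := mem_Icc.mpr ⟨hi₁, by omega⟩
    have hi'' : i + 1 ∈ Icc 1 n := mem_Icc.mpr ⟨by omega, by omega⟩
    rw [show eS (i + 1) - eS i = (eS (i + 1) - eS (c (i + 1))) - (eS i - eS (c i)) by
      rw [hcfwd _ hi'' _ hi']; abel]
    exact F.sub_mem (hfwd _ hi'') (hfwd _ hi')
  · intro j hj
    obtain ⟨hj₁, hj₂⟩ := mem_Icc.mp hj
    have hj' : j ∈ Icc 1 m := mem_Icc.mpr ⟨hj₁, by omega⟩
    have hj'' : j + 1 ∈ Icc 1 m := mem_Icc.mpr ⟨by omega, by omega⟩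
    rw [show eS (φ (j + 1)) - eS (φ j)
        = (eS (φ (j + 1)) - eS (c (φ (j + 1)))) - (eS (φ j) - eS (c (φ j))) by
      rw [hcbwd _ hj'' _ hj']; abel]
    exact F.sub_mem (hbwd _ hj'') (hbwd _ hj')

theorem finrank_span_reactionVectors (c : ℕ → ℕ) (T : Finset ℕ) (hcT : ∀ x ∈ T, c x ∉ T)
    (hroot : ∀ x ∈ Icc 1 n ∪ (Icc 1 m).image φ, x ∉ T → c x = x)
    (hcfwd : ∀ x ∈ Icc 1 n, ∀ y ∈ Icc 1 n, c x = c y)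
    (hcbwd : ∀ a ∈ Icc 1 m, ∀ b ∈ Icc 1 m, c (φ a) = c (φ b))
    (hcR : ∀ x ∈ T, eS x - eS (c x) ∈ span ℝ (CMNReactionVectors n m α φ)) :
    Module.finrank ℝ (span ℝ (CMNReactionVectors n m α φ)) = (n - 1) + (m - 1) + #T := by
  rw [← span_basisFamily_eq n m α φ c T hroot hcfwd hcbwd hcR,
    finrank_span_eq_card (linearIndependent_basisFamily α φ c _ _ T hcT)]
  simp [Fintype.card_sum, add_assoc]

theorem finrank_span_reactionVectors_of_disjoint (hn : 1 ≤ n) (hm : 1 ≤ m)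
    (hφ : Set.InjOn φ (Set.Icc 1 m)) (hdisj : Disjoint (Icc 1 n) ((Icc 1 m).image φ)) :
    Module.finrank ℝ (span ℝ (CMNReactionVectors n m α φ)) + 4 = 2 * n + 2 * m := by
  have h1 : 1 ∈ Icc 1 n := mem_Icc.mpr ⟨le_rfl, hn⟩
  have hφ1 : φ 1 ∈ (Icc 1 m).image φ := mem_image_of_mem φ (mem_Icc.mpr ⟨le_rfl, hm⟩)
  have hφ1n : φ 1 ∉ Icc 1 n := disjoint_right.mp hdisj hφ1
  let c : ℕ → ℕ := fun x => if x ∈ Icc 1 n then 1 else φ 1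
  let T := (Icc 1 n).erase 1 ∪ ((Icc 1 m).image φ).erase (φ 1)
  have hcT : ∀ x ∈ T, c x ∉ T := by
    intro x _
    simp only [c, T, mem_union, mem_erase, not_or, not_and]
    split_ifs
    · exact ⟨fun h => absurd rfl h, fun _ h => disjoint_left.mp hdisj h1 h⟩
    · exact ⟨fun _ h => hφ1n h, fun h => absurd rfl h⟩
  have hroot : ∀ x ∈ Icc 1 n ∪ (Icc 1 m).image φ, x ∉ T → c x = x := by
    intro x hx hxT
    simp only [c, T, mem_union, mem_erase, not_or, not_and] at hx hxT ⊢
    split_ifs with hxn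
    · by_contra h
      exact hxT.1 (Ne.symm h) hxn
    · by_contra h
      exact hxT.2 (Ne.symm h) (hx.resolve_left hxn)
  have hcR : ∀ x ∈ T, eS x - eS (c x) ∈ span ℝ (CMNReactionVectors n m α φ) := by
    intro x hx
    rcases mem_union.mp hx with hxn | hxm
    · have hxn := mem_of_mem_erase hxn
      simp only [c, if_pos hxn]
      exact forward_sub_mem_span n m α φ hxn h1
    · have hxm := mem_of_mem_erase hxm
      simp only [c, if_neg (disjoint_right.mp hdisj hxm)]
      obtain ⟨a, ha, rfl⟩ := mem_image.mp hxm
      exact backward_sub_mem_span n m α φ ha (mem_Icc.mpr ⟨le_rfl, hm⟩)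
  have hcfwd : ∀ x ∈ Icc 1 n, ∀ y ∈ Icc 1 n, c x = c y := fun x hx y hy => by
    simp only [c, if_pos hx, if_pos hy]
  have hcbwd : ∀ a ∈ Icc 1 m, ∀ b ∈ Icc 1 m, c (φ a) = c (φ b) := fun a ha b hb => by
    simp only [c, if_neg (disjoint_right.mp hdisj (mem_image_of_mem φ ha)),
      if_neg (disjoint_right.mp hdisj (mem_image_of_mem φ hb))]
  have hT : #T = (n - 1) + (m - 1) := by
    rw [card_union_of_disjoint (hdisj.mono (erase_subset _ _) (erase_subset _ _)),
      card_erase_of_mem h1, card_erase_of_mem hφ1, Nat.card_Icc, card_image_Icc_of_injOn hφ,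
      Nat.add_sub_cancel]
  rw [finrank_span_reactionVectors n m α φ c T hcT hroot hcfwd hcbwd hcR, hT]
  omega

theorem finrank_span_reactionVectors_of_inter_nonempty (hn : 1 ≤ n)
    (hφ : Set.InjOn φ (Set.Icc 1 m)) (hne : (Icc 1 n ∩ (Icc 1 m).image φ).Nonempty) :
    Module.finrank ℝ (span ℝ (CMNReactionVectors n m α φ))
      + #(Icc 1 n ∩ (Icc 1 m).image φ) + 3 = 2 * n + 2 * m := by
  have h1 : 1 ∈ Icc 1 n := mem_Icc.mpr ⟨le_rfl, hn⟩
  obtain ⟨z, hz⟩ := hne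
  obtain ⟨hzn, hzm⟩ := mem_inter.mp hz
  obtain ⟨b, hb, rfl⟩ := mem_image.mp hzm
  have hcR : ∀ x ∈ (Icc 1 n ∪ (Icc 1 m).image φ).erase 1,
      eS x - eS 1 ∈ span ℝ (CMNReactionVectors n m α φ) := by
    intro x hx
    rcases mem_union.mp (mem_of_mem_erase hx) with hxn | hxm
    · exact forward_sub_mem_span n m α φ hxn h1
    · obtain ⟨a, ha, rfl⟩ := mem_image.mp hxm
      rw [show eS (φ a) - eS 1 = (eS (φ a) - eS (φ b)) + (eS (φ b) - eS 1) by abel]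
      exact add_mem (backward_sub_mem_span n m α φ ha hb)
        (forward_sub_mem_span n m α φ hzn h1)
  have hunion := card_union_add_card_inter (Icc 1 n) ((Icc 1 m).image φ)
  rw [Nat.card_Icc, card_image_Icc_of_injOn hφ] at hunion
  rw [finrank_span_reactionVectors n m α φ (fun _ => 1) _ (fun _ _ => notMem_erase 1 _)
    (fun x hx hxT => by_contra fun h => hxT (mem_erase.mpr ⟨Ne.symm h, hx⟩))
    (fun _ _ _ _ => rfl) (fun _ _ _ _ => rfl) hcR, card_erase_of_mem (mem_union_left _ h1)]
  have hinter_pos := card_pos.mpr ⟨_, hz⟩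
  have hm := (mem_Icc.mp hb).1.trans (mem_Icc.mp hb).2
  have hunion_pos := card_pos.mpr ⟨1, mem_union_left ((Icc 1 m).image φ) h1⟩
  omega

end CMN

theorem cmn_deficiency_general
    (n m α : ℕ) (hn : 2 ≤ n) (hm : 2 ≤ m)
    (φ : ℕ → ℕ) (hφinj : Set.InjOn φ (Set.Icc 1 m)) :
    ((Finset.Icc 1 n ∩ (Finset.Icc 1 m).image φ = ∅ →
        ((2 * n + 2 * m - 2 : ℤ) - 2
            - Module.finrank ℝ (Submodule.span ℝ (CMNReactionVectors n m α φ)) = 0))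
      ∧ (Finset.Icc 1 n ∩ (Finset.Icc 1 m).image φ ≠ ∅ →
        ((2 * n + 2 * m - 2 : ℤ) - 2
            - Module.finrank ℝ (Submodule.span ℝ (CMNReactionVectors n m α φ))
          = (Finset.Icc 1 n ∩ (Finset.Icc 1 m).image φ).card - 1))) := by
  constructor
  · intro hemp
    have := CMN.finrank_span_reactionVectors_of_disjoint n m α φ (by omega) (by omega) hφinj
      (disjoint_iff_inter_eq_empty.mpr hemp)
    omega
  · intro hne
    have := CMN.finrank_span_reactionVectors_of_inter_nonempty n m α φ (by omega) hφinj
      (nonempty_iff_ne_empty.mpr hne)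
    omega

/-- The covalent modification network `(n, m, φ)` with
bifunctional enzyme `C α` has deficiency `δ = C - ℓ - s` (with `C = 2n + 2m - 2`
complexes, `ℓ = 2` linkage classes and `s` the dimension of the span of the
reaction vectors) equal to `0` if `[1,n] ∩ φ([1,m]) = ∅`, and equal to
`#([1,n] ∩ φ([1,m])) - 1` otherwise. -/
theorem cmn_deficiency
    (n m N α : ℕ) (hn : 2 ≤ n) (hm : 2 ≤ m) (hα : α ∈ Finset.Icc 1 (n - 1))
    (φ : ℕ → ℕ) (hφinj : Set.InjOn φ (Set.Icc 1 m))
    (hφrange : ∀ j ∈ Finset.Icc 1 m, φ j ∈ Finset.Icc 1 N) :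
    ((Finset.Icc 1 n ∩ (Finset.Icc 1 m).image φ = ∅ →
        ((2 * n + 2 * m - 2 : ℤ) - 2
            - Module.finrank ℝ (Submodule.span ℝ (CMNReactionVectors n m α φ)) = 0))
      ∧ (Finset.Icc 1 n ∩ (Finset.Icc 1 m).image φ ≠ ∅ →
        ((2 * n + 2 * m - 2 : ℤ) - 2
            - Module.finrank ℝ (Submodule.span ℝ (CMNReactionVectors n m α φ))
          = (Finset.Icc 1 n ∩ (Finset.Icc 1 m).image φ).card - 1))) :=
  cmn_deficiency_general n m α hn hm φ hφinj
end

section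
/- For the n-site futile cycle with bifunctional enzyme C_α (m = n, φ_j = n+1−j), at any positive steady state of the mass-action ODEs one has k_i c_i = h_{n−i} d_{n−i} for all i ∈ [1,n−1]. -/
open Finset

/-- Net forward-chain production rate of substrate `S i` (with conventions
`k 0 = 0`, `kp n = km n = 0`). -/
noncomputable def Ffwd (kp km k : ℕ → ℝ) (s : ℕ → ℝ) (e : ℝ) (c : ℕ → ℝ) (i : ℕ) : ℝ :=
  -(kp i) * s i * e + km i * c i + k (i - 1) * c (i - 1)

/-- Mass-action steady state equations for the covalent modification network
`(n, m, φ)` with bifunctional enzyme `C α`: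
forward chain `S i + E ⇌ C i → S (i+1) + E` for `i ∈ [1, n-1]`,
backward chain `S (φ j) + C α ⇌ D j → S (φ (j+1)) + C α` for `j ∈ [1, m-1]`. -/
noncomputable def CMNSteadyState (n m α : ℕ) (φ : ℕ → ℕ) (kp km k hp hm h : ℕ → ℝ)
    (s : ℕ → ℝ) (e : ℝ) (c d : ℕ → ℝ) : Prop :=
  -- substrate equations
  (∀ i ∈ Finset.Icc 1 n ∪ (Finset.Icc 1 m).image φ,
      (if i ∈ Finset.Icc 1 n then Ffwd kp km k s e c i else 0)
        + ∑ j ∈ Finset.Icc 1 (m - 1),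
            ((if φ j = i then -(hp j) * s i * c α + hm j * d j else 0)
              + (if φ (j + 1) = i then h j * d j else 0)) = 0)
  -- enzyme E equation
  ∧ (∑ i ∈ Finset.Icc 1 (n - 1), (-(kp i) * s i * e + (km i + k i) * c i) = 0)
  -- intermediate complexes C i
  ∧ (∀ i ∈ Finset.Icc 1 (n - 1),
      kp i * s i * e - (km i + k i) * c i
        + (if i = α then
            ∑ j ∈ Finset.Icc 1 (m - 1), (-(hp j) * s (φ j) * c α + (hm j + h j) * d j)
          else 0) = 0)
  -- intermediate complexes D j
  ∧ (∀ j ∈ Finset.Icc 1 (m - 1), hp j * s (φ j) * c α - (hm j + h j) * d j = 0)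

/-- Strict positivity of a concentration vector of the network `(n, m, φ)`. -/
def CMNPositive (n m : ℕ) (φ : ℕ → ℕ) (s : ℕ → ℝ) (e : ℝ) (c d : ℕ → ℝ) : Prop :=
  (∀ i ∈ Finset.Icc 1 n ∪ (Finset.Icc 1 m).image φ, 0 < s i) ∧ 0 < e
    ∧ (∀ i ∈ Finset.Icc 1 (n - 1), 0 < c i) ∧ (∀ j ∈ Finset.Icc 1 (m - 1), 0 < d j)

/-- For the `n`-site futile cycle with bifunctional enzyme `C α`,
at any positive steady state one has `k i * c i = h (n-i) * d (n-i)` for all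
`i ∈ [1, n-1]`. -/
theorem futile_cycle_kc_eq_hd
    (n α : ℕ) (hn : 2 ≤ n) (hα : α ∈ Finset.Icc 1 (n - 1))
    (kp km k hp hm h : ℕ → ℝ)
    (hkpos : ∀ i ∈ Finset.Icc 1 (n - 1), 0 < kp i ∧ 0 < km i ∧ 0 < k i)
    (hhpos : ∀ j ∈ Finset.Icc 1 (n - 1), 0 < hp j ∧ 0 < hm j ∧ 0 < h j)
    (hk0 : k 0 = 0) (hkpn : kp n = 0) (hkmn : km n = 0) (hh0 : h 0 = 0)
    (s : ℕ → ℝ) (e : ℝ) (c d : ℕ → ℝ)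
    (hpos : CMNPositive n n (fun j => n + 1 - j) s e c d)
    (hss : CMNSteadyState n n α (fun j => n + 1 - j) kp km k hp hm h s e c d) :
    ∀ i ∈ Finset.Icc 1 (n - 1), k i * c i = h (n - i) * d (n - i) := by
  obtain ⟨hSub, hE, hC, hD⟩ := hss
  have hmem : ∀ i, 1 ≤ i → i ≤ n →
      i ∈ Finset.Icc 1 n ∪ (Finset.Icc 1 n).image (fun j => n + 1 - j) := by
    intro i h1 h2
    exact Finset.mem_union_left _ (Finset.mem_Icc.mpr ⟨h1, h2⟩)
  -- C equations simplified
  have hC' : ∀ i ∈ Finset.Icc 1 (n - 1), kp i * s i * e - (km i + k i) * c i = 0 := by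
    intro i hi
    have hci := hC i hi
    by_cases hia : i = α
    · rw [if_pos hia] at hci
      have hsum : ∑ j ∈ Finset.Icc 1 (n - 1),
          (-(hp j) * s ((fun j => n + 1 - j) j) * c α + (hm j + h j) * d j) = 0 := by
        apply Finset.sum_eq_zero
        intro j hj
        have := hD j hj
        simp only at this ⊢
        linarith
      rw [hsum] at hci; linarith
    · rw [if_neg hia] at hci; linarith
  -- the substrate recursion, general form
  have hsub' : ∀ i, 1 ≤ i → i ≤ n →
      Ffwd kp km k s e c i
        + (∑ j ∈ Finset.Icc 1 (n - 1), (if n + 1 - j = i then -(hp j) * s i * c α + hm j * d j else 0))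
        + (∑ j ∈ Finset.Icc 1 (n - 1), (if n + 1 - (j + 1) = i then h j * d j else 0)) = 0 := by
    intro i h1 h2
    have := hSub i (hmem i h1 h2)
    simp only at this
    rw [if_pos (Finset.mem_Icc.mpr ⟨h1, h2⟩), Finset.sum_add_distrib] at this
    linarith
  -- base case: i = 1
  have hbase : k 1 * c 1 = h (n - 1) * d (n - 1) := by
    have h1 := hsub' 1 le_rfl (by omega)
    have hA : ∑ j ∈ Finset.Icc 1 (n - 1),
        (if n + 1 - j = 1 then -(hp j) * s 1 * c α + hm j * d j else 0) = 0 := by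
      apply Finset.sum_eq_zero
      intro j hj
      simp only [Finset.mem_Icc] at hj
      rw [if_neg (by omega)]
    have hB : ∑ j ∈ Finset.Icc 1 (n - 1),
        (if n + 1 - (j + 1) = 1 then h j * d j else 0) = h (n - 1) * d (n - 1) := by
      rw [Finset.sum_eq_single_of_mem (n - 1)
        (Finset.mem_Icc.mpr ⟨by omega, le_rfl⟩)]
      · rw [if_pos (by omega)]
      · intro j hj hne
        simp only [Finset.mem_Icc] at hj
        rw [if_neg (by omega)]
    have hF : Ffwd kp km k s e c 1 = -(k 1 * c 1) := by
      have := hC' 1 (Finset.mem_Icc.mpr ⟨le_rfl, by omega⟩)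
      simp only [Ffwd]
      rw [hk0]
      ring_nf
      ring_nf at this
      linarith
    rw [hA, hB, hF] at h1
    linarith
  -- recursion for 2 ≤ i ≤ n-1
  have hrec : ∀ i, 2 ≤ i → i ≤ n - 1 →
      k i * c i - h (n - i) * d (n - i)
        = k (i - 1) * c (i - 1) - h (n - (i - 1)) * d (n - (i - 1)) := by
    intro i h2 hle
    have h1 := hsub' i (by omega) (by omega)
    have hA : ∑ j ∈ Finset.Icc 1 (n - 1),
        (if n + 1 - j = i then -(hp j) * s i * c α + hm j * d j else 0)
        = -(h (n + 1 - i)) * d (n + 1 - i) := by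
      rw [Finset.sum_eq_single_of_mem (n + 1 - i)
        (Finset.mem_Icc.mpr ⟨by omega, by omega⟩)]
      · rw [if_pos (by omega)]
        have := hD (n + 1 - i) (Finset.mem_Icc.mpr ⟨by omega, by omega⟩)
        simp only at this
        have hsi : n + 1 - (n + 1 - i) = i := by omega
        rw [hsi] at this
        linarith
      · intro j hj hne
        simp only [Finset.mem_Icc] at hj
        rw [if_neg (by omega)]
    have hB : ∑ j ∈ Finset.Icc 1 (n - 1),
        (if n + 1 - (j + 1) = i then h j * d j else 0) = h (n - i) * d (n - i) := by
      rw [Finset.sum_eq_single_of_mem (n - i)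
        (Finset.mem_Icc.mpr ⟨by omega, by omega⟩)]
      · rw [if_pos (by omega)]
      · intro j hj hne
        simp only [Finset.mem_Icc] at hj
        rw [if_neg (by omega)]
    have hF : Ffwd kp km k s e c i = -(k i * c i) + k (i - 1) * c (i - 1) := by
      have := hC' i (Finset.mem_Icc.mpr ⟨by omega, hle⟩)
      simp only [Ffwd]
      ring_nf
      ring_nf at this
      linarith
    rw [hA, hB, hF] at h1
    have hi1 : n - (i - 1) = n + 1 - i := by omega
    rw [hi1]
    linarith
  -- induction
  intro i hi
  simp only [Finset.mem_Icc] at hi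
  obtain ⟨hi1, hi2⟩ := hi
  revert hi2
  induction i, hi1 using Nat.le_induction with
  | base => intro _; simpa using hbase
  | succ i hge ih =>
    intro hi2
    have := hrec (i + 1) (by omega) hi2
    simp only [Nat.add_sub_cancel] at this
    have hih := ih (by omega)
    linarith
end

section
/- The n-site futile cycle with bifunctional enzyme C_α has absolute concentration robustness in species S_{α+1}: at every positive steady state, s_{α+1} = k_α · h*_{n−α}, where h*_j = (h_j + h_j^−)/(h_j h_j^+). -/
open Finset

lemma sum_if_shift (N b : ℕ) (P : ℕ → Prop) [DecidablePred P]
    (hb : ∀ j ∈ Finset.Icc 1 N, P j ↔ j = b) (f : ℕ → ℝ) :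
    ∑ j ∈ Finset.Icc 1 N, (if P j then f j else 0)
      = if b ∈ Finset.Icc 1 N then f b else 0 := by
  rw [← Finset.sum_ite_eq' (Finset.Icc 1 N) b f]
  exact Finset.sum_congr rfl fun j hj => by simp only [hb j hj]

/-- The `n`-site futile cycle (`m = n`, `φ j = n + 1 - j`) with
bifunctional enzyme `C α` has absolute concentration robustness in `S (α+1)`:
at every positive steady state, `s (α+1) = k α * h* (n-α)` where
`h* j = (h j + hm j) / (h j * hp j)`. -/
theorem futile_cycle_acr
    (n α : ℕ) (hn : 2 ≤ n) (hα : α ∈ Finset.Icc 1 (n - 1))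
    (kp km k hp hm h : ℕ → ℝ)
    (hkpos : ∀ i ∈ Finset.Icc 1 (n - 1), 0 < kp i ∧ 0 < km i ∧ 0 < k i)
    (hhpos : ∀ j ∈ Finset.Icc 1 (n - 1), 0 < hp j ∧ 0 < hm j ∧ 0 < h j)
    (hk0 : k 0 = 0) (hkpn : kp n = 0) (hkmn : km n = 0) (hh0 : h 0 = 0)
    (s : ℕ → ℝ) (e : ℝ) (c d : ℕ → ℝ)
    (hpos : CMNPositive n n (fun j => n + 1 - j) s e c d)
    (hss : CMNSteadyState n n α (fun j => n + 1 - j) kp km k hp hm h s e c d) :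
    s (α + 1) = k α * ((h (n - α) + hm (n - α)) / (h (n - α) * hp (n - α))) := by
  simp only [Finset.mem_Icc] at hα
  obtain ⟨hα1, hα2⟩ := hα
  obtain ⟨hS, hE, hC, hD⟩ := hss
  obtain ⟨hsPos, hePos, hcPos, hdPos⟩ := hpos
  -- D equations, beta reduced
  have hD' : ∀ j ∈ Finset.Icc 1 (n - 1),
      hp j * s (n + 1 - j) * c α = (hm j + h j) * d j := by
    intro j hj
    have := hD j hj
    simp only at this
    linarith
  -- C equations (the bifunctional sum vanishes)
  have hC' : ∀ i ∈ Finset.Icc 1 (n - 1), kp i * s i * e = (km i + k i) * c i := by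
    intro i hi
    have hz : ∑ j ∈ Finset.Icc 1 (n - 1),
        (-(hp j) * s ((fun j => n + 1 - j) j) * c α + (hm j + h j) * d j) = 0 := by
      apply Finset.sum_eq_zero
      intro j hj
      have := hD' j hj
      simp only
      linarith
    have := hC i hi
    by_cases hiα : i = α
    · rw [if_pos hiα, hz] at this; linarith
    · rw [if_neg hiα] at this; linarith
  -- processed substrate equations for 2 ≤ i ≤ n
  have hsub : ∀ i, 2 ≤ i → i ≤ n →
      Ffwd kp km k s e c i
        + (-(hp (n + 1 - i)) * s i * c α + hm (n + 1 - i) * d (n + 1 - i))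
        + (if n - i ∈ Finset.Icc 1 (n - 1) then h (n - i) * d (n - i) else 0) = 0 := by
    intro i h2i hin
    have him : i ∈ Finset.Icc 1 n := by simp only [Finset.mem_Icc]; omega
    have := hS i (Finset.mem_union_left _ him)
    rw [if_pos him, Finset.sum_add_distrib] at this
    simp only [] at this
    rw [sum_if_shift (n - 1) (n + 1 - i) (fun j => n + 1 - j = i)
        (fun j hj => by simp only [Finset.mem_Icc] at hj; constructor <;> omega)
        (fun j => -(hp j) * s i * c α + hm j * d j)] at this
    rw [sum_if_shift (n - 1) (n - i) (fun j => n + 1 - (j + 1) = i)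
        (fun j hj => by simp only [Finset.mem_Icc] at hj; constructor <;> omega)
        (fun j => h j * d j)] at this
    rw [if_pos (by simp only [Finset.mem_Icc]; omega)] at this
    linarith
  -- key downward induction: k i c i = h (n-i) d (n-i) for α ≤ i ≤ n-1
  have key : ∀ t, ∀ i, α ≤ i → i ≤ n - 1 → n - 1 - i = t →
      k i * c i = h (n - i) * d (n - i) := by
    intro t
    induction t with
    | zero =>
      intro i h1 h2 h3
      have hi : i = n - 1 := by omega
      subst hi
      have := hsub n (by omega) le_rfl
      rw [if_neg (by simp only [Finset.mem_Icc]; omega)] at this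
      unfold Ffwd at this
      rw [hkpn, hkmn] at this
      have e1 : n + 1 - n = 1 := by omega
      have e2 : n - (n - 1) = 1 := by omega
      rw [e1] at this
      rw [e2]
      have hd1 := hD' 1 (by simp only [Finset.mem_Icc]; omega)
      have e3 : n + 1 - 1 = n := by omega
      rw [e3] at hd1
      linarith
    | succ t ih =>
      intro i h1 h2 h3
      have hnext := ih (i + 1) (by omega) (by omega) (by omega)
      have hstep := hsub (i + 1) (by omega) (by omega)
      rw [if_pos (by simp only [Finset.mem_Icc]; omega)] at hstep
      unfold Ffwd at hstep
      have e1 : i + 1 - 1 = i := by omega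
      have e2 : n + 1 - (i + 1) = n - i := by omega
      rw [e1, e2] at hstep
      have hc := hC' (i + 1) (by simp only [Finset.mem_Icc]; omega)
      have hd := hD' (n - i) (by simp only [Finset.mem_Icc]; omega)
      have e3 : n + 1 - (n - i) = i + 1 := by omega
      rw [e3] at hd
      have e4 : n - (i + 1) = n - i - 1 := by omega
      rw [e4] at hnext hstep
      -- hstep : -(kp (i+1)) s(i+1) e + km (i+1) c(i+1) + k i c i - hp(n-i) s(i+1) cα + hm(n-i) d(n-i) + h(n-i-1) d(n-i-1) = 0
      -- hc : kp(i+1) s(i+1) e = (km(i+1)+k(i+1)) c(i+1)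
      -- hd : hp(n-i) s(i+1) cα = (hm(n-i)+h(n-i)) d(n-i)
      -- hnext : k(i+1) c(i+1) = h(n-i-1) d(n-i-1)
      linarith
  have hkey := key (n - 1 - α) α le_rfl hα2 rfl
  have hd := hD' (n - α) (by simp only [Finset.mem_Icc]; omega)
  have e3 : n + 1 - (n - α) = α + 1 := by omega
  rw [e3] at hd
  have hcα : 0 < c α := hcPos α (by simp only [Finset.mem_Icc]; omega)
  obtain ⟨hhp, hhm, hh⟩ := hhpos (n - α) (by simp only [Finset.mem_Icc]; omega)
  have hcancel : (s (α + 1) * (h (n - α) * hp (n - α))) * c α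
      = (k α * (h (n - α) + hm (n - α))) * c α := by
    nlinarith [hd, hkey]
  have := mul_right_cancel₀ (ne_of_gt hcα) hcancel
  field_simp
  linarith
end

section
/- Let Gδ be the covalent modification network (n,m,φ) with bifunctional enzyme C_α where 1 = φ_m < φ_{m−1} < … < φ_1 = n (deletion case), and let p be the index with α ∈ [φ_{p+1}, φ_p − 1]. Then at every positive steady state, s_{φ_p} = k_α · h*_p, i.e., the network has ACR in species S_{φ_p} with ACR value k_α h*_p. -/
open Finset

lemma telescope_aux (g : ℕ → ℝ) : ∀ b a : ℕ, a ≤ b →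
    ∑ i ∈ Finset.Icc (a+1) b, (g (i-1) - g i) = g a - g b := by
  intro b
  induction b with
  | zero => intro a ha; interval_cases a; simp
  | succ b ih =>
    intro a ha
    rcases Nat.lt_or_ge a (b+1) with h1 | h1
    · have ha' : a ≤ b := Nat.lt_succ_iff.mp h1
      rw [Finset.sum_Icc_succ_top (by omega : a + 1 ≤ b + 1), ih a ha']
      simp
    · have : a = b + 1 := le_antisymm ha h1
      subst this
      rw [Finset.Icc_eq_empty (by omega)]
      simp

/-- **deletion case.** Let `G` be the covalent modification network
`(n, m, φ)` with bifunctional enzyme `C α`, where `1 = φ m < φ (m-1) < … < φ 1 = n`,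
and let `p ∈ [1, m-1]` be the index with `α ∈ [φ (p+1), φ p - 1]`. Then at every
positive steady state `s (φ p) = k α * h* p`, i.e. the network has ACR in
`S (φ p)` with ACR value `k α * h* p` where `h* j = (h j + hm j) / (h j * hp j)`. -/
theorem cmn_deletion_acr
    (n m α : ℕ) (hn : 2 ≤ n) (hm : 2 ≤ m) (hα : α ∈ Finset.Icc 1 (n - 1))
    (φ : ℕ → ℕ)
    (hφdec : ∀ j ∈ Finset.Icc 1 (m - 1), φ (j + 1) < φ j)
    (hφ1 : φ 1 = n) (hφm : φ m = 1)
    (p : ℕ) (hp : p ∈ Finset.Icc 1 (m - 1))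
    (hαp : φ (p + 1) ≤ α ∧ α ≤ φ p - 1)
    (kp km k hp' hm' h : ℕ → ℝ)
    (hkpos : ∀ i ∈ Finset.Icc 1 (n - 1), 0 < kp i ∧ 0 < km i ∧ 0 < k i)
    (hhpos : ∀ j ∈ Finset.Icc 1 (m - 1), 0 < hp' j ∧ 0 < hm' j ∧ 0 < h j)
    (hk0 : k 0 = 0) (hkpn : kp n = 0) (hkmn : km n = 0) (hh0 : h 0 = 0)
    (s : ℕ → ℝ) (e : ℝ) (c d : ℕ → ℝ)
    (hpos : CMNPositive n m φ s e c d)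
    (hss : CMNSteadyState n m α φ kp km k hp' hm' h s e c d) :
    s (φ p) = k α * ((h p + hm' p) / (h p * hp' p)) := by
  obtain ⟨hS, hE, hC, hD⟩ := hss
  obtain ⟨hspos, hepos, hcpos, hdpos⟩ := hpos
  simp only [Finset.mem_Icc] at hα hp
  -- antitonicity of φ on [1, m]
  have anti : ∀ b a : ℕ, 1 ≤ a → a ≤ b → b ≤ m → φ b ≤ φ a := by
    intro b
    induction b with
    | zero => intro a h1 h2 _; omega
    | succ b ih =>
      intro a h1 h2 h3
      rcases Nat.lt_or_ge a (b+1) with h4 | h4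
      · have hb : φ (b+1) < φ b := hφdec b (by simp only [Finset.mem_Icc]; omega)
        exact le_trans (le_of_lt hb) (ih a h1 (by omega) (by omega))
      · have : a = b + 1 := by omega
        subst this; exact le_rfl
  have hφp : α + 1 ≤ φ p := by
    have h2 := hαp.2
    have h1 := hα.1
    omega
  have hφp1 : φ (p+1) ≤ α := hαp.1
  -- membership characterizations
  have hmemj : ∀ j, 1 ≤ j → j ≤ m → (φ j ∈ Finset.Icc (α+1) n ↔ j ≤ p) := by
    intro j hj1 hjm
    simp only [Finset.mem_Icc]
    constructor
    · intro ⟨hl, _⟩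
      by_contra hcon
      have : φ j ≤ φ (p+1) := anti j (p+1) (by omega) (by omega) hjm
      omega
    · intro hjp
      constructor
      · have : φ p ≤ φ j := anti p j hj1 hjp (by omega)
        omega
      · have : φ j ≤ φ 1 := anti j 1 le_rfl hj1 hjm
        omega
  -- D equations rephrased
  have hD' : ∀ j ∈ Finset.Icc 1 (m-1),
      -(hp' j) * s (φ j) * c α + hm' j * d j = -(h j * d j) := by
    intro j hj
    have := hD j hj
    linarith
  -- C equations rephrased (the bifunctional term vanishes at steady state)
  have hzero : (∑ j ∈ Finset.Icc 1 (m-1),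
      (-(hp' j) * s (φ j) * c α + (hm' j + h j) * d j)) = 0 :=
    Finset.sum_eq_zero (fun j hj => by have := hD j hj; linarith)
  have hC' : ∀ i ∈ Finset.Icc 1 (n-1), kp i * s i * e = (km i + k i) * c i := by
    intro i hi
    have hci := hC i hi
    split_ifs at hci with hiα
    · rw [hzero] at hci; linarith
    · linarith
  -- sum the substrate equations over [α+1, n]
  have hsum0 : ∑ i ∈ Finset.Icc (α+1) n,
      ((if i ∈ Finset.Icc 1 n then Ffwd kp km k s e c i else 0)
        + ∑ j ∈ Finset.Icc 1 (m - 1),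
            ((if φ j = i then -(hp' j) * s i * c α + hm' j * d j else 0)
              + (if φ (j + 1) = i then h j * d j else 0))) = 0 := by
    apply Finset.sum_eq_zero
    intro i hi
    apply hS i
    apply Finset.mem_union_left
    simp only [Finset.mem_Icc] at hi ⊢
    omega
  rw [Finset.sum_add_distrib] at hsum0
  -- forward part telescopes
  have hA : ∑ i ∈ Finset.Icc (α+1) n,
      (if i ∈ Finset.Icc 1 n then Ffwd kp km k s e c i else 0) = k α * c α := by
    rw [Finset.sum_congr rfl (fun i hi => if_pos (by
      simp only [Finset.mem_Icc] at hi ⊢; omega))]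
    have hn1 : n = n - 1 + 1 := by omega
    rw [hn1, Finset.sum_Icc_succ_top (by omega : α + 1 ≤ n - 1 + 1)]
    have heach : ∀ i ∈ Finset.Icc (α+1) (n-1),
        Ffwd kp km k s e c i = (fun i => k i * c i) (i-1) - (fun i => k i * c i) i := by
      intro i hi
      simp only [Finset.mem_Icc] at hi
      have := hC' i (by simp only [Finset.mem_Icc]; omega)
      unfold Ffwd
      simp only
      linarith
    rw [Finset.sum_congr rfl heach, telescope_aux (fun i => k i * c i) (n-1) α hα.2]
    unfold Ffwd
    rw [← hn1, hkpn, hkmn]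
    ring
  -- backward part collapses to -(h p * d p)
  have hB : ∑ i ∈ Finset.Icc (α+1) n, ∑ j ∈ Finset.Icc 1 (m - 1),
      ((if φ j = i then -(hp' j) * s i * c α + hm' j * d j else 0)
        + (if φ (j + 1) = i then h j * d j else 0)) = -(h p * d p) := by
    rw [Finset.sum_comm]
    have hje : ∀ j ∈ Finset.Icc 1 (m-1), (∑ i ∈ Finset.Icc (α+1) n,
        ((if φ j = i then -(hp' j) * s i * c α + hm' j * d j else 0)
          + (if φ (j + 1) = i then h j * d j else 0)))
        = if j = p then -(h p * d p) else 0 := by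
      intro j hj
      simp only [Finset.mem_Icc] at hj
      rw [Finset.sum_add_distrib, Finset.sum_ite_eq, Finset.sum_ite_eq]
      have hm1 : (φ j ∈ Finset.Icc (α+1) n) ↔ j ≤ p := hmemj j hj.1 (by omega)
      have hm2 : (φ (j+1) ∈ Finset.Icc (α+1) n) ↔ j + 1 ≤ p := hmemj (j+1) (by omega) (by omega)
      by_cases hjp : j ≤ p
      · by_cases hjp2 : j = p
        · subst hjp2
          rw [if_pos (hm1.mpr le_rfl),
            if_neg (fun hc => by have := hm2.mp hc; omega : ¬ φ (j+1) ∈ Finset.Icc (α+1) n),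
            if_pos rfl, hD' j (by simp only [Finset.mem_Icc]; omega)]
          ring
        · rw [if_pos (hm1.mpr hjp), if_pos (hm2.mpr (by omega)),
            if_neg hjp2, hD' j (by simp only [Finset.mem_Icc]; omega)]
          ring
      · rw [if_neg (fun hc => hjp (hm1.mp hc)),
          if_neg (fun hc => by have := hm2.mp hc; omega : ¬ φ (j+1) ∈ Finset.Icc (α+1) n),
          if_neg (fun hc => by omega : ¬ j = p)]
        ring
    rw [Finset.sum_congr rfl hje, Finset.sum_ite_eq' (Finset.Icc 1 (m-1)) p (fun _ => -(h p * d p)),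
      if_pos (by simp only [Finset.mem_Icc]; omega)]
  -- conclude k α * c α = h p * d p
  have hkc : k α * c α = h p * d p := by
    rw [hA, hB] at hsum0
    linarith
  -- finish with the D_p equation
  have hpmem : p ∈ Finset.Icc 1 (m-1) := by simp only [Finset.mem_Icc]; omega
  have hDp := hD p hpmem
  have hcα : 0 < c α := hcpos α (by simp only [Finset.mem_Icc]; omega)
  obtain ⟨hhp, hhm, hh⟩ := hhpos p hpmem
  have key : s (φ p) * (h p * hp' p) * c α = k α * (h p + hm' p) * c α := by
    linear_combination h p * hDp - (h p + hm' p) * hkc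
  have key2 : s (φ p) * (h p * hp' p) = k α * (h p + hm' p) :=
    mul_right_cancel₀ (ne_of_gt hcα) key
  have hY : h p * hp' p ≠ 0 := ne_of_gt (mul_pos hh hhp)
  field_simp
  linarith [key2]
end

section
/- Let G be the covalent modification network (n,m,φ) with bifunctional enzyme C_α where m = φ^{−1}(1) > φ^{−1}(2) > … > φ^{−1}(n) = 1 (insertion case). Then for every j ∈ [φ^{−1}(α+1), φ^{−1}(α) − 1], at every positive steady state s_{φ_j} = k_α · h*_j; i.e., the network has ACR in each species S_{φ_j} with ACR value k_α h*_j. -/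
open Finset

private lemma sum_ite_unique (t : Finset ℕ) (g : ℕ → ℕ) (i : ℕ) (A : ℕ → ℝ) (j0 : ℕ)
    (h0 : j0 ∈ t) (he : g j0 = i) (hu : ∀ j ∈ t, g j = i → j = j0) :
    (∑ j ∈ t, if g j = i then A j else 0) = A j0 := by
  rw [Finset.sum_eq_single_of_mem j0 h0
    (fun b hb hne => if_neg fun hb' => hne (hu b hb hb')), if_pos he]

private lemma sum_ite_zero (t : Finset ℕ) (g : ℕ → ℕ) (i : ℕ) (A : ℕ → ℝ)
    (hu : ∀ j ∈ t, g j ≠ i) :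
    (∑ j ∈ t, if g j = i then A j else 0) = 0 :=
  Finset.sum_eq_zero fun j hj => if_neg (hu j hj)

/-- **insertion case.** Let `G` be the covalent modification network
`(n, m, φ)` with bifunctional enzyme `C α`, with `[1,n] ⊆ φ([1,m])` and
`m = φ⁻¹ 1 > φ⁻¹ 2 > … > φ⁻¹ n = 1` (the preimage function is `ψ`). Then for
every `j ∈ [ψ (α+1), ψ α - 1]`, at every positive steady state
`s (φ j) = k α * h* j`; i.e. the network has ACR in each species `S (φ j)` with
ACR value `k α * h* j`, where `h* j = (h j + hm j) / (h j * hp j)`. -/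
theorem cmn_insertion_acr
    (n m α : ℕ) (hn : 2 ≤ n) (hm : 2 ≤ m) (hα : α ∈ Finset.Icc 1 (n - 1))
    (φ ψ : ℕ → ℕ) (hφinj : Set.InjOn φ (Set.Icc 1 m))
    (hψ : ∀ i ∈ Finset.Icc 1 n, ψ i ∈ Finset.Icc 1 m ∧ φ (ψ i) = i)
    (hψ1 : ψ 1 = m) (hψn : ψ n = 1)
    (hψdec : ∀ i ∈ Finset.Icc 1 (n - 1), ψ (i + 1) < ψ i)
    (kp km k hp' hm' h : ℕ → ℝ)
    (hkpos : ∀ i ∈ Finset.Icc 1 (n - 1), 0 < kp i ∧ 0 < km i ∧ 0 < k i)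
    (hhpos : ∀ j ∈ Finset.Icc 1 (m - 1), 0 < hp' j ∧ 0 < hm' j ∧ 0 < h j)
    (hk0 : k 0 = 0) (hkpn : kp n = 0) (hkmn : km n = 0) (hh0 : h 0 = 0)
    (s : ℕ → ℝ) (e : ℝ) (c d : ℕ → ℝ)
    (hpos : CMNPositive n m φ s e c d)
    (hss : CMNSteadyState n m α φ kp km k hp' hm' h s e c d) :
    ∀ j, ψ (α + 1) ≤ j → j ≤ ψ α - 1 →
      s (φ j) = k α * ((h j + hm' j) / (h j * hp' j)) := by
  obtain ⟨hS, hE, hC, hD⟩ := hss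
  obtain ⟨hspos, hepos, hcpos, hdpos⟩ := hpos
  obtain ⟨hα1, hα2⟩ := Finset.mem_Icc.mp hα
  -- basic facts about ψ
  have hψb : ∀ i, 1 ≤ i → i ≤ n → (1 ≤ ψ i ∧ ψ i ≤ m) ∧ φ (ψ i) = i := by
    intro i h1 h2
    have := hψ i (Finset.mem_Icc.mpr ⟨h1, h2⟩)
    exact ⟨Finset.mem_Icc.mp this.1, this.2⟩
  have hφm : φ m = 1 := by rw [← hψ1]; exact (hψb 1 le_rfl (by omega)).2
  have hφ1 : φ 1 = n := by rw [← hψn]; exact (hψb n (by omega) le_rfl).2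
  have hψmono : ∀ i' i, 1 ≤ i → i < i' → i' ≤ n → ψ i' < ψ i := by
    intro i'
    induction i' with
    | zero => intro i h1 hlt hle; omega
    | succ t ih =>
      intro i h1 hlt hle
      have ht : t ∈ Finset.Icc 1 (n - 1) := Finset.mem_Icc.mpr ⟨by omega, by omega⟩
      have hd := hψdec t ht
      rcases Nat.lt_or_ge i t with hc | hc
      · exact lt_trans hd (ih i h1 hc (by omega))
      · have : i = t := by omega
        subst this; exact hd
  have hψle : ∀ i i', 1 ≤ i → i ≤ i' → i' ≤ n → ψ i' ≤ ψ i := by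
    intro i i' h1 h2 h3
    rcases Nat.eq_or_lt_of_le h2 with he | hlt
    · rw [he]
    · exact le_of_lt (hψmono i' i h1 hlt h3)
  -- unique preimage
  have hpre : ∀ j, 1 ≤ j → j ≤ m → ∀ i, 1 ≤ i → i ≤ n → φ j = i → j = ψ i := by
    intro j hj1 hj2 i hi1 hi2 hφj
    have hb := hψb i hi1 hi2
    exact hφinj (Set.mem_Icc.mpr ⟨hj1, hj2⟩) (Set.mem_Icc.mpr ⟨hb.1.1, hb.1.2⟩)
      (by rw [hφj, hb.2])
  -- D equations rearranged
  have hD' : ∀ j, 1 ≤ j → j ≤ m - 1 → hp' j * s (φ j) * c α = (hm' j + h j) * d j := by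
    intro j h1 h2
    have := hD j (Finset.mem_Icc.mpr ⟨h1, h2⟩); linarith
  -- C equations simplified
  have hCsimp : ∀ i, 1 ≤ i → i ≤ n - 1 → kp i * s i * e = (km i + k i) * c i := by
    intro i h1 h2
    have hc := hC i (Finset.mem_Icc.mpr ⟨h1, h2⟩)
    by_cases hiα : i = α
    · rw [if_pos hiα] at hc
      have hz : ∑ j ∈ Finset.Icc 1 (m - 1),
          (-(hp' j) * s (φ j) * c α + (hm' j + h j) * d j) = 0 :=
        Finset.sum_eq_zero fun j hj => by
          have := hD' j (Finset.mem_Icc.mp hj).1 (Finset.mem_Icc.mp hj).2; linarith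
      rw [hz] at hc; linarith
    · rw [if_neg hiα] at hc; linarith
  -- substrate equation for i ∈ [2, n-1]
  have lemA : ∀ i, 2 ≤ i → i ≤ n - 1 →
      h (ψ i) * d (ψ i) = k (i - 1) * c (i - 1) - k i * c i
        + h (ψ i - 1) * d (ψ i - 1) := by
    intro i h2 hn1
    have hb := hψb i (by omega) (by omega)
    have hψlo : 2 ≤ ψ i := by
      have := hψmono n i (by omega) (by omega) le_rfl
      omega
    have hψhi : ψ i ≤ m - 1 := by
      have := hψmono i 1 le_rfl (by omega) (by omega)
      omega
    have heq := hS i (Finset.mem_union.mpr (Or.inl (Finset.mem_Icc.mpr ⟨by omega, by omega⟩)))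
    rw [if_pos (Finset.mem_Icc.mpr ⟨by omega, by omega⟩), Finset.sum_add_distrib] at heq
    rw [sum_ite_unique _ φ i _ (ψ i) (Finset.mem_Icc.mpr ⟨by omega, hψhi⟩) hb.2
        (fun j hj hφj => by
          have hj' := Finset.mem_Icc.mp hj
          exact hpre j hj'.1 (by omega) i (by omega) (by omega) hφj)] at heq
    rw [sum_ite_unique _ (fun j => φ (j + 1)) i _ (ψ i - 1)
        (Finset.mem_Icc.mpr ⟨by omega, by omega⟩)
        (by have hh : ψ i - 1 + 1 = ψ i := by omega
            simpa [hh] using hb.2)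
        (fun j hj hφj => by
          have hj' := Finset.mem_Icc.mp hj
          have := hpre (j + 1) (by omega) (by omega) i (by omega) (by omega) hφj
          omega)] at heq
    simp only [Ffwd] at heq
    have hcs := hCsimp i (by omega) (by omega)
    have hdj := hD' (ψ i) (by omega) hψhi
    rw [hb.2] at hdj
    linarith
  -- substrate equation for i = n
  have lemB : h 1 * d 1 = k (n - 1) * c (n - 1) := by
    have heq := hS n (Finset.mem_union.mpr (Or.inl (Finset.mem_Icc.mpr ⟨by omega, le_rfl⟩)))
    rw [if_pos (Finset.mem_Icc.mpr ⟨by omega, le_rfl⟩), Finset.sum_add_distrib] at heq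
    rw [sum_ite_unique _ φ n _ 1 (Finset.mem_Icc.mpr ⟨le_rfl, by omega⟩) hφ1
        (fun j hj hφj => by
          have hj' := Finset.mem_Icc.mp hj
          have := hpre j hj'.1 (by omega) n (by omega) le_rfl hφj
          omega)] at heq
    rw [sum_ite_zero _ (fun j => φ (j + 1)) n _
        (fun j hj hφj => by
          have hj' := Finset.mem_Icc.mp hj
          have := hpre (j + 1) (by omega) (by omega) n (by omega) le_rfl hφj
          omega)] at heq
    simp only [Ffwd, hkpn, hkmn] at heq
    have hdj := hD' 1 le_rfl (by omega)
    rw [hφ1] at hdj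
    linarith
  -- off-grid substrate equations: h_{j-1} d_{j-1} = h_j d_j
  have lemC : ∀ j, 1 ≤ j → j ≤ m → φ j ∉ Finset.Icc 1 n →
      h (j - 1) * d (j - 1) = h j * d j := by
    intro j h1 h2 hout
    have hj1 : j ≠ 1 := by
      intro hj; apply hout; rw [hj, hφ1]; exact Finset.mem_Icc.mpr ⟨by omega, le_rfl⟩
    have hjm : j ≠ m := by
      intro hj; apply hout; rw [hj, hφm]; exact Finset.mem_Icc.mpr ⟨le_rfl, by omega⟩
    have heq := hS (φ j) (Finset.mem_union.mpr (Or.inr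
      (Finset.mem_image.mpr ⟨j, Finset.mem_Icc.mpr ⟨h1, h2⟩, rfl⟩)))
    rw [if_neg hout, Finset.sum_add_distrib] at heq
    rw [sum_ite_unique _ φ (φ j) _ j (Finset.mem_Icc.mpr ⟨h1, by omega⟩) rfl
        (fun j' hj' hφj' => by
          have hj'' := Finset.mem_Icc.mp hj'
          exact hφinj (Set.mem_Icc.mpr ⟨hj''.1, by omega⟩)
            (Set.mem_Icc.mpr ⟨h1, h2⟩) hφj')] at heq
    rw [sum_ite_unique _ (fun j' => φ (j' + 1)) (φ j) _ (j - 1)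
        (Finset.mem_Icc.mpr ⟨by omega, by omega⟩)
        (by show φ (j - 1 + 1) = φ j
            have hh : j - 1 + 1 = j := by omega
            rw [hh])
        (fun j' hj' hφj' => by
          have hj'' := Finset.mem_Icc.mp hj'
          have : j' + 1 = j := hφinj (Set.mem_Icc.mpr ⟨by omega, by omega⟩)
            (Set.mem_Icc.mpr ⟨h1, h2⟩) hφj'
          omega)] at heq
    have hdj := hD' j h1 (by omega)
    linarith
  -- constancy of h_j d_j on off-grid stretches
  have lemD : ∀ b a, a ≤ b → b ≤ m →
      (∀ j, a < j → j ≤ b → φ j ∉ Finset.Icc 1 n) → h a * d a = h b * d b := by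
    intro b
    induction b with
    | zero =>
      intro a ha _ _
      have h0 : a = 0 := by omega
      subst h0
      rfl
    | succ t ih =>
      intro a ha hbm hout
      rcases Nat.eq_or_lt_of_le ha with he | hlt
      · rw [he]
      · have h1 : h a * d a = h t * d t :=
          ih a (by omega) (by omega) (fun j hj1 hj2 => hout j hj1 (by omega))
        have h2 := lemC (t + 1) (by omega) hbm (hout (t + 1) (by omega) le_rfl)
        simp only [Nat.add_sub_cancel] at h2
        rw [h1, h2]
  -- no ψ-value strictly between consecutive ψ-values
  have hgap : ∀ i₀, 1 ≤ i₀ → i₀ ≤ n - 1 → ∀ j, ψ (i₀ + 1) < j → j < ψ i₀ →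
      φ j ∉ Finset.Icc 1 n := by
    intro i₀ h1 h2 j hj1 hj2 hmem
    obtain ⟨hi1, hi2⟩ := Finset.mem_Icc.mp hmem
    have hb0 := hψb i₀ (by omega) (by omega)
    have hb1 := hψb (i₀ + 1) (by omega) (by omega)
    have hjm : j ≤ m := by omega
    have hji : j = ψ (φ j) := hpre j (by omega) hjm (φ j) hi1 hi2 rfl
    rcases le_or_gt (φ j) i₀ with hc | hc
    · have := hψle (φ j) i₀ hi1 hc (by omega)
      omega
    · have := hψle (i₀ + 1) (φ j) (by omega) hc hi2
      omega
  -- downward telescoping: h (ψ (i+1)) d (ψ (i+1)) = k i c i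
  have hQ : ∀ t i, 1 ≤ i → i ≤ n - 1 → n - 1 - i = t →
      h (ψ (i + 1)) * d (ψ (i + 1)) = k i * c i := by
    intro t
    induction t with
    | zero =>
      intro i h1 h2 ht
      have hieq : i = n - 1 := by omega
      subst hieq
      have hn' : n - 1 + 1 = n := by omega
      rw [hn', hψn]
      exact lemB
    | succ t ih =>
      intro i h1 h2 ht
      have hilt : i + 1 ≤ n - 1 := by omega
      have hA := lemA (i + 1) (by omega) hilt
      simp only [Nat.add_sub_cancel] at hA
      have hih := ih (i + 1) (by omega) hilt (by omega)
      have hb1 := hψb (i + 1) (by omega) (by omega)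
      have hb2 := hψb (i + 1 + 1) (by omega) (by omega)
      have hdec := hψdec (i + 1) (Finset.mem_Icc.mpr ⟨by omega, hilt⟩)
      have hconst : h (ψ (i + 1 + 1)) * d (ψ (i + 1 + 1))
          = h (ψ (i + 1) - 1) * d (ψ (i + 1) - 1) :=
        lemD (ψ (i + 1) - 1) (ψ (i + 1 + 1)) (by omega) (by omega)
          (fun j hj1 hj2 => hgap (i + 1) (by omega) hilt j hj1 (by omega))
      linarith
  have hQα : h (ψ (α + 1)) * d (ψ (α + 1)) = k α * c α :=
    hQ (n - 1 - α) α hα1 hα2 rfl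
  -- conclusion
  intro j hj1 hj2
  have hbα := hψb α hα1 (by omega)
  have hbα1 := hψb (α + 1) (by omega) (by omega)
  have hdec := hψdec α hα
  have hjm1 : j ≤ m - 1 := by omega
  have hjd : h j * d j = k α * c α := by
    have hcon : h (ψ (α + 1)) * d (ψ (α + 1)) = h j * d j :=
      lemD j (ψ (α + 1)) hj1 (by omega)
        (fun j' hj'1 hj'2 => hgap α hα1 hα2 j' hj'1 (by omega))
    rw [← hcon]; exact hQα
  have hDj := hD' j (by omega) hjm1
  obtain ⟨hhp, hhm, hh⟩ := hhpos j (Finset.mem_Icc.mpr ⟨by omega, hjm1⟩)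
  have hcα : 0 < c α := hcpos α hα
  have key : s (φ j) * (h j * hp' j) * c α = k α * (h j + hm' j) * c α := by
    calc s (φ j) * (h j * hp' j) * c α
        = h j * (hp' j * s (φ j) * c α) := by ring
      _ = h j * ((hm' j + h j) * d j) := by rw [hDj]
      _ = (hm' j + h j) * (h j * d j) := by ring
      _ = (hm' j + h j) * (k α * c α) := by rw [hjd]
      _ = k α * (h j + hm' j) * c α := by ring
  have h3 : s (φ j) * (h j * hp' j) = k α * (h j + hm' j) :=
    mul_right_cancel₀ (ne_of_gt hcα) key
  have hne : h j * hp' j ≠ 0 := by positivity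
  rw [← mul_div_assoc]
  exact (eq_div_iff hne).mpr h3
end

section
/- Let G be the covalent modification network (n,m,φ) with bifunctional enzyme C_α, and suppose {φ_m, φ_{m−1}, …, φ_{m−α+1}} = {1, 2, …, α} as sets. Then at every positive steady state, s_{φ_{m−α}} = k_α · h*_{m−α}; i.e., the network has ACR in species S_{φ_{m−α}} with ACR value k_α h*_{m−α}. -/
open Finset

private lemma tele_aux (f : ℕ → ℝ) (hf0 : f 0 = 0) (a : ℕ) :
    ∑ i ∈ Finset.Icc 1 a, (f (i - 1) - f i) = -f a := by
  induction a with
  | zero => simp [hf0]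
  | succ a ih =>
      rw [Finset.sum_Icc_succ_top (by omega)]
      simp only [Nat.add_sub_cancel]
      rw [ih]; ring

/-- **permutation case.** Let `G` be the covalent modification
network `(n, m, φ)` with bifunctional enzyme `C α`, and suppose
`{φ m, φ (m-1), …, φ (m-α+1)} = {1, 2, …, α}` as sets. Then at every positive
steady state `s (φ (m-α)) = k α * h* (m-α)`; i.e. the network has ACR in
`S (φ (m-α))` with ACR value `k α * h* (m-α)`. -/
theorem cmn_permutation_acr
    (n m α : ℕ) (hn : 2 ≤ n) (hm : 2 ≤ m) (hα : α ∈ Finset.Icc 1 (n - 1))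
    (hαm : α ≤ m - 1)
    (φ : ℕ → ℕ) (hφinj : Set.InjOn φ (Set.Icc 1 m))
    (hperm : (Finset.Icc (m - α + 1) m).image φ = Finset.Icc 1 α)
    (kp km k hp' hm' h : ℕ → ℝ)
    (hkpos : ∀ i ∈ Finset.Icc 1 (n - 1), 0 < kp i ∧ 0 < km i ∧ 0 < k i)
    (hhpos : ∀ j ∈ Finset.Icc 1 (m - 1), 0 < hp' j ∧ 0 < hm' j ∧ 0 < h j)
    (hk0 : k 0 = 0) (hkpn : kp n = 0) (hkmn : km n = 0) (hh0 : h 0 = 0)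
    (s : ℕ → ℝ) (e : ℝ) (c d : ℕ → ℝ)
    (hpos : CMNPositive n m φ s e c d)
    (hss : CMNSteadyState n m α φ kp km k hp' hm' h s e c d) :
    s (φ (m - α)) = k α * ((h (m - α) + hm' (m - α)) / (h (m - α) * hp' (m - α))) := by
  obtain ⟨hsub, henz, hc, hd⟩ := hss
  obtain ⟨hspos, hepos, hcpos, hdpos⟩ := hpos
  rw [Finset.mem_Icc] at hα
  have hm1 : m - α ∈ Finset.Icc 1 (m - 1) := by rw [Finset.mem_Icc]; omega
  have hcα : 0 < c α := hcpos α (by rw [Finset.mem_Icc]; omega)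
  obtain ⟨hhp, hhm, hh⟩ := hhpos (m - α) hm1
  -- D equations
  have hD : ∀ j ∈ Finset.Icc 1 (m - 1),
      hp' j * s (φ j) * c α = (hm' j + h j) * d j := by
    intro j hj; have := hd j hj; linarith
  -- C equations
  have hC : ∀ i ∈ Finset.Icc 1 (n - 1), kp i * s i * e = (km i + k i) * c i := by
    intro i hi
    have h1 := hc i hi
    by_cases hiα : i = α
    · subst hiα
      rw [if_pos rfl, Finset.sum_eq_zero] at h1
      · linarith
      · intro j hj; have := hd j hj; linarith
    · rw [if_neg hiα] at h1; linarith
  -- characterization of when φ j ∈ [1, α]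
  have himg : ∀ j, 1 ≤ j → j ≤ m → (φ j ∈ Finset.Icc 1 α ↔ m - α + 1 ≤ j) := by
    intro j hj1 hj2
    constructor
    · intro hφ
      rw [← hperm, Finset.mem_image] at hφ
      obtain ⟨j', hj', hjj'⟩ := hφ
      rw [Finset.mem_Icc] at hj'
      have : j' = j := hφinj (Set.mem_Icc.mpr ⟨by omega, hj'.2⟩)
        (Set.mem_Icc.mpr ⟨hj1, hj2⟩) hjj'
      omega
    · intro hle
      rw [← hperm]
      exact Finset.mem_image_of_mem φ (Finset.mem_Icc.mpr ⟨hle, hj2⟩)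
  -- main identity: h (m-α) * d (m-α) = k α * c α
  have key : h (m - α) * d (m - α) = k α * c α := by
    have hS : ∑ i ∈ Finset.Icc 1 α,
        (Ffwd kp km k s e c i + ∑ j ∈ Finset.Icc 1 (m - 1),
          ((if φ j = i then -(hp' j) * s i * c α + hm' j * d j else 0)
            + (if φ (j + 1) = i then h j * d j else 0))) = 0 := by
      apply Finset.sum_eq_zero
      intro i hi
      rw [Finset.mem_Icc] at hi
      have hin : i ∈ Finset.Icc 1 n := Finset.mem_Icc.mpr ⟨hi.1, by omega⟩
      have := hsub i (Finset.mem_union_left _ hin)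
      rwa [if_pos hin] at this
    rw [Finset.sum_add_distrib] at hS
    have hF : ∑ i ∈ Finset.Icc 1 α, Ffwd kp km k s e c i = -(k α * c α) := by
      have hcongr : ∀ i ∈ Finset.Icc 1 α, Ffwd kp km k s e c i
          = (fun i => k i * c i) (i - 1) - (fun i => k i * c i) i := by
        intro i hi
        rw [Finset.mem_Icc] at hi
        have := hC i (Finset.mem_Icc.mpr ⟨hi.1, by omega⟩)
        simp only [Ffwd]
        nlinarith [this]
      rw [Finset.sum_congr rfl hcongr]
      exact tele_aux (fun i => k i * c i) (by simp [hk0]) α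
    have hB : ∑ i ∈ Finset.Icc 1 α, ∑ j ∈ Finset.Icc 1 (m - 1),
        ((if φ j = i then -(hp' j) * s i * c α + hm' j * d j else 0)
          + (if φ (j + 1) = i then h j * d j else 0))
        = h (m - α) * d (m - α) := by
      rw [Finset.sum_comm]
      have step : ∀ j ∈ Finset.Icc 1 (m - 1),
          ∑ i ∈ Finset.Icc 1 α,
            ((if φ j = i then -(hp' j) * s i * c α + hm' j * d j else 0)
              + (if φ (j + 1) = i then h j * d j else 0))
          = (if j = m - α then h j * d j else 0) := by
        intro j hj
        rw [Finset.mem_Icc] at hj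
        rw [Finset.sum_add_distrib, Finset.sum_ite_eq, Finset.sum_ite_eq]
        have e1 : (φ j ∈ Finset.Icc 1 α) ↔ m - α + 1 ≤ j :=
          himg j hj.1 (by omega)
        have e2 : (φ (j + 1) ∈ Finset.Icc 1 α) ↔ m - α ≤ j := by
          rw [himg (j + 1) (by omega) (by omega)]; omega
        have hDj : -(hp' j) * s (φ j) * c α + hm' j * d j = -(h j * d j) := by
          have := hD j (Finset.mem_Icc.mpr hj); linarith
        by_cases h1 : j = m - α
        · rw [if_pos h1, if_neg (by rw [e1]; omega), if_pos (e2.mpr (by omega))]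
          ring
        · rw [if_neg h1]
          by_cases h2 : m - α + 1 ≤ j
          · rw [if_pos (e1.mpr h2), if_pos (e2.mpr (by omega)), hDj]; ring
          · rw [if_neg (by rw [e1]; omega), if_neg (by rw [e2]; omega)]; ring
      rw [Finset.sum_congr rfl step, Finset.sum_ite_eq', if_pos hm1]
    rw [hF, hB] at hS
    linarith
  -- conclude
  have hDm := hD (m - α) hm1
  have hcne : c α ≠ 0 := ne_of_gt hcα
  field_simp
  apply mul_right_cancel₀ hcne
  linear_combination h (m - α) * hDm + (hm' (m - α) + h (m - α)) * key
end

section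
/- Let G be the covalent modification network (n,m,φ) with bifunctional enzyme C_α, assume {1,n} ⊆ φ([1,m]), and define β = min{j : φ_j ∈ [1,α] ∩ φ([1,m])}, γ = max{j : φ_j ∈ [α+1,n] ∩ φ([1,m])}. If γ < β, then at every positive steady state, k_α c_α = h_j d_j for all j ∈ [γ, β−1], and consequently s_{φ_j} = k_α h*_j for every j ∈ [γ, β−1]; i.e., the network has ACR in each species S_{φ_j} with ACR value k_α h*_j. -/
open Finset

/-- Telescoping sum over an `Icc` interval of naturals. -/
lemma telescope_Icc_aux (f : ℕ → ℝ) (a b : ℕ) (hab : a ≤ b) :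
    ∑ j ∈ Finset.Icc (a + 1) b, (f j - f (j - 1)) = f b - f a := by
  induction b, hab using Nat.le_induction with
  | base =>
      rw [Finset.Icc_eq_empty (by omega)]
      simp
  | succ b hb ih =>
      rw [Finset.sum_Icc_succ_top (by omega), ih]
      have : b + 1 - 1 = b := by omega
      rw [this]
      ring

/-- **general ACR theorem.** Let `G` be the covalent modification
network `(n, m, φ)` with bifunctional enzyme `C α`, assume `{1, n} ⊆ φ([1,m])`,
and let `β = min {j : φ j ∈ [1,α]}`, `γ = max {j : φ j ∈ [α+1,n]}`. If `γ < β`,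
then at every positive steady state `k α * c α = h j * d j` for all
`j ∈ [γ, β-1]`, and consequently `s (φ j) = k α * h* j` for every
`j ∈ [γ, β-1]`; i.e. the network has ACR in each `S (φ j)` with ACR value
`k α * h* j`. -/
theorem cmn_general_acr
    (n m α : ℕ) (hn : 2 ≤ n) (hm : 2 ≤ m) (hα : α ∈ Finset.Icc 1 (n - 1))
    (φ : ℕ → ℕ) (hφinj : Set.InjOn φ (Set.Icc 1 m))
    (h1 : 1 ∈ (Finset.Icc 1 m).image φ) (hnmem : n ∈ (Finset.Icc 1 m).image φ)
    (β γ : ℕ)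
    (hβmem : β ∈ Finset.Icc 1 m) (hβval : φ β ∈ Finset.Icc 1 α)
    (hβmin : ∀ j ∈ Finset.Icc 1 m, φ j ∈ Finset.Icc 1 α → β ≤ j)
    (hγmem : γ ∈ Finset.Icc 1 m) (hγval : φ γ ∈ Finset.Icc (α + 1) n)
    (hγmax : ∀ j ∈ Finset.Icc 1 m, φ j ∈ Finset.Icc (α + 1) n → j ≤ γ)
    (hγβ : γ < β)
    (kp km k hp' hm' h : ℕ → ℝ)
    (hkpos : ∀ i ∈ Finset.Icc 1 (n - 1), 0 < kp i ∧ 0 < km i ∧ 0 < k i)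
    (hhpos : ∀ j ∈ Finset.Icc 1 (m - 1), 0 < hp' j ∧ 0 < hm' j ∧ 0 < h j)
    (hk0 : k 0 = 0) (hkpn : kp n = 0) (hkmn : km n = 0) (hh0 : h 0 = 0)
    (s : ℕ → ℝ) (e : ℝ) (c d : ℕ → ℝ)
    (hpos : CMNPositive n m φ s e c d)
    (hss : CMNSteadyState n m α φ kp km k hp' hm' h s e c d) :
    ∀ j ∈ Finset.Icc γ (β - 1),
      k α * c α = h j * d j
        ∧ s (φ j) = k α * ((h j + hm' j) / (h j * hp' j)) := by
  obtain ⟨hspos, hepos, hcpos, hdpos⟩ := hpos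
  obtain ⟨hS, hE, hC, hD⟩ := hss
  have hαIcc := hα
  rw [Finset.mem_Icc] at hα hβmem hγmem hβval hγval
  set T : ℕ → ℝ := fun j => if j ≤ m - 1 then h j * d j else 0 with hT
  -- D equations rearranged
  have hDeq : ∀ j ∈ Finset.Icc 1 (m - 1), hp' j * s (φ j) * c α = (hm' j + h j) * d j := by
    intro j hj; have := hD j hj; linarith
  -- C equations simplified
  have hCeq : ∀ i ∈ Finset.Icc 1 (n - 1), kp i * s i * e = (km i + k i) * c i := by
    intro i hi
    have h0 : (∑ j ∈ Finset.Icc 1 (m - 1),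
        (-(hp' j) * s (φ j) * c α + (hm' j + h j) * d j)) = 0 := by
      apply Finset.sum_eq_zero
      intro j hj; have := hD j hj; linarith
    have hthis := hC i hi
    by_cases hcase : i = α
    · rw [if_pos hcase, h0] at hthis; linarith
    · rw [if_neg hcase] at hthis; linarith
  -- key lemma A: substrate equation at φ j0
  have keyA : ∀ j0 ∈ Finset.Icc 1 m,
      (if φ j0 ∈ Finset.Icc 1 n then Ffwd kp km k s e c (φ j0) else 0)
        = T j0 - T (j0 - 1) := by
    intro j0 hj0
    rw [Finset.mem_Icc] at hj0
    have hmem : φ j0 ∈ Finset.Icc 1 n ∪ (Finset.Icc 1 m).image φ :=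
      Finset.mem_union_right _ (Finset.mem_image.mpr ⟨j0, Finset.mem_Icc.mpr hj0, rfl⟩)
    have heq := hS (φ j0) hmem
    rw [Finset.sum_add_distrib] at heq
    have h1sum : (∑ jj ∈ Finset.Icc 1 (m - 1),
        if φ jj = φ j0 then -(hp' jj) * s (φ j0) * c α + hm' jj * d jj else 0)
        = if j0 ∈ Finset.Icc 1 (m - 1) then -(h j0 * d j0) else 0 := by
      rw [← Finset.sum_ite_eq' (Finset.Icc 1 (m - 1)) j0 (fun jj => -(h jj * d jj))]
      apply Finset.sum_congr rfl
      intro jj hjj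
      rw [Finset.mem_Icc] at hjj
      by_cases hcase : jj = j0
      · subst hcase
        rw [if_pos rfl, if_pos rfl]
        have := hDeq jj (Finset.mem_Icc.mpr hjj)
        linarith
      · rw [if_neg hcase, if_neg (fun hφ => hcase
          (hφinj ⟨by exact_mod_cast hjj.1, by omega⟩ ⟨by exact_mod_cast hj0.1, by exact_mod_cast hj0.2⟩ hφ))]
    have h2sum : (∑ jj ∈ Finset.Icc 1 (m - 1),
        if φ (jj + 1) = φ j0 then h jj * d jj else 0)
        = if j0 - 1 ∈ Finset.Icc 1 (m - 1) then h (j0 - 1) * d (j0 - 1) else 0 := by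
      rw [← Finset.sum_ite_eq' (Finset.Icc 1 (m - 1)) (j0 - 1) (fun jj => h jj * d jj)]
      apply Finset.sum_congr rfl
      intro jj hjj
      rw [Finset.mem_Icc] at hjj
      have hiff : (φ (jj + 1) = φ j0) ↔ (jj = j0 - 1) := by
        constructor
        · intro hφ
          have : jj + 1 = j0 :=
            hφinj ⟨by omega, by exact_mod_cast (by omega : jj + 1 ≤ m)⟩
              ⟨by exact_mod_cast hj0.1, by exact_mod_cast hj0.2⟩ hφ
          omega
        · intro hjj'
          have : jj + 1 = j0 := by omega
          rw [this]
      simp only [hiff]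
    rw [h1sum, h2sum] at heq
    have e1 : (if j0 ∈ Finset.Icc 1 (m - 1) then -(h j0 * d j0) else 0) = -(T j0) := by
      simp only [hT]
      by_cases hcase : j0 ≤ m - 1
      · rw [if_pos (Finset.mem_Icc.mpr ⟨hj0.1, hcase⟩), if_pos hcase]
      · rw [if_neg (fun hmem' => hcase (Finset.mem_Icc.mp hmem').2), if_neg hcase]
        ring
    have e2 : (if j0 - 1 ∈ Finset.Icc 1 (m - 1) then h (j0 - 1) * d (j0 - 1) else 0)
        = T (j0 - 1) := by
      simp only [hT]
      by_cases hcase : 1 ≤ j0 - 1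
      · rw [if_pos (Finset.mem_Icc.mpr ⟨hcase, by omega⟩), if_pos (by omega)]
      · have hz : j0 - 1 = 0 := by omega
        rw [if_neg (fun hmem' => hcase (Finset.mem_Icc.mp hmem').1), hz,
          if_pos (by omega : (0:ℕ) ≤ m - 1), hh0]
        ring
    rw [e1, e2] at heq
    linarith
  -- key lemma A0: substrates outside the image of φ
  have keyA0 : ∀ i ∈ Finset.Icc 1 n, i ∉ (Finset.Icc 1 m).image φ →
      Ffwd kp km k s e c i = 0 := by
    intro i hi hnot
    have heq := hS i (Finset.mem_union_left _ hi)
    rw [if_pos hi] at heq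
    have hz : (∑ j ∈ Finset.Icc 1 (m - 1),
        ((if φ j = i then -(hp' j) * s i * c α + hm' j * d j else 0)
          + (if φ (j + 1) = i then h j * d j else 0))) = 0 := by
      apply Finset.sum_eq_zero
      intro jj hjj
      rw [Finset.mem_Icc] at hjj
      rw [if_neg (fun hφ => hnot (Finset.mem_image.mpr
          ⟨jj, Finset.mem_Icc.mpr ⟨hjj.1, by omega⟩, hφ⟩)),
        if_neg (fun hφ => hnot (Finset.mem_image.mpr
          ⟨jj + 1, Finset.mem_Icc.mpr ⟨by omega, by omega⟩, hφ⟩))]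
      ring
    rw [hz] at heq
    linarith
  -- forward telescoping
  have hfwd : ∑ ℓ ∈ Finset.Icc 1 α, Ffwd kp km k s e c ℓ = -(k α * c α) := by
    have hterm : ∀ ℓ ∈ Finset.Icc (0 + 1) α, Ffwd kp km k s e c ℓ
        = (fun i => -(k i * c i)) ℓ - (fun i => -(k i * c i)) (ℓ - 1) := by
      intro ℓ hℓ
      rw [Finset.mem_Icc] at hℓ
      have hCe := hCeq ℓ (Finset.mem_Icc.mpr ⟨hℓ.1, by omega⟩)
      simp only [Ffwd]
      linarith
    calc ∑ ℓ ∈ Finset.Icc 1 α, Ffwd kp km k s e c ℓ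
        = ∑ ℓ ∈ Finset.Icc (0 + 1) α,
            ((fun i => -(k i * c i)) ℓ - (fun i => -(k i * c i)) (ℓ - 1)) :=
          Finset.sum_congr rfl hterm
      _ = (fun i => -(k i * c i)) α - (fun i => -(k i * c i)) 0 :=
          telescope_Icc_aux _ 0 α (Nat.zero_le _)
      _ = -(k α * c α) := by simp [hk0]
  -- backward telescoping
  have hback : ∑ j0 ∈ Finset.Icc (γ + 1) m,
      (if φ j0 ∈ Finset.Icc 1 n then Ffwd kp km k s e c (φ j0) else 0) = -(T γ) := by
    have hterm : ∀ j0 ∈ Finset.Icc (γ + 1) m,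
        (if φ j0 ∈ Finset.Icc 1 n then Ffwd kp km k s e c (φ j0) else 0)
          = T j0 - T (j0 - 1) := by
      intro j0 hj0
      rw [Finset.mem_Icc] at hj0
      exact keyA j0 (Finset.mem_Icc.mpr ⟨by omega, hj0.2⟩)
    rw [Finset.sum_congr rfl hterm, telescope_Icc_aux T γ m (by omega)]
    have hTm : T m = 0 := by simp only [hT]; rw [if_neg (by omega)]
    rw [hTm]
    ring
  -- reindexing
  have hreindex : ∑ j0 ∈ Finset.Icc (γ + 1) m,
      (if φ j0 ∈ Finset.Icc 1 n then Ffwd kp km k s e c (φ j0) else 0)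
        = ∑ ℓ ∈ Finset.Icc 1 α, Ffwd kp km k s e c ℓ := by
    set J : Finset ℕ := (Finset.Icc (γ + 1) m).filter (fun jj => φ jj ∈ Finset.Icc 1 n)
      with hJ
    have hJsub : ∀ x ∈ J, 1 ≤ x ∧ x ≤ m := by
      intro x hx
      rw [hJ, Finset.mem_filter, Finset.mem_Icc] at hx
      omega
    have step1 : ∑ j0 ∈ Finset.Icc (γ + 1) m,
        (if φ j0 ∈ Finset.Icc 1 n then Ffwd kp km k s e c (φ j0) else 0)
          = ∑ jj ∈ J, Ffwd kp km k s e c (φ jj) :=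
      (Finset.sum_filter _ _).symm
    have hinjJ : ∀ x ∈ J, ∀ y ∈ J, φ x = φ y → x = y := by
      intro x hx y hy hxy
      have hx' := hJsub x hx
      have hy' := hJsub y hy
      exact hφinj ⟨by exact_mod_cast hx'.1, by exact_mod_cast hx'.2⟩
        ⟨by exact_mod_cast hy'.1, by exact_mod_cast hy'.2⟩ hxy
    have step2 : ∑ jj ∈ J, Ffwd kp km k s e c (φ jj)
        = ∑ ℓ ∈ J.image φ, Ffwd kp km k s e c ℓ := (Finset.sum_image hinjJ).symm
    have hsub : J.image φ ⊆ Finset.Icc 1 α := by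
      intro ℓ hℓ
      rw [Finset.mem_image] at hℓ
      obtain ⟨jj, hjj, rfl⟩ := hℓ
      rw [hJ, Finset.mem_filter, Finset.mem_Icc, Finset.mem_Icc] at hjj
      rw [Finset.mem_Icc]
      refine ⟨hjj.2.1, ?_⟩
      by_contra hgt
      have := hγmax jj (Finset.mem_Icc.mpr ⟨by omega, hjj.1.2⟩)
        (Finset.mem_Icc.mpr ⟨by omega, hjj.2.2⟩)
      omega
    have hzero : ∀ ℓ ∈ Finset.Icc 1 α, ℓ ∉ J.image φ → Ffwd kp km k s e c ℓ = 0 := by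
      intro ℓ hℓ hℓnot
      rw [Finset.mem_Icc] at hℓ
      apply keyA0 ℓ (Finset.mem_Icc.mpr ⟨hℓ.1, by omega⟩)
      intro hin
      rw [Finset.mem_image] at hin
      obtain ⟨jj, hjj, rfl⟩ := hin
      rw [Finset.mem_Icc] at hjj
      have hβle := hβmin jj (Finset.mem_Icc.mpr hjj)
        (Finset.mem_Icc.mpr ⟨hℓ.1, hℓ.2⟩)
      apply hℓnot
      rw [Finset.mem_image]
      refine ⟨jj, ?_, rfl⟩
      rw [hJ, Finset.mem_filter, Finset.mem_Icc, Finset.mem_Icc]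
      exact ⟨⟨by omega, hjj.2⟩, hℓ.1, by omega⟩
    rw [step1, step2]
    exact Finset.sum_subset hsub hzero
  -- main identity: k α * c α = T γ
  have hkey : k α * c α = T γ := by
    have := hreindex
    rw [hback, hfwd] at this
    linarith
  -- T is constant on [γ, β-1]
  have hTconst : ∀ jj, γ ≤ jj → jj ≤ β - 1 → T jj = T γ := by
    intro jj hjj1
    induction jj, hjj1 using Nat.le_induction with
    | base => intro _; rfl
    | succ jj hjj ih =>
      intro hle
      have hnotin : φ (jj + 1) ∉ Finset.Icc 1 n := by
        intro hin
        rw [Finset.mem_Icc] at hin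
        by_cases hcase : φ (jj + 1) ≤ α
        · have := hβmin (jj + 1) (Finset.mem_Icc.mpr ⟨by omega, by omega⟩)
            (Finset.mem_Icc.mpr ⟨hin.1, hcase⟩)
          omega
        · have := hγmax (jj + 1) (Finset.mem_Icc.mpr ⟨by omega, by omega⟩)
            (Finset.mem_Icc.mpr ⟨by omega, hin.2⟩)
          omega
      have hkA := keyA (jj + 1) (Finset.mem_Icc.mpr ⟨by omega, by omega⟩)
      rw [if_neg hnotin] at hkA
      have hsimp : jj + 1 - 1 = jj := rfl
      rw [hsimp] at hkA
      have hT1 : T (jj + 1) = T jj := by linarith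
      rw [hT1]
      exact ih (by omega)
  -- conclude
  intro j hj
  rw [Finset.mem_Icc] at hj
  have hjm : j ∈ Finset.Icc 1 (m - 1) := Finset.mem_Icc.mpr ⟨by omega, by omega⟩
  have hTj : T j = h j * d j := by
    simp only [hT]; rw [if_pos (by omega : j ≤ m - 1)]
  have hfirst : k α * c α = h j * d j := by
    rw [hkey, ← hTconst j hj.1 hj.2, hTj]
  refine ⟨hfirst, ?_⟩
  obtain ⟨hpp, hmp, hhp⟩ := hhpos j hjm
  have hcα : 0 < c α := hcpos α hαIcc
  have key2 : hp' j * s (φ j) * c α * h j = (hm' j + h j) * (k α * c α) := by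
    have hDe := hDeq j hjm
    calc hp' j * s (φ j) * c α * h j = ((hm' j + h j) * d j) * h j := by rw [hDe]
      _ = (hm' j + h j) * (h j * d j) := by ring
      _ = (hm' j + h j) * (k α * c α) := by rw [← hfirst]
  have key3 : s (φ j) * (h j * hp' j) = k α * (h j + hm' j) := by
    have hcne : c α ≠ 0 := ne_of_gt hcα
    have hmul : (s (φ j) * (h j * hp' j)) * c α = (k α * (h j + hm' j)) * c α := by
      linear_combination key2
    exact mul_right_cancel₀ hcne hmul
  have hne : h j * hp' j ≠ 0 := ne_of_gt (mul_pos hhp hpp)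
  field_simp
  linear_combination key3
end

section
/- Let G be the covalent modification network (n,m,φ), and let N_G be the auxiliary directed graph on vertices {X_1,…,X_n} ∪ {X_{φ_1},…,X_{φ_m}} with an edge X_ℓ → X_s iff ℓ+1 = s ≤ n or φ^{−1}(ℓ)+1 = φ^{−1}(s) ≤ m. Then G is consistent if and only if N_G is strongly connected. -/
open Finset

/-- The covalent modification network `(n, m, φ)` with bifunctional enzyme `C α`
is consistent: there is a positive combination of all its reaction vectors
(forward chain `S i + E ⇌ C i → S (i+1) + E`, `i ∈ [1,n-1]`; backward chain
`S (φ j) + C α ⇌ D j → S (φ (j+1)) + C α`, `j ∈ [1,m-1]`) equal to zero. -/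
def CMNConsistent (n m α : ℕ) (φ : ℕ → ℕ) : Prop :=
  ∃ β1 β2 β3 γ1 γ2 γ3 : ℕ → ℝ,
    (∀ i ∈ Finset.Icc 1 (n - 1), 0 < β1 i ∧ 0 < β2 i ∧ 0 < β3 i) ∧
    (∀ j ∈ Finset.Icc 1 (m - 1), 0 < γ1 j ∧ 0 < γ2 j ∧ 0 < γ3 j) ∧
    (∑ i ∈ Finset.Icc 1 (n - 1),
        (β1 i • (eC i - eS i - eE) + β2 i • (eS i + eE - eC i)
          + β3 i • (eS (i + 1) + eE - eC i))
      + ∑ j ∈ Finset.Icc 1 (m - 1),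
        (γ1 j • (eD j - eS (φ j) - eC α) + γ2 j • (eS (φ j) + eC α - eD j)
          + γ3 j • (eS (φ (j + 1)) + eC α - eD j)) = 0)

/-- Edge relation of the auxiliary graph `N_G`: `X a → X b` iff `a + 1 = b ≤ n`
or `φ⁻¹ a + 1 = φ⁻¹ b ≤ m`. -/
def AuxEdge (n m : ℕ) (φ : ℕ → ℕ) (a b : ℕ) : Prop :=
  (b = a + 1 ∧ 1 ≤ a ∧ b ≤ n) ∨ (∃ j, 1 ≤ j ∧ j + 1 ≤ m ∧ φ j = a ∧ φ (j + 1) = b)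

/-- The auxiliary graph `N_G`, on vertices `{X_1,…,X_n} ∪ {X_{φ 1},…,X_{φ m}}`,
is strongly connected. -/
def AuxStronglyConnected (n m : ℕ) (φ : ℕ → ℕ) : Prop :=
  ∀ a ∈ Finset.Icc 1 n ∪ (Finset.Icc 1 m).image φ,
    ∀ b ∈ Finset.Icc 1 n ∪ (Finset.Icc 1 m).image φ,
      Relation.ReflTransGen (AuxEdge n m φ) a b

noncomputable def vecFlow (n m : ℕ) (φ : ℕ → ℕ) (b g : ℕ → ℝ) : ℕ → ℝ :=
  ∑ i ∈ Icc 1 (n-1), b i • (eS (i+1) - eS i)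
  + ∑ j ∈ Icc 1 (m-1), g j • (eS (φ (j+1)) - eS (φ j))

lemma vecFlow_add (n m : ℕ) (φ : ℕ → ℕ) (b g b' g' : ℕ → ℝ) :
    vecFlow n m φ (b + b') (g + g') = vecFlow n m φ b g + vecFlow n m φ b' g' := by
  simp only [vecFlow, Pi.add_apply, add_smul, Finset.sum_add_distrib]
  abel

lemma vecFlow_zero (n m : ℕ) (φ : ℕ → ℕ) : vecFlow n m φ 0 0 = 0 := by
  simp [vecFlow]

lemma vecFlow_single_b (n m : ℕ) (φ : ℕ → ℕ) (i : ℕ) (hi : i ∈ Icc 1 (n-1)) :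
    vecFlow n m φ (fun x => if x = i then (1:ℝ) else 0) 0 = eS (i+1) - eS i := by
  rw [vecFlow]
  rw [Finset.sum_eq_single_of_mem i hi (by intro b hb hne; simp [hne])]
  simp

lemma vecFlow_single_g (n m : ℕ) (φ : ℕ → ℕ) (j : ℕ) (hj : j ∈ Icc 1 (m-1)) :
    vecFlow n m φ 0 (fun x => if x = j then (1:ℝ) else 0) = eS (φ (j+1)) - eS (φ j) := by
  rw [vecFlow]
  rw [Finset.sum_eq_single_of_mem j hj (by intro b hb hne; simp [hne])]
  simp

lemma path_flow (n m : ℕ) (φ : ℕ → ℕ) (x y : ℕ)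
    (h : Relation.ReflTransGen (AuxEdge n m φ) x y) :
    ∃ b g : ℕ → ℝ, (∀ i, 0 ≤ b i) ∧ (∀ j, 0 ≤ g j) ∧
      vecFlow n m φ b g = eS y - eS x := by
  induction h with
  | refl => exact ⟨0, 0, fun _ => le_refl _, fun _ => le_refl _, by simp [vecFlow_zero]⟩
  | @tail y' z hxy hedge ih =>
    obtain ⟨b, g, hb, hg, hv⟩ := ih
    rcases hedge with ⟨hz, hy1, hzn⟩ | ⟨j, hj1, hjm, hjy, hjz⟩
    · refine ⟨b + (fun x => if x = y' then 1 else 0), g + 0, ?_, ?_, ?_⟩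
      · intro i; have := hb i; dsimp; positivity
      · intro j; simpa using hg j
      · rw [vecFlow_add, hv, vecFlow_single_b n m φ y' (by simp; omega)]
        subst hz; abel
    · refine ⟨b + 0, g + (fun x => if x = j then 1 else 0), ?_, ?_, ?_⟩
      · intro i; simpa using hb i
      · intro i; have := hg i; dsimp; positivity
      · rw [vecFlow_add, hv, vecFlow_single_g n m φ j (by simp; omega)]
        rw [hjy, hjz]; abel

lemma vecFlow_sum (n m : ℕ) (φ : ℕ → ℕ) {ι : Type*} (t : Finset ι) (b g : ι → ℕ → ℝ) :
    vecFlow n m φ (∑ x ∈ t, b x) (∑ x ∈ t, g x) = ∑ x ∈ t, vecFlow n m φ (b x) (g x) := by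
  induction t using Finset.cons_induction with
  | empty => simp [vecFlow_zero]
  | cons a s hx ih => simp [Finset.sum_cons, vecFlow_add, ih]

lemma sc_to_consistent (n m α : ℕ) (hn : 2 ≤ n) (hm : 2 ≤ m) (hα : α ∈ Finset.Icc 1 (n - 1))
    (φ : ℕ → ℕ) (hsc : AuxStronglyConnected n m φ) : CMNConsistent n m α φ := by
  have hV1 : ∀ i, 1 ≤ i → i ≤ n → i ∈ Finset.Icc 1 n ∪ (Finset.Icc 1 m).image φ :=
    fun i h1 h2 => Finset.mem_union_left _ (by simp [h1, h2])
  have hV2 : ∀ k, 1 ≤ k → k ≤ m → φ k ∈ Finset.Icc 1 n ∪ (Finset.Icc 1 m).image φ :=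
    fun k h1 h2 => Finset.mem_union_right _ (Finset.mem_image_of_mem φ (by simp [h1, h2]))
  have Hf : ∀ i, ∃ b g : ℕ → ℝ, (∀ x, 0 ≤ b x) ∧ (∀ x, 0 ≤ g x) ∧
      (i ∈ Icc 1 (n-1) → vecFlow n m φ b g = eS i - eS (i+1)) := by
    intro i
    by_cases hi : i ∈ Icc 1 (n-1)
    · simp only [Finset.mem_Icc] at hi
      have h := hsc (i+1) (hV1 _ (by omega) (by omega)) i (hV1 _ (by omega) (by omega))
      obtain ⟨b, g, hb, hg, hv⟩ := path_flow n m φ _ _ h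
      exact ⟨b, g, hb, hg, fun _ => hv⟩
    · exact ⟨0, 0, fun _ => le_refl _, fun _ => le_refl _, fun h => absurd h hi⟩
  choose fb fg hfb hfg hfv using Hf
  have Hg : ∀ j, ∃ b g : ℕ → ℝ, (∀ x, 0 ≤ b x) ∧ (∀ x, 0 ≤ g x) ∧
      (j ∈ Icc 1 (m-1) → vecFlow n m φ b g = eS (φ j) - eS (φ (j+1))) := by
    intro j
    by_cases hj : j ∈ Icc 1 (m-1)
    · simp only [Finset.mem_Icc] at hj
      have h := hsc (φ (j+1)) (hV2 _ (by omega) (by omega)) (φ j) (hV2 _ (by omega) (by omega))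
      obtain ⟨b, g, hb, hg, hv⟩ := path_flow n m φ _ _ h
      exact ⟨b, g, hb, hg, fun _ => hv⟩
    · exact ⟨0, 0, fun _ => le_refl _, fun _ => le_refl _, fun h => absurd h hj⟩
  choose gb gg hgb hgg hgv using Hg
  set bstar : ℕ → ℝ :=
    (∑ i ∈ Icc 1 (n-1), (fb i + fun x => if x = i then 1 else 0)) + ∑ j ∈ Icc 1 (m-1), gb j
    with hbstar
  set gstar : ℕ → ℝ :=
    (∑ i ∈ Icc 1 (n-1), fg i) + ∑ j ∈ Icc 1 (m-1), (gg j + fun x => if x = j then 1 else 0)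
    with hgstar
  have e1 : ∀ i ∈ Icc 1 (n-1),
      vecFlow n m φ (fb i + fun x => if x = i then 1 else 0) (fg i) = 0 := by
    intro i hi
    have h0 : fg i = fg i + 0 := by simp
    rw [h0, vecFlow_add, hfv i hi, vecFlow_single_b n m φ i hi]
    abel
  have e2 : ∀ j ∈ Icc 1 (m-1),
      vecFlow n m φ (gb j) (gg j + fun x => if x = j then 1 else 0) = 0 := by
    intro j hj
    have h0 : gb j = gb j + 0 := by simp
    rw [h0, vecFlow_add, hgv j hj, vecFlow_single_g n m φ j hj]
    abel
  have hflow : vecFlow n m φ bstar gstar = 0 := by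
    rw [hbstar, hgstar, vecFlow_add, vecFlow_sum, vecFlow_sum,
      Finset.sum_congr rfl e1, Finset.sum_congr rfl e2]
    simp
  have hbpos : ∀ i ∈ Icc 1 (n-1), 0 < bstar i := by
    intro i hi
    rw [hbstar]
    simp only [Pi.add_apply, Finset.sum_apply]
    have h1 : 0 < ∑ x ∈ Icc 1 (n-1), (fb x i + if i = x then (1:ℝ) else 0) := by
      apply Finset.sum_pos'
      · intro x _; have := hfb x i; positivity
      · refine ⟨i, hi, ?_⟩; rw [if_pos rfl]; have := hfb i i; positivity
    have h2 : 0 ≤ ∑ x ∈ Icc 1 (m-1), gb x i := Finset.sum_nonneg fun x _ => hgb x i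
    linarith
  have hgpos : ∀ j ∈ Icc 1 (m-1), 0 < gstar j := by
    intro j hj
    rw [hgstar]
    simp only [Pi.add_apply, Finset.sum_apply]
    have h1 : 0 < ∑ x ∈ Icc 1 (m-1), (gg x j + if j = x then (1:ℝ) else 0) := by
      apply Finset.sum_pos'
      · intro x _; have := hgg x j; positivity
      · refine ⟨j, hj, ?_⟩; rw [if_pos rfl]; have := hgg j j; positivity
    have h2 : 0 ≤ ∑ x ∈ Icc 1 (n-1), fg x j := Finset.sum_nonneg fun x _ => hfg x j
    linarith
  refine ⟨fun i => bstar i + 1, fun _ => 1, bstar, fun j => gstar j + 1, fun _ => 1, gstar,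
    ?_, ?_, ?_⟩
  · intro i hi; have := hbpos i hi
    exact ⟨by show 0 < bstar i + 1; linarith, one_pos, this⟩
  · intro j hj; have := hgpos j hj
    exact ⟨by show 0 < gstar j + 1; linarith, one_pos, this⟩
  · have key : (∑ i ∈ Finset.Icc 1 (n - 1),
        ((bstar i + 1) • (eC i - eS i - eE) + (1:ℝ) • (eS i + eE - eC i)
          + bstar i • (eS (i + 1) + eE - eC i)))
      + ∑ j ∈ Finset.Icc 1 (m - 1),
        ((gstar j + 1) • (eD j - eS (φ j) - eC α) + (1:ℝ) • (eS (φ j) + eC α - eD j)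
          + gstar j • (eS (φ (j + 1)) + eC α - eD j)) = vecFlow n m φ bstar gstar := by
      rw [vecFlow]
      congr 1
      · apply Finset.sum_congr rfl; intro i _; module
      · apply Finset.sum_congr rfl; intro j _; module
    dsimp only
    rw [key, hflow]

lemma consistent_to_sc (n m α : ℕ) (hn : 2 ≤ n) (hm : 2 ≤ m) (hα : α ∈ Finset.Icc 1 (n - 1))
    (φ : ℕ → ℕ) (hφinj : Set.InjOn φ (Set.Icc 1 m))
    (hφpos : ∀ j ∈ Finset.Icc 1 m, 1 ≤ φ j)
    (hc : CMNConsistent n m α φ) : AuxStronglyConnected n m φ := by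
  classical
  obtain ⟨β1, β2, β3, γ1, γ2, γ3, hβ, hγ, heq⟩ := hc
  simp only [Finset.mem_Icc] at hα
  have hγeq : ∀ j₀ ∈ Icc 1 (m-1), γ1 j₀ = γ2 j₀ + γ3 j₀ := by
    intro j₀ hj₀
    simp only [Finset.mem_Icc] at hj₀
    have hz1 : ∀ i ∈ Icc 1 (n-1), (β1 i • (eC i - eS i - eE) + β2 i • (eS i + eE - eC i)
        + β3 i • (eS (i + 1) + eE - eC i)) (4*j₀+3) = 0 := by
      intro i hi
      simp only [Finset.mem_Icc] at hi
      simp only [eS, eE, eC, eD, Pi.add_apply, Pi.sub_apply, Pi.smul_apply, smul_eq_mul,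
        Pi.single_apply, if_true]
      split_ifs <;> first | (exfalso; omega) | linarith
    have hz2 : ∀ b ∈ Icc 1 (m-1), b ≠ j₀ →
        (γ1 b • (eD b - eS (φ b) - eC α) + γ2 b • (eS (φ b) + eC α - eD b)
          + γ3 b • (eS (φ (b + 1)) + eC α - eD b)) (4*j₀+3) = 0 := by
      intro b hb hne
      simp only [Finset.mem_Icc] at hb
      simp only [eS, eE, eC, eD, Pi.add_apply, Pi.sub_apply, Pi.smul_apply, smul_eq_mul,
        Pi.single_apply, if_true]
      split_ifs <;> first | (exfalso; omega) | linarith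
    have hk := congrFun heq (4*j₀+3)
    rw [Pi.add_apply, Finset.sum_apply, Finset.sum_apply, Pi.zero_apply,
        Finset.sum_eq_zero hz1, Finset.sum_eq_single_of_mem j₀
          (by simp only [Finset.mem_Icc]; omega) hz2] at hk
    simp only [eS, eE, eC, eD, Pi.add_apply, Pi.sub_apply, Pi.smul_apply, smul_eq_mul,
      Pi.single_apply, if_true] at hk
    split_ifs at hk <;> first | linarith | (exfalso; omega)
  have hβeq : ∀ i₀ ∈ Icc 1 (n-1), β1 i₀ = β2 i₀ + β3 i₀ := by
    intro i₀ hi₀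
    have hi₀' := hi₀
    simp only [Finset.mem_Icc] at hi₀'
    have hz1 : ∀ b ∈ Icc 1 (n-1), b ≠ i₀ → (β1 b • (eC b - eS b - eE) + β2 b • (eS b + eE - eC b)
        + β3 b • (eS (b + 1) + eE - eC b)) (4*i₀+2) = 0 := by
      intro b hb hne
      simp only [Finset.mem_Icc] at hb
      simp only [eS, eE, eC, eD, Pi.add_apply, Pi.sub_apply, Pi.smul_apply, smul_eq_mul,
        Pi.single_apply, if_true]
      split_ifs <;> first | (exfalso; omega) | linarith
    have hz2 : ∀ j ∈ Icc 1 (m-1),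
        (γ1 j • (eD j - eS (φ j) - eC α) + γ2 j • (eS (φ j) + eC α - eD j)
          + γ3 j • (eS (φ (j + 1)) + eC α - eD j)) (4*i₀+2) = 0 := by
      intro j hj
      have hge := hγeq j hj
      simp only [Finset.mem_Icc] at hj
      simp only [eS, eE, eC, eD, Pi.add_apply, Pi.sub_apply, Pi.smul_apply, smul_eq_mul,
        Pi.single_apply, if_true]
      split_ifs <;> first | (exfalso; omega) | linarith
    have hk := congrFun heq (4*i₀+2)
    rw [Pi.add_apply, Finset.sum_apply, Finset.sum_apply, Pi.zero_apply,
        Finset.sum_eq_zero hz2, Finset.sum_eq_single_of_mem i₀ hi₀ hz1] at hk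
    simp only [eS, eE, eC, eD, Pi.add_apply, Pi.sub_apply, Pi.smul_apply, smul_eq_mul,
      Pi.single_apply, if_true] at hk
    split_ifs at hk <;> first | linarith | (exfalso; omega)
  have hcons : ∀ s : ℕ,
      ∑ i ∈ Icc 1 (n-1), β3 i * ((if i+1 = s then (1:ℝ) else 0) - (if i = s then 1 else 0))
      + ∑ j ∈ Icc 1 (m-1),
          γ3 j * ((if φ (j+1) = s then (1:ℝ) else 0) - (if φ j = s then 1 else 0)) = 0 := by
    intro s
    have hz1 : ∀ i ∈ Icc 1 (n-1), (β1 i • (eC i - eS i - eE) + β2 i • (eS i + eE - eC i)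
        + β3 i • (eS (i + 1) + eE - eC i)) (4*s)
        = β3 i * ((if i+1 = s then (1:ℝ) else 0) - (if i = s then 1 else 0)) := by
      intro i hi
      have hbe := hβeq i hi
      simp only [Finset.mem_Icc] at hi
      simp only [eS, eE, eC, eD, Pi.add_apply, Pi.sub_apply, Pi.smul_apply, smul_eq_mul,
        Pi.single_apply, if_true]
      split_ifs <;> first | (exfalso; omega) | linarith
    have hz2 : ∀ j ∈ Icc 1 (m-1),
        (γ1 j • (eD j - eS (φ j) - eC α) + γ2 j • (eS (φ j) + eC α - eD j)
          + γ3 j • (eS (φ (j + 1)) + eC α - eD j)) (4*s)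
        = γ3 j * ((if φ (j+1) = s then (1:ℝ) else 0) - (if φ j = s then 1 else 0)) := by
      intro j hj
      have hge := hγeq j hj
      simp only [Finset.mem_Icc] at hj
      simp only [eS, eE, eC, eD, Pi.add_apply, Pi.sub_apply, Pi.smul_apply, smul_eq_mul,
        Pi.single_apply, if_true]
      split_ifs <;> first | (exfalso; omega) | linarith
    have hk := congrFun heq (4*s)
    rw [Pi.add_apply, Finset.sum_apply, Finset.sum_apply, Pi.zero_apply,
        Finset.sum_congr rfl hz1, Finset.sum_congr rfl hz2] at hk
    exact hk
  have hφ1n : φ 1 ≤ n := by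
    by_contra hgt
    push_neg at hgt
    have hz1 : ∀ i ∈ Icc 1 (n-1),
        β3 i * ((if i+1 = φ 1 then (1:ℝ) else 0) - (if i = φ 1 then 1 else 0)) = 0 := by
      intro i hi
      simp only [Finset.mem_Icc] at hi
      rw [if_neg (by omega), if_neg (by omega)]; ring
    have hz2 : ∀ b ∈ Icc 1 (m-1), b ≠ 1 →
        γ3 b * ((if φ (b+1) = φ 1 then (1:ℝ) else 0) - (if φ b = φ 1 then 1 else 0)) = 0 := by
      intro b hb hne
      simp only [Finset.mem_Icc] at hb
      have h1 : φ (b+1) ≠ φ 1 := fun he => by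
        have := hφinj (Set.mem_Icc.2 ⟨by omega, by omega⟩) (Set.mem_Icc.2 ⟨le_refl _, by omega⟩) he
        omega
      have h2 : φ b ≠ φ 1 := fun he => by
        have := hφinj (Set.mem_Icc.2 ⟨by omega, by omega⟩) (Set.mem_Icc.2 ⟨le_refl _, by omega⟩) he
        omega
      rw [if_neg h1, if_neg h2]; ring
    have hk := hcons (φ 1)
    rw [Finset.sum_eq_zero hz1, Finset.sum_eq_single_of_mem 1
        (by simp only [Finset.mem_Icc]; omega) hz2] at hk
    have h2 : φ (1+1) ≠ φ 1 := fun he => by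
      have := hφinj (Set.mem_Icc.2 ⟨by omega, by omega⟩) (Set.mem_Icc.2 ⟨le_refl _, by omega⟩) he
      omega
    rw [if_neg h2, if_pos rfl] at hk
    have hγ1 := (hγ 1 (by simp only [Finset.mem_Icc]; omega)).2.2
    linarith
  -- Main connectivity argument
  intro a ha b hb
  set V : Finset ℕ := Finset.Icc 1 n ∪ (Finset.Icc 1 m).image φ with hV
  set S : Finset ℕ := V.filter (Relation.ReflTransGen (AuxEdge n m φ) a) with hS
  have haS : a ∈ S := Finset.mem_filter.2 ⟨ha, Relation.ReflTransGen.refl⟩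
  have hclosed : ∀ u v, u ∈ S → AuxEdge n m φ u v → v ∈ V → v ∈ S := by
    intro u v hu he hv
    obtain ⟨huV, hr⟩ := Finset.mem_filter.1 hu
    exact Finset.mem_filter.2 ⟨hv, hr.tail he⟩
  have hVn : ∀ v, 1 ≤ v → v ≤ n → v ∈ V := fun v h1 h2 =>
    Finset.mem_union_left _ (by simp only [Finset.mem_Icc]; omega)
  have hVφ : ∀ k, 1 ≤ k → k ≤ m → φ k ∈ V := fun k h1 h2 =>
    Finset.mem_union_right _ (Finset.mem_image_of_mem φ (by simp only [Finset.mem_Icc]; omega))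
  have hc1 : ∀ i ∈ Icc 1 (n-1),
      ∑ s ∈ S, β3 i * ((if i+1 = s then (1:ℝ) else 0) - (if i = s then 1 else 0))
      = β3 i * ((if i+1 ∈ S then (1:ℝ) else 0) - (if i ∈ S then 1 else 0)) := by
    intro i _
    rw [← Finset.mul_sum]
    congr 1
    rw [Finset.sum_sub_distrib, Finset.sum_ite_eq, Finset.sum_ite_eq]
  have hc2 : ∀ j ∈ Icc 1 (m-1),
      ∑ s ∈ S, γ3 j * ((if φ (j+1) = s then (1:ℝ) else 0) - (if φ j = s then 1 else 0))
      = γ3 j * ((if φ (j+1) ∈ S then (1:ℝ) else 0) - (if φ j ∈ S then 1 else 0)) := by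
    intro j _
    rw [← Finset.mul_sum]
    congr 1
    rw [Finset.sum_sub_distrib, Finset.sum_ite_eq, Finset.sum_ite_eq]
  have H := Finset.sum_eq_zero (fun s (_ : s ∈ S) => hcons s)
  rw [Finset.sum_add_distrib, Finset.sum_comm (s := S) (t := Icc 1 (n-1)),
      Finset.sum_comm (s := S) (t := Icc 1 (m-1)),
      Finset.sum_congr rfl hc1, Finset.sum_congr rfl hc2] at H
  have hFnonneg : ∀ i ∈ Icc 1 (n-1),
      0 ≤ β3 i * ((if i+1 ∈ S then (1:ℝ) else 0) - (if i ∈ S then 1 else 0)) := by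
    intro i hi
    have hpos := (hβ i hi).2.2
    simp only [Finset.mem_Icc] at hi
    by_cases h : i ∈ S
    · have hin : i+1 ∈ S := hclosed i (i+1) h (Or.inl ⟨rfl, by omega, by omega⟩)
        (hVn _ (by omega) (by omega))
      rw [if_pos hin, if_pos h]; simp
    · rw [if_neg h]
      by_cases h' : i+1 ∈ S
      · rw [if_pos h']; positivity
      · rw [if_neg h']; simp
  have hBnonneg : ∀ j ∈ Icc 1 (m-1),
      0 ≤ γ3 j * ((if φ (j+1) ∈ S then (1:ℝ) else 0) - (if φ j ∈ S then 1 else 0)) := by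
    intro j hj
    have hpos := (hγ j hj).2.2
    simp only [Finset.mem_Icc] at hj
    by_cases h : φ j ∈ S
    · have hin : φ (j+1) ∈ S := hclosed (φ j) (φ (j+1)) h
        (Or.inr ⟨j, by omega, by omega, rfl, rfl⟩) (hVφ _ (by omega) (by omega))
      rw [if_pos hin, if_pos h]; simp
    · rw [if_neg h]
      by_cases h' : φ (j+1) ∈ S
      · rw [if_pos h']; positivity
      · rw [if_neg h']; simp
  have hsum1 : ∑ i ∈ Icc 1 (n-1),
      β3 i * ((if i+1 ∈ S then (1:ℝ) else 0) - (if i ∈ S then 1 else 0)) = 0 := by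
    have h1 := Finset.sum_nonneg hFnonneg
    have h2 := Finset.sum_nonneg hBnonneg
    linarith
  have hsum2 : ∑ j ∈ Icc 1 (m-1),
      γ3 j * ((if φ (j+1) ∈ S then (1:ℝ) else 0) - (if φ j ∈ S then 1 else 0)) = 0 := by
    have h1 := Finset.sum_nonneg hFnonneg
    linarith
  have hFzero := (Finset.sum_eq_zero_iff_of_nonneg hFnonneg).1 hsum1
  have hBzero := (Finset.sum_eq_zero_iff_of_nonneg hBnonneg).1 hsum2
  have hFstep : ∀ i ∈ Icc 1 (n-1), (i ∈ S ↔ i+1 ∈ S) := by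
    intro i hi
    have hz := hFzero i hi
    have hpos := (hβ i hi).2.2
    simp only [Finset.mem_Icc] at hi
    constructor
    · intro h
      exact hclosed i (i+1) h (Or.inl ⟨rfl, by omega, by omega⟩) (hVn _ (by omega) (by omega))
    · intro h
      by_contra hns
      rw [if_pos h, if_neg hns] at hz
      simp at hz
      linarith
  have hBstep : ∀ j ∈ Icc 1 (m-1), (φ j ∈ S ↔ φ (j+1) ∈ S) := by
    intro j hj
    have hz := hBzero j hj
    have hpos := (hγ j hj).2.2
    simp only [Finset.mem_Icc] at hj
    constructor
    · intro h
      exact hclosed (φ j) (φ (j+1)) h (Or.inr ⟨j, by omega, by omega, rfl, rfl⟩)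
        (hVφ _ (by omega) (by omega))
    · intro h
      by_contra hns
      rw [if_pos h, if_neg hns] at hz
      simp at hz
      linarith
  have hFchain : ∀ i, 1 ≤ i → i ≤ n → (i ∈ S ↔ 1 ∈ S) := by
    intro i
    induction i with
    | zero => intro h; omega
    | succ k ih =>
      intro h1 h2
      rcases Nat.eq_zero_or_pos k with hk0 | hk1
      · subst hk0; rfl
      · have hkm : k ∈ Icc 1 (n-1) := by simp only [Finset.mem_Icc]; omega
        exact (hFstep k hkm).symm.trans (ih hk1 (by omega))
  have hBchain : ∀ k, 1 ≤ k → k ≤ m → (φ k ∈ S ↔ φ 1 ∈ S) := by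
    intro k
    induction k with
    | zero => intro h; omega
    | succ l ih =>
      intro h1 h2
      rcases Nat.eq_zero_or_pos l with hl0 | hl1
      · subst hl0; rfl
      · have hlm : l ∈ Icc 1 (m-1) := by simp only [Finset.mem_Icc]; omega
        exact (hBstep l hlm).symm.trans (ih hl1 (by omega))
  have hkey : ∀ v, v ∈ V → (v ∈ S ↔ 1 ∈ S) := by
    intro v hv
    rcases Finset.mem_union.1 hv with h | h
    · simp only [Finset.mem_Icc] at h
      exact hFchain v h.1 h.2
    · obtain ⟨k, hk, rfl⟩ := Finset.mem_image.1 h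
      simp only [Finset.mem_Icc] at hk
      exact (hBchain k hk.1 hk.2).trans (hFchain (φ 1)
        (hφpos 1 (by simp only [Finset.mem_Icc]; omega)) hφ1n)
  have h1S : (1:ℕ) ∈ S := (hkey a ha).1 haS
  have hbS : b ∈ S := (hkey b hb).2 h1S
  exact (Finset.mem_filter.1 hbS).2

/-- The covalent modification network `(n, m, φ)` is consistent
if and only if its auxiliary graph `N_G` is strongly connected. -/
theorem cmn_consistent_iff_aux_strongly_connected
    (n m α : ℕ) (hn : 2 ≤ n) (hm : 2 ≤ m) (hα : α ∈ Finset.Icc 1 (n - 1))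
    (φ : ℕ → ℕ) (hφinj : Set.InjOn φ (Set.Icc 1 m))
    (hφpos : ∀ j ∈ Finset.Icc 1 m, 1 ≤ φ j) :
    CMNConsistent n m α φ ↔ AuxStronglyConnected n m φ := by
  exact ⟨consistent_to_sc n m α hn hm hα φ hφinj hφpos,
    sc_to_consistent n m α hn hm hα φ⟩
end

section
/- If the auxiliary graph N_G of a covalent modification network (n,m,φ) is not strongly connected, then the network has no positive steady state for any choice of positive rate constants: there exist ℓ ≤ n and p ≤ m (not both ℓ = n and p = m) such that at every steady state k_ℓ c_ℓ + h_p d_p = 0, forcing the species concentration c_ℓ or d_p to vanish. -/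
open Finset

lemma telesc (f : ℕ → ℝ) (ℓ : ℕ) : ∑ i ∈ Icc 1 ℓ, (f (i-1) - f i) = f 0 - f ℓ := by
  induction ℓ with
  | zero => simp
  | succ t ih => rw [Finset.sum_Icc_succ_top (by omega), ih]; simp

lemma sum_key (n m α : ℕ) (hn : 2 ≤ n)
    (φ : ℕ → ℕ) (hφinj : Set.InjOn φ (Set.Icc 1 m))
    (hφpos : ∀ j ∈ Finset.Icc 1 m, 1 ≤ φ j)
    (kp km k hp' hm' h : ℕ → ℝ)
    (hk0 : k 0 = 0) (hkn : k n = 0) (hkpn : kp n = 0) (hkmn : km n = 0)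
    (hh0 : h 0 = 0) (hhm : h m = 0)
    (ℓ p : ℕ) (hℓn : ℓ ≤ n) (hpm : p ≤ m)
    (hcompat : ∀ j, 1 ≤ j → j ≤ m → (φ j ≤ ℓ → j ≤ p) ∧ (j ≤ p → φ j ≤ n → φ j ≤ ℓ))
    (s : ℕ → ℝ) (e : ℝ) (c d : ℕ → ℝ)
    (hss : CMNSteadyState n m α φ kp km k hp' hm' h s e c d) :
    k ℓ * c ℓ + h p * d p = 0 := by
  obtain ⟨hS, hE, hC, hD⟩ := hss
  -- C' : complex equations simplify
  have hC' : ∀ i ∈ Finset.Icc 1 (n-1), kp i * s i * e = (km i + k i) * c i := by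
    intro i hi
    have := hC i hi
    have hz : (if i = α then
        ∑ j ∈ Finset.Icc 1 (m - 1), (-(hp' j) * s (φ j) * c α + (hm' j + h j) * d j)
        else 0) = 0 := by
      split
      · apply Finset.sum_eq_zero
        intro j hj
        have := hD j hj
        linarith
      · rfl
    rw [hz] at this
    linarith
  -- the vertex set we sum over
  set T : Finset ℕ := Icc 1 ℓ ∪ (Icc 1 p).image φ with hT
  have hTsub : T ⊆ Finset.Icc 1 n ∪ (Finset.Icc 1 m).image φ := by
    apply Finset.union_subset_union
    · exact Finset.Icc_subset_Icc_right hℓn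
    · exact Finset.image_subset_image (Finset.Icc_subset_Icc_right hpm)
  -- membership characterizations
  have hmemφ : ∀ j, 1 ≤ j → j ≤ m → (φ j ∈ T ↔ j ≤ p) := by
    intro j hj1 hjm
    constructor
    · intro hmem
      rcases Finset.mem_union.mp hmem with hl | hr
      · exact (hcompat j hj1 hjm).1 (Finset.mem_Icc.mp hl).2
      · obtain ⟨j', hj', hjj'⟩ := Finset.mem_image.mp hr
        have hj'p := Finset.mem_Icc.mp hj'
        have : j' = j := hφinj ⟨by exact_mod_cast hj'p.1, by omega⟩ ⟨hj1, hjm⟩ hjj'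
        omega
    · intro hjp
      exact Finset.mem_union_right _ (Finset.mem_image.mpr ⟨j, Finset.mem_Icc.mpr ⟨hj1, hjp⟩, rfl⟩)
  have hmemfwd : ∀ i, i ∈ T → i ∈ Finset.Icc 1 n → i ∈ Icc 1 ℓ := by
    intro i hiT hin
    have hin' := Finset.mem_Icc.mp hin
    rcases Finset.mem_union.mp hiT with hl | hr
    · exact hl
    · obtain ⟨j, hj, hji⟩ := Finset.mem_image.mp hr
      have hjp := Finset.mem_Icc.mp hj
      have := (hcompat j hjp.1 (by omega)).2 hjp.2 (by omega)
      refine Finset.mem_Icc.mpr ⟨?_, by omega⟩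
      have := hφpos j (Finset.mem_Icc.mpr ⟨hjp.1, by omega⟩)
      omega
  -- the simplified vertex equations
  have hstar : ∀ i ∈ T,
      (if i ∈ Finset.Icc 1 n then (k (i-1) * c (i-1) - k i * c i) else 0)
        + ∑ j ∈ Finset.Icc 1 (m - 1),
            ((if φ j = i then -(h j * d j) else 0)
              + (if φ (j + 1) = i then h j * d j else 0)) = 0 := by
    intro i hiT
    have hS' := hS i (hTsub hiT)
    have hback : ∀ j ∈ Finset.Icc 1 (m-1),
        ((if φ j = i then -(hp' j) * s i * c α + hm' j * d j else 0)
          + (if φ (j + 1) = i then h j * d j else 0))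
        = ((if φ j = i then -(h j * d j) else 0)
          + (if φ (j + 1) = i then h j * d j else 0)) := by
      intro j hj
      congr 1
      split
      · next heq =>
          have := hD j hj
          rw [← heq]
          linarith
      · rfl
    rw [Finset.sum_congr rfl hback] at hS'
    have hfwd : (if i ∈ Finset.Icc 1 n then Ffwd kp km k s e c i else 0)
        = (if i ∈ Finset.Icc 1 n then (k (i-1) * c (i-1) - k i * c i) else 0) := by
      split
      · next hin =>
          have hin' := Finset.mem_Icc.mp hin
          unfold Ffwd
          by_cases hieq : i = n
          · subst hieq
            rw [hkn, hkpn, hkmn]; ring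
          · have := hC' i (Finset.mem_Icc.mpr ⟨hin'.1, by omega⟩)
            linarith
      · rfl
    rw [hfwd] at hS'
    exact hS'
  -- sum them up
  have hsum : ∑ i ∈ T, ((if i ∈ Finset.Icc 1 n then (k (i-1) * c (i-1) - k i * c i) else 0)
        + ∑ j ∈ Finset.Icc 1 (m - 1),
            ((if φ j = i then -(h j * d j) else 0)
              + (if φ (j + 1) = i then h j * d j else 0))) = 0 :=
    Finset.sum_eq_zero hstar
  rw [Finset.sum_add_distrib] at hsum
  -- forward part
  have hfwdsum : ∑ i ∈ T, (if i ∈ Finset.Icc 1 n then (k (i-1) * c (i-1) - k i * c i) else 0)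
      = -(k ℓ * c ℓ) := by
    rw [Finset.sum_ite_mem]
    have : T ∩ Finset.Icc 1 n = Icc 1 ℓ := by
      ext i
      simp only [Finset.mem_inter]
      constructor
      · rintro ⟨h1, h2⟩; exact hmemfwd i h1 h2
      · intro hi
        have hi' := Finset.mem_Icc.mp hi
        exact ⟨Finset.mem_union_left _ hi, Finset.mem_Icc.mpr ⟨hi'.1, by omega⟩⟩
    rw [this, telesc (fun i => k i * c i) ℓ, hk0]
    ring
  -- backward part
  have hbacksum : ∑ i ∈ T, ∑ j ∈ Finset.Icc 1 (m - 1),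
      ((if φ j = i then -(h j * d j) else 0) + (if φ (j + 1) = i then h j * d j else 0))
      = -(h p * d p) := by
    rw [Finset.sum_comm]
    have hterm : ∀ j ∈ Finset.Icc 1 (m-1), ∑ i ∈ T,
        ((if φ j = i then -(h j * d j) else 0) + (if φ (j + 1) = i then h j * d j else 0))
        = (if j = p then -(h j * d j) else 0) := by
      intro j hj
      have hj' := Finset.mem_Icc.mp hj
      rw [Finset.sum_add_distrib, Finset.sum_ite_eq T (φ j), Finset.sum_ite_eq T (φ (j+1))]
      have h1 : (φ j ∈ T) ↔ j ≤ p := hmemφ j hj'.1 (by omega)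
      have h2 : (φ (j+1) ∈ T) ↔ j + 1 ≤ p := hmemφ (j+1) (by omega) (by omega)
      by_cases hc1 : j ≤ p
      · by_cases hc2 : j + 1 ≤ p
        · rw [if_pos (h1.mpr hc1), if_pos (h2.mpr hc2), if_neg (by omega)]; ring
        · rw [if_pos (h1.mpr hc1), if_neg (by rw [h2]; omega), if_pos (by omega)]; ring
      · rw [if_neg (by rw [h1]; omega), if_neg (by rw [h2]; omega), if_neg (by omega)]; ring
    rw [Finset.sum_congr rfl hterm]
    by_cases hp1 : 1 ≤ p ∧ p ≤ m - 1
    · rw [Finset.sum_ite_eq' (Icc 1 (m-1)) p (fun j => -(h j * d j))]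
      · rw [if_pos (Finset.mem_Icc.mpr hp1)]
    · have : ∀ j ∈ Finset.Icc 1 (m-1), (if j = p then -(h j * d j) else 0) = 0 := by
        intro j hj
        have hj' := Finset.mem_Icc.mp hj
        rw [if_neg (by omega)]
      rw [Finset.sum_congr rfl this, Finset.sum_const, smul_zero]
      have : p = 0 ∨ p = m := by omega
      rcases this with h0 | hmm
      · rw [h0, hh0]; ring
      · rw [hmm, hhm]; ring
  rw [hfwdsum, hbacksum] at hsum
  linarith

/-- Downward closure helper. -/
lemma down_closed (S : Set ℕ) (N : ℕ)
    (hcl : ∀ i, 1 ≤ i → i + 1 ≤ N → (i + 1) ∈ S → i ∈ S)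
    (ℓ : ℕ) (hℓN : ℓ ≤ N) (hℓS : ℓ ∈ S) :
    ∀ i, 1 ≤ i → i ≤ ℓ → i ∈ S := by
  have key : ∀ t : ℕ, 1 ≤ ℓ - t → (ℓ - t) ∈ S := by
    intro t
    induction t with
    | zero => intro _; simpa using hℓS
    | succ u ih =>
        intro hu
        have h1 : ℓ - u = (ℓ - (u+1)) + 1 := by omega
        exact hcl _ hu (by omega) (by rw [← h1]; exact ih (by omega))
  intro i hi1 hiℓ
  have := key (ℓ - i) (by omega)
  simpa [Nat.sub_sub_self hiℓ] using this

lemma exists_compat (n m : ℕ) (φ : ℕ → ℕ)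
    (hφpos : ∀ j ∈ Finset.Icc 1 m, 1 ≤ φ j)
    (hnsc : ¬ AuxStronglyConnected n m φ) :
    ∃ ℓ p, ℓ ≤ n ∧ p ≤ m ∧ 1 ≤ ℓ + p ∧ ¬(ℓ = n ∧ p = m) ∧
      (∀ j, 1 ≤ j → j ≤ m → (φ j ≤ ℓ → j ≤ p) ∧ (j ≤ p → φ j ≤ n → φ j ≤ ℓ)) := by
  classical
  simp only [AuxStronglyConnected, not_forall] at hnsc
  obtain ⟨a, ha, b, hb, hab⟩ := hnsc
  set R : Set ℕ := {x | Relation.ReflTransGen (AuxEdge n m φ) x b} with hR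
  have hbR : b ∈ R := Relation.ReflTransGen.refl
  have haR : a ∉ R := hab
  have hclosed : ∀ x y, AuxEdge n m φ x y → y ∈ R → x ∈ R := by
    intro x y hxy hyR
    exact Relation.ReflTransGen.head hxy hyR
  -- R ∩ [1,n] is downward closed
  have hRdown : ∀ i, 1 ≤ i → i + 1 ≤ n → (i + 1) ∈ R → i ∈ R := by
    intro i h1 h2 h3
    exact hclosed i (i+1) (Or.inl ⟨rfl, h1, h2⟩) h3
  -- {j | φ j ∈ R} ∩ [1,m] is downward closed
  have hPdown : ∀ j, 1 ≤ j → j + 1 ≤ m → φ (j + 1) ∈ R → φ j ∈ R := by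
    intro j h1 h2 h3
    exact hclosed (φ j) (φ (j+1)) (Or.inr ⟨j, h1, h2, rfl, rfl⟩) h3
  set F : Finset ℕ := (Icc 1 n).filter (fun i => i ∈ R) with hF
  set P : Finset ℕ := (Icc 1 m).filter (fun j => φ j ∈ R) with hP
  set ℓ : ℕ := if hFe : F.Nonempty then F.max' hFe else 0 with hℓ
  set p : ℕ := if hPe : P.Nonempty then P.max' hPe else 0 with hp
  have hℓn : ℓ ≤ n := by
    rw [hℓ]; split
    · next hFe => have := Finset.mem_Icc.mp (Finset.mem_filter.mp (F.max'_mem hFe)).1; omega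
    · omega
  have hpm : p ≤ m := by
    rw [hp]; split
    · next hPe => have := Finset.mem_Icc.mp (Finset.mem_filter.mp (P.max'_mem hPe)).1; omega
    · omega
  -- characterizations
  have char1 : ∀ i, 1 ≤ i → i ≤ n → (i ∈ R ↔ i ≤ ℓ) := by
    intro i h1 h2
    constructor
    · intro hiR
      have hiF : i ∈ F := by rw [hF]; simp only [Finset.mem_filter, Finset.mem_Icc]; exact ⟨⟨h1,h2⟩, hiR⟩
      have hFe : F.Nonempty := ⟨i, hiF⟩
      rw [hℓ, dif_pos hFe]
      exact F.le_max' i hiF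
    · intro hiℓ
      by_cases hFe : F.Nonempty
      · have hmax := (Finset.mem_filter.mp (F.max'_mem hFe)).2
        have hℓ' : ℓ = F.max' hFe := by rw [hℓ, dif_pos hFe]
        exact down_closed R n hRdown ℓ hℓn (by rw [hℓ']; exact hmax) i h1 hiℓ
      · rw [hℓ, dif_neg hFe] at hiℓ; omega
  have char2 : ∀ j, 1 ≤ j → j ≤ m → (φ j ∈ R ↔ j ≤ p) := by
    intro j h1 h2
    constructor
    · intro hjR
      have hjP : j ∈ P := by rw [hP]; simp only [Finset.mem_filter, Finset.mem_Icc]; exact ⟨⟨h1,h2⟩, hjR⟩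
      have hPe : P.Nonempty := ⟨j, hjP⟩
      rw [hp, dif_pos hPe]
      exact P.le_max' j hjP
    · intro hjp
      by_cases hPe : P.Nonempty
      · have hmax := (Finset.mem_filter.mp (P.max'_mem hPe)).2
        have hp' : p = P.max' hPe := by rw [hp, dif_pos hPe]
        exact down_closed {j | φ j ∈ R} m hPdown p hpm (by rw [hp']; exact hmax) j h1 hjp
      · rw [hp, dif_neg hPe] at hjp; omega
  refine ⟨ℓ, p, hℓn, hpm, ?_, ?_, ?_⟩
  · -- nonempty: b ∈ R gives ℓ ≥ 1 or p ≥ 1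
    rcases Finset.mem_union.mp hb with hbn | hbi
    · have h' := Finset.mem_Icc.mp hbn
      have := (char1 b h'.1 h'.2).mp hbR
      omega
    · obtain ⟨j, hj, hjb⟩ := Finset.mem_image.mp hbi
      have hj' := Finset.mem_Icc.mp hj
      have := (char2 j hj'.1 hj'.2).mp (by rw [hjb]; exact hbR)
      omega
  · -- not both max: a ∉ R
    rintro ⟨hℓn', hpm'⟩
    rcases Finset.mem_union.mp ha with han | hai
    · have h' := Finset.mem_Icc.mp han
      exact haR ((char1 a h'.1 h'.2).mpr (by omega))
    · obtain ⟨j, hj, hja⟩ := Finset.mem_image.mp hai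
      have hj' := Finset.mem_Icc.mp hj
      exact haR (by rw [← hja]; exact (char2 j hj'.1 hj'.2).mpr (by omega))
  · -- compatibility
    intro j h1 h2
    constructor
    · intro hφℓ
      have hφ1 := hφpos j (Finset.mem_Icc.mpr ⟨h1, h2⟩)
      exact (char2 j h1 h2).mp ((char1 (φ j) hφ1 (by omega)).mpr hφℓ)
    · intro hjp hφn
      have hφ1 := hφpos j (Finset.mem_Icc.mpr ⟨h1, h2⟩)
      exact (char1 (φ j) hφ1 hφn).mp ((char2 j h1 h2).mpr hjp)


lemma cmn_core (n m α : ℕ) (hn : 2 ≤ n) (hm : 2 ≤ m)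
    (φ : ℕ → ℕ) (hφinj : Set.InjOn φ (Set.Icc 1 m))
    (hφpos : ∀ j ∈ Finset.Icc 1 m, 1 ≤ φ j)
    (hnsc : ¬ AuxStronglyConnected n m φ)
    (kp km k hp' hm' h : ℕ → ℝ)
    (hkpos : ∀ i ∈ Finset.Icc 1 (n - 1), 0 < kp i ∧ 0 < km i ∧ 0 < k i)
    (hhpos : ∀ j ∈ Finset.Icc 1 (m - 1), 0 < hp' j ∧ 0 < hm' j ∧ 0 < h j)
    (hk0 : k 0 = 0) (hkn : k n = 0) (hkpn : kp n = 0) (hkmn : km n = 0)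
    (hh0 : h 0 = 0) (hhm : h m = 0) :
    ∃ ℓ ∈ Finset.Icc 1 n, ∃ p ∈ Finset.Icc 1 m, ¬(ℓ = n ∧ p = m) ∧
      ∀ (s : ℕ → ℝ) (e : ℝ) (c d : ℕ → ℝ),
        (∀ i ∈ Finset.Icc 1 (n-1), 0 ≤ c i) → (∀ j ∈ Finset.Icc 1 (m-1), 0 ≤ d j) →
        CMNSteadyState n m α φ kp km k hp' hm' h s e c d →
        k ℓ * c ℓ + h p * d p = 0
          ∧ ((ℓ < n ∧ c ℓ = 0) ∨ (p < m ∧ d p = 0)) := by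
  obtain ⟨ℓ', p', hℓ'n, hp'm, hsum1, hne, hcompat⟩ := exists_compat n m φ hφpos hnsc
  -- degenerate helper: if every φ j exceeds n, the pair (1, m) works
  have deg : (∀ j, 1 ≤ j → j ≤ m → n < φ j) →
      ∃ ℓ ∈ Finset.Icc 1 n, ∃ p ∈ Finset.Icc 1 m, ¬(ℓ = n ∧ p = m) ∧
      ∀ (s : ℕ → ℝ) (e : ℝ) (c d : ℕ → ℝ),
        (∀ i ∈ Finset.Icc 1 (n-1), 0 ≤ c i) → (∀ j ∈ Finset.Icc 1 (m-1), 0 ≤ d j) →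
        CMNSteadyState n m α φ kp km k hp' hm' h s e c d →
        k ℓ * c ℓ + h p * d p = 0
          ∧ ((ℓ < n ∧ c ℓ = 0) ∨ (p < m ∧ d p = 0)) := by
    intro hbig
    have hcompat10 : ∀ j, 1 ≤ j → j ≤ m →
        (φ j ≤ 1 → j ≤ 0) ∧ (j ≤ 0 → φ j ≤ n → φ j ≤ 1) := by
      intro j h1 h2
      exact ⟨fun hφ => absurd (hbig j h1 h2) (by omega), fun h0 => by omega⟩
    refine ⟨1, Finset.mem_Icc.mpr ⟨le_refl 1, by omega⟩, m,
      Finset.mem_Icc.mpr ⟨by omega, le_refl m⟩, by omega, ?_⟩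
    intro s e c d hc hd hss
    have key := sum_key n m α hn φ hφinj hφpos kp km k hp' hm' h
      hk0 hkn hkpn hkmn hh0 hhm 1 0 (by omega) (by omega) hcompat10 s e c d hss
    rw [hh0] at key
    have hk1 : 0 < k 1 := (hkpos 1 (Finset.mem_Icc.mpr ⟨le_refl 1, by omega⟩)).2.2
    have hc1 : c 1 = 0 := by
      have : k 1 * c 1 = 0 := by linarith
      exact by
        rcases mul_eq_zero.mp this with h' | h'
        · exact absurd h' (ne_of_gt hk1)
        · exact h'
    refine ⟨by rw [hc1, hhm]; ring, Or.inl ⟨by omega, hc1⟩⟩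
  by_cases hℓ0 : ℓ' = 0
  · -- ℓ' = 0, hence p' ≥ 1
    subst hℓ0
    by_cases hp'm' : p' = m
    · -- all φ j > n
      apply deg
      intro j h1 h2
      have := (hcompat j h1 h2).2 (by omega)
      have := hφpos j (Finset.mem_Icc.mpr ⟨h1, h2⟩)
      omega
    · -- p' < m : use (n, p')
      refine ⟨n, Finset.mem_Icc.mpr ⟨by omega, le_refl n⟩, p',
        Finset.mem_Icc.mpr ⟨by omega, hp'm⟩, by omega, ?_⟩
      intro s e c d hc hd hss
      have key := sum_key n m α hn φ hφinj hφpos kp km k hp' hm' h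
        hk0 hkn hkpn hkmn hh0 hhm 0 p' (by omega) hp'm hcompat s e c d hss
      rw [hk0] at key
      have hhp : 0 < h p' := (hhpos p' (Finset.mem_Icc.mpr ⟨by omega, by omega⟩)).2.2
      have hdp : d p' = 0 := by
        have : h p' * d p' = 0 := by linarith
        rcases mul_eq_zero.mp this with h' | h'
        · exact absurd h' (ne_of_gt hhp)
        · exact h'
      refine ⟨by rw [hdp, hkn]; ring, Or.inr ⟨by omega, hdp⟩⟩
  · by_cases hp0 : p' = 0
    · -- p' = 0, ℓ' ≥ 1
      subst hp0
      by_cases hℓ'n' : ℓ' = n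
      · apply deg
        intro j h1 h2
        by_contra hcon
        have := (hcompat j h1 h2).1 (by omega)
        omega
      · -- ℓ' < n : use (ℓ', m)
        refine ⟨ℓ', Finset.mem_Icc.mpr ⟨by omega, hℓ'n⟩, m,
          Finset.mem_Icc.mpr ⟨by omega, le_refl m⟩, by omega, ?_⟩
        intro s e c d hc hd hss
        have key := sum_key n m α hn φ hφinj hφpos kp km k hp' hm' h
          hk0 hkn hkpn hkmn hh0 hhm ℓ' 0 hℓ'n (by omega) hcompat s e c d hss
        rw [hh0] at key
        have hkl : 0 < k ℓ' := (hkpos ℓ' (Finset.mem_Icc.mpr ⟨by omega, by omega⟩)).2.2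
        have hcl : c ℓ' = 0 := by
          have : k ℓ' * c ℓ' = 0 := by linarith
          rcases mul_eq_zero.mp this with h' | h'
          · exact absurd h' (ne_of_gt hkl)
          · exact h'
        refine ⟨by rw [hcl, hhm]; ring, Or.inl ⟨by omega, hcl⟩⟩
    · -- main case : 1 ≤ ℓ', 1 ≤ p'
      refine ⟨ℓ', Finset.mem_Icc.mpr ⟨by omega, hℓ'n⟩, p',
        Finset.mem_Icc.mpr ⟨by omega, hp'm⟩, hne, ?_⟩
      intro s e c d hc hd hss
      have key := sum_key n m α hn φ hφinj hφpos kp km k hp' hm' h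
        hk0 hkn hkpn hkmn hh0 hhm ℓ' p' hℓ'n hp'm hcompat s e c d hss
      have hknn : 0 ≤ k ℓ' * c ℓ' := by
        by_cases hℓ'n' : ℓ' = n
        · rw [hℓ'n', hkn]; simp
        · exact mul_nonneg
            (le_of_lt (hkpos ℓ' (Finset.mem_Icc.mpr ⟨by omega, by omega⟩)).2.2)
            (hc ℓ' (Finset.mem_Icc.mpr ⟨by omega, by omega⟩))
      have hhnn : 0 ≤ h p' * d p' := by
        by_cases hp'm' : p' = m
        · rw [hp'm', hhm]; simp
        · exact mul_nonneg
            (le_of_lt (hhpos p' (Finset.mem_Icc.mpr ⟨by omega, by omega⟩)).2.2)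
            (hd p' (Finset.mem_Icc.mpr ⟨by omega, by omega⟩))
      refine ⟨key, ?_⟩
      rcases not_and_or.mp hne with hcase | hcase
      · -- ℓ' < n, so c ℓ' = 0
        have hkl : 0 < k ℓ' := (hkpos ℓ' (Finset.mem_Icc.mpr ⟨by omega, by omega⟩)).2.2
        have : k ℓ' * c ℓ' = 0 := by linarith
        rcases mul_eq_zero.mp this with h' | h'
        · exact absurd h' (ne_of_gt hkl)
        · exact Or.inl ⟨by omega, h'⟩
      · -- p' < m, so d p' = 0
        have hhp : 0 < h p' := (hhpos p' (Finset.mem_Icc.mpr ⟨by omega, by omega⟩)).2.2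
        have : h p' * d p' = 0 := by linarith
        rcases mul_eq_zero.mp this with h' | h'
        · exact absurd h' (ne_of_gt hhp)
        · exact Or.inr ⟨by omega, h'⟩

/-- If the auxiliary graph `N_G` of the covalent modification
network `(n, m, φ)` is not strongly connected, then for any choice of positive
rate constants the network has no positive steady state: there exist `ℓ ≤ n` and
`p ≤ m` (not both `ℓ = n` and `p = m`) such that at every nonnegative steady
state `k ℓ * c ℓ + h p * d p = 0`, forcing a species concentration (`c ℓ` with
`ℓ < n`, or `d p` with `p < m`) to vanish. -/
theorem cmn_not_strongly_connected_no_positive_steady_state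
    (n m α : ℕ) (hn : 2 ≤ n) (hm : 2 ≤ m) (hα : α ∈ Finset.Icc 1 (n - 1))
    (φ : ℕ → ℕ) (hφinj : Set.InjOn φ (Set.Icc 1 m))
    (hφpos : ∀ j ∈ Finset.Icc 1 m, 1 ≤ φ j)
    (hnsc : ¬ AuxStronglyConnected n m φ)
    (kp km k hp' hm' h : ℕ → ℝ)
    (hkpos : ∀ i ∈ Finset.Icc 1 (n - 1), 0 < kp i ∧ 0 < km i ∧ 0 < k i)
    (hhpos : ∀ j ∈ Finset.Icc 1 (m - 1), 0 < hp' j ∧ 0 < hm' j ∧ 0 < h j)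
    (hk0 : k 0 = 0) (hkn : k n = 0) (hkpn : kp n = 0) (hkmn : km n = 0)
    (hh0 : h 0 = 0) (hhm : h m = 0) :
    (¬ ∃ s e c d, CMNPositive n m φ s e c d
        ∧ CMNSteadyState n m α φ kp km k hp' hm' h s e c d)
    ∧ ∃ ℓ ∈ Finset.Icc 1 n, ∃ p ∈ Finset.Icc 1 m, ¬(ℓ = n ∧ p = m) ∧
        ∀ (s : ℕ → ℝ) (e : ℝ) (c d : ℕ → ℝ),
          (∀ i, 0 ≤ s i) → 0 ≤ e → (∀ i, 0 ≤ c i) → (∀ j, 0 ≤ d j) →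
          CMNSteadyState n m α φ kp km k hp' hm' h s e c d →
          k ℓ * c ℓ + h p * d p = 0
            ∧ ((ℓ < n ∧ c ℓ = 0) ∨ (p < m ∧ d p = 0)) := by
  have core := cmn_core n m α hn hm φ hφinj hφpos hnsc kp km k hp' hm' h
    hkpos hhpos hk0 hkn hkpn hkmn hh0 hhm
  obtain ⟨ℓ, hℓ, p, hp, hne, hkey⟩ := core
  constructor
  · rintro ⟨s, e, c, d, hpos, hss⟩
    obtain ⟨hspos, hepos, hcpos, hdpos⟩ := hpos
    have hcn : ∀ i ∈ Finset.Icc 1 (n-1), 0 ≤ c i := fun i hi => le_of_lt (hcpos i hi)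
    have hdn : ∀ j ∈ Finset.Icc 1 (m-1), 0 ≤ d j := fun j hj => le_of_lt (hdpos j hj)
    obtain ⟨-, hor⟩ := hkey s e c d hcn hdn hss
    have hℓ' := Finset.mem_Icc.mp hℓ
    have hp' := Finset.mem_Icc.mp hp
    rcases hor with ⟨hlt, h0⟩ | ⟨hlt, h0⟩
    · have := hcpos ℓ (Finset.mem_Icc.mpr ⟨hℓ'.1, by omega⟩)
      rw [h0] at this; exact lt_irrefl 0 this
    · have := hdpos p (Finset.mem_Icc.mpr ⟨hp'.1, by omega⟩)
      rw [h0] at this; exact lt_irrefl 0 this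
  · refine ⟨ℓ, hℓ, p, hp, hne, ?_⟩
    intro s e c d hs he hc hd hss
    exact hkey s e c d (fun i _ => hc i) (fun j _ => hd j) hss
end

section
/- For the n-site futile cycle with bifunctional enzyme C_α, at every positive steady state the concentrations satisfy the explicit parameterization s_i = k_α h*_{n−α} (σ^{i−1↓1}/σ^{α↓1}) u^{i−α−1} for i ∈ [1,n], c_i = (μ^{i−1↓1}/μ^{α−1↓1}) e u^{i−α−1} for i ∈ [1,n−1], and d_j = (k_α/h_{n−α})(ν^{n−2↓j}/ν^{n−2↓n−α}) e u^{n−j−α−1} for j ∈ [1,n−1], where u = e/c_α, σ_i = h*_{n−i}/k*_i, μ_i = k_i h*_{n−i}/(k_{i+1} k*_{i+1}), ν_i = h_{i+1} h*_{i+1}/(h_i k*_{n−i}), and υ^{i↓j} denotes the product υ_i υ_{i−1} ⋯ υ_j (equal to 1 if i < j). Conversely, any strictly positive vector of this form (for any e, u > 0) is a positive steady state. -/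
open Finset

/-- `k* i = (k i + km i) / (k i * kp i)`. -/
noncomputable def kst (kp km k : ℕ → ℝ) (i : ℕ) : ℝ := (k i + km i) / (k i * kp i)
/-- `h* j = (h j + hm j) / (h j * hp j)`. -/
noncomputable def hst (hp hm h : ℕ → ℝ) (j : ℕ) : ℝ := (h j + hm j) / (h j * hp j)
/-- `σ i = h* (n-i) / k* i`. -/
noncomputable def sigC (n : ℕ) (kp km k hp hm h : ℕ → ℝ) (i : ℕ) : ℝ :=
  hst hp hm h (n - i) / kst kp km k i
/-- `μ i = k i * h* (n-i) / (k (i+1) * k* (i+1))`. -/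
noncomputable def muC (n : ℕ) (kp km k hp hm h : ℕ → ℝ) (i : ℕ) : ℝ :=
  k i * hst hp hm h (n - i) / (k (i + 1) * kst kp km k (i + 1))
/-- `ν i = h (i+1) * h* (i+1) / (h i * k* (n-i))`. -/
noncomputable def nuC (n : ℕ) (kp km k hp hm h : ℕ → ℝ) (i : ℕ) : ℝ :=
  h (i + 1) * hst hp hm h (i + 1) / (h i * kst kp km k (n - i))

/-- Parameterized substrate concentration
`s i = k α * h* (n-α) * (σ^{i-1↓1} / σ^{α↓1}) * u^(i-α-1)`. -/
noncomputable def sParam (n α : ℕ) (kp km k hp hm h : ℕ → ℝ) (u : ℝ) (i : ℕ) : ℝ :=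
  k α * hst hp hm h (n - α)
    * ((∏ x ∈ Finset.Icc 1 (i - 1), sigC n kp km k hp hm h x)
        / (∏ x ∈ Finset.Icc 1 α, sigC n kp km k hp hm h x))
    * u ^ ((i : ℤ) - α - 1)
/-- Parameterized complex concentration
`c i = (μ^{i-1↓1} / μ^{α-1↓1}) * e * u^(i-α-1)`. -/
noncomputable def cParam (n α : ℕ) (kp km k hp hm h : ℕ → ℝ) (e u : ℝ) (i : ℕ) : ℝ :=
  ((∏ x ∈ Finset.Icc 1 (i - 1), muC n kp km k hp hm h x)
      / (∏ x ∈ Finset.Icc 1 (α - 1), muC n kp km k hp hm h x))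
    * e * u ^ ((i : ℤ) - α - 1)
/-- Parameterized complex concentration
`d j = (k α / h (n-α)) * (ν^{n-2↓j} / ν^{n-2↓n-α}) * e * u^(n-j-α-1)`. -/
noncomputable def dParam (n α : ℕ) (kp km k hp hm h : ℕ → ℝ) (e u : ℝ) (j : ℕ) : ℝ :=
  (k α / h (n - α))
    * ((∏ x ∈ Finset.Icc j (n - 2), nuC n kp km k hp hm h x)
        / (∏ x ∈ Finset.Icc (n - α) (n - 2), nuC n kp km k hp hm h x))
    * e * u ^ ((n : ℤ) - j - α - 1)

/-!
At a positive steady state every complex is in quasi-equilibrium with its substrates,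
`s i e = k i k*_i c i` and `s (n + 1 - j) c α = h j h*_j d j`, and the substrate balances
telescope to zero net flux `k i c i = h (n - i) d (n - i)` through each conversion
`S i → S (i + 1)`. Together these give the recurrence `s (i + 1) = σ i u s i` with
`u = e / c α`, so a steady state is determined by `e` and `c α`, hence equals the
parameterized vector with this `u`. Conversely, the coordinates of the parameterized vector
obey first-order recurrences with ratios `σ i u`, `μ i u` and `ν j u`, so each of the three
relations only has to be checked at the index `α`.
-/

lemma eqOn_Icc_of_succ_eq_mul {M : Type*} [MonoidWithZero M] [IsLeftCancelMulZero M]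
    {f g r : ℕ → M} {a b m : ℕ}
    (hr : ∀ i ∈ Ico a b, r i ≠ 0) (hf : ∀ i ∈ Ico a b, f (i + 1) = r i * f i)
    (hg : ∀ i ∈ Ico a b, g (i + 1) = r i * g i) (hm : m ∈ Icc a b) (hfg : f m = g m) :
    Set.EqOn f g (Icc a b) := by
  intro i hi
  simp only [coe_Icc, Set.mem_Icc, mem_Icc, mem_Ico] at hi hm hr hf hg
  rcases le_total m i with hmi | him
  · induction i, hmi using Nat.le_induction with
    | base => exact hfg
    | succ i hmi ih => rw [hf i (by omega), hg i (by omega), ih (by omega)]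
  · induction him using Nat.decreasingInduction with
    | self => exact hfg
    | of_succ i hi' ih =>
      have h := ih (by omega)
      rw [hf i (by omega), hg i (by omega)] at h
      exact mul_left_cancel₀ (hr i (by omega)) h

lemma sum_ite_tsub_eq {M : Type*} [AddCommMonoid M] (f : ℕ → M) {a i m : ℕ} (hm : m ≤ a)
    (hi : i ≤ a) :
    ∑ j ∈ Icc 1 m, (if a - j = i then f j else 0)
      = if a - i ∈ Icc 1 m then f (a - i) else 0 := by
  rw [← sum_ite_eq]
  refine sum_congr rfl fun j hj => if_congr ?_ rfl rfl
  have := (mem_Icc.1 hj).2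
  omega

lemma union_image_rev_Icc (n : ℕ) :
    Icc 1 n ∪ (Icc 1 n).image (fun j => n + 1 - j) = Icc 1 n :=
  union_eq_left.2 <| image_subset_iff.2 fun j hj => by simp only [mem_Icc] at hj ⊢; omega

section SteadyState

variable {n α : ℕ} {kp km k hp hm h s : ℕ → ℝ} {e : ℝ} {c d : ℕ → ℝ}

/-- Net flux `S i → S (i + 1)`: forward through `C i`, backward through `D (n - i)`. -/
noncomputable def netFlux (n : ℕ) (k h c d : ℕ → ℝ) (i : ℕ) : ℝ :=
  if i ∈ Icc 1 (n - 1) then k i * c i - h (n - i) * d (n - i) else 0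

/-- The steady-state equations of the futile cycle, with the substrate balances telescoped. -/
structure FutileBalanced (n α : ℕ) (kp km k hp hm h s : ℕ → ℝ)
    (e : ℝ) (c d : ℕ → ℝ) : Prop where
  complex_c : ∀ i ∈ Icc 1 (n - 1), kp i * s i * e = (km i + k i) * c i
  complex_d : ∀ j ∈ Icc 1 (n - 1), hp j * s (n + 1 - j) * c α = (hm j + h j) * d j
  flux : ∀ i ∈ Icc 1 (n - 1), k i * c i = h (n - i) * d (n - i)

lemma substrate_sum_eq {M : Type*} [AddCommMonoid M] (F G : ℕ → M) {n i : ℕ}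
    (hi : i ∈ Icc 1 n) :
    ∑ j ∈ Icc 1 (n - 1),
        ((if n + 1 - j = i then F j else 0) + (if n + 1 - (j + 1) = i then G j else 0))
      = (if 2 ≤ i then F (n + 1 - i) else 0) + (if i < n then G (n - i) else 0) := by
  rw [mem_Icc] at hi
  simp only [sum_add_distrib, Nat.add_sub_add_right]
  rw [sum_ite_tsub_eq _ (by omega) (by omega), sum_ite_tsub_eq _ (by omega) (by omega)]
  congr 1 <;> exact if_congr (by rw [mem_Icc]; omega) rfl rfl

lemma substrate_balance_eq (hk0 : k 0 = 0) (hkpn : kp n = 0) (hkmn : km n = 0)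
    (hC : ∀ i ∈ Icc 1 (n - 1), kp i * s i * e = (km i + k i) * c i)
    (hD : ∀ j ∈ Icc 1 (n - 1), hp j * s (n + 1 - j) * c α = (hm j + h j) * d j)
    {i : ℕ} (hi : i ∈ Icc 1 n) :
    Ffwd kp km k s e c i + ∑ j ∈ Icc 1 (n - 1),
        ((if n + 1 - j = i then -(hp j) * s i * c α + hm j * d j else 0)
          + (if n + 1 - (j + 1) = i then h j * d j else 0))
      = netFlux n k h c d (i - 1) - netFlux n k h c d i := by
  rw [substrate_sum_eq _ _ hi]
  rw [mem_Icc] at hi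
  have inflow : k (i - 1) * c (i - 1)
      + (if 2 ≤ i then -(hp (n + 1 - i)) * s i * c α + hm (n + 1 - i) * d (n + 1 - i) else 0)
      = netFlux n k h c d (i - 1) := by
    by_cases h2 : 2 ≤ i
    · have hDi := hD (n + 1 - i) (mem_Icc.2 ⟨by omega, by omega⟩)
      rw [show n + 1 - (n + 1 - i) = i by omega] at hDi
      rw [if_pos h2, netFlux, if_pos (mem_Icc.2 ⟨by omega, by omega⟩),
        show n - (i - 1) = n + 1 - i by omega]
      linarith
    · obtain rfl : i = 1 := by omega
      simp [netFlux, hk0]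
  have outflow : -(kp i) * s i * e + km i * c i + (if i < n then h (n - i) * d (n - i) else 0)
      = -netFlux n k h c d i := by
    by_cases hin : i < n
    · have hCi := hC i (mem_Icc.2 ⟨by omega, by omega⟩)
      rw [if_pos hin, netFlux, if_pos (mem_Icc.2 ⟨by omega, by omega⟩)]
      linarith
    · obtain rfl : i = n := by omega
      rw [if_neg hin, netFlux, if_neg (by rw [mem_Icc]; omega), hkpn, hkmn]
      ring
  rw [Ffwd]
  linear_combination inflow + outflow

lemma FutileBalanced.netFlux_eq_zero (hbal : FutileBalanced n α kp km k hp hm h s e c d)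
    (i : ℕ) :
    netFlux n k h c d i = 0 := by
  unfold netFlux
  split_ifs with hi
  · rw [hbal.flux i hi, sub_self]
  · rfl

theorem cmnSteadyState_iff_futileBalanced (hk0 : k 0 = 0) (hkpn : kp n = 0) (hkmn : km n = 0) :
    CMNSteadyState n n α (fun j => n + 1 - j) kp km k hp hm h s e c d
      ↔ FutileBalanced n α kp km k hp hm h s e c d := by
  rw [CMNSteadyState, union_image_rev_Icc]
  constructor
  · rintro ⟨hS, -, hC, hD⟩
    have complex_d : ∀ j ∈ Icc 1 (n - 1), hp j * s (n + 1 - j) * c α = (hm j + h j) * d j :=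
      fun j hj => by linarith [hD j hj]
    have complex_c : ∀ i ∈ Icc 1 (n - 1), kp i * s i * e = (km i + k i) * c i := by
      intro i hi
      have hCi := hC i hi
      rw [sum_eq_zero fun j hj => by linarith [complex_d j hj], ite_self] at hCi
      linarith
    have hconst : ∀ i ∈ Icc 1 n, netFlux n k h c d (i - 1) = netFlux n k h c d i := by
      intro i hi
      have hSi := hS i hi
      rw [if_pos hi, substrate_balance_eq hk0 hkpn hkmn complex_c complex_d hi] at hSi
      linarith
    have hzero : ∀ i ≤ n, netFlux n k h c d i = 0 := by
      intro i
      induction i with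
      | zero => exact fun _ => if_neg (by simp)
      | succ i ih =>
        exact fun hi => (hconst (i + 1) (mem_Icc.2 ⟨by omega, hi⟩)).symm.trans (ih (by omega))
    refine ⟨complex_c, complex_d, fun i hi => ?_⟩
    have := hzero i (by rw [mem_Icc] at hi; omega)
    rw [netFlux, if_pos hi] at this
    linarith
  · intro hbal
    refine ⟨fun i hi => ?_, sum_eq_zero fun i hi => ?_, fun i hi => ?_, fun j hj => ?_⟩
    · rw [if_pos hi, substrate_balance_eq hk0 hkpn hkmn hbal.complex_c hbal.complex_d hi,
        hbal.netFlux_eq_zero, hbal.netFlux_eq_zero, sub_zero]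
    · linarith [hbal.complex_c i hi]
    · rw [sum_eq_zero fun j hj => by linarith [hbal.complex_d j hj], ite_self]
      linarith [hbal.complex_c i hi]
    · linarith [hbal.complex_d j hj]

end SteadyState

section Rates

variable {n : ℕ} {kp km k hp hm h : ℕ → ℝ}
  (hk : ∀ i ∈ Icc 1 (n - 1), 0 < kp i ∧ 0 < km i ∧ 0 < k i)
  (hh : ∀ j ∈ Icc 1 (n - 1), 0 < hp j ∧ 0 < hm j ∧ 0 < h j)

include hk in
lemma kst_pos {i : ℕ} (hi : i ∈ Icc 1 (n - 1)) : 0 < kst kp km k i :=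
  let ⟨hkp, hkm, hki⟩ := hk i hi
  div_pos (add_pos hki hkm) (mul_pos hki hkp)

include hk in
lemma mul_kst {i : ℕ} (hi : i ∈ Icc 1 (n - 1)) : kp i * (k i * kst kp km k i) = km i + k i := by
  obtain ⟨hkp, -, hki⟩ := hk i hi
  rw [kst, mul_div_assoc', mul_div_assoc', div_eq_iff (by positivity)]
  ring

include hh in
lemma hst_pos {j : ℕ} (hj : j ∈ Icc 1 (n - 1)) : 0 < hst hp hm h j :=
  let ⟨hhp, hhm, hhj⟩ := hh j hj
  div_pos (add_pos hhj hhm) (mul_pos hhj hhp)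

include hh in
lemma mul_hst {j : ℕ} (hj : j ∈ Icc 1 (n - 1)) : hp j * (h j * hst hp hm h j) = hm j + h j := by
  obtain ⟨hhp, -, hhj⟩ := hh j hj
  rw [hst, mul_div_assoc', mul_div_assoc', div_eq_iff (by positivity)]
  ring

include hk hh

lemma sigC_pos {i : ℕ} (hi : i ∈ Icc 1 (n - 1)) : 0 < sigC n kp km k hp hm h i := by
  rw [mem_Icc] at hi
  exact div_pos (hst_pos hh (mem_Icc.2 ⟨by omega, by omega⟩)) (kst_pos hk (mem_Icc.2 hi))

lemma muC_pos {i : ℕ} (hi : i ∈ Icc 1 (n - 2)) : 0 < muC n kp km k hp hm h i := by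
  rw [mem_Icc] at hi
  exact div_pos (mul_pos (hk i (mem_Icc.2 ⟨by omega, by omega⟩)).2.2
      (hst_pos hh (mem_Icc.2 ⟨by omega, by omega⟩)))
    (mul_pos (hk (i + 1) (mem_Icc.2 ⟨by omega, by omega⟩)).2.2
      (kst_pos hk (mem_Icc.2 ⟨by omega, by omega⟩)))

lemma nuC_pos {i : ℕ} (hi : i ∈ Icc 1 (n - 2)) : 0 < nuC n kp km k hp hm h i := by
  rw [mem_Icc] at hi
  exact div_pos (mul_pos (hh (i + 1) (mem_Icc.2 ⟨by omega, by omega⟩)).2.2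
      (hst_pos hh (mem_Icc.2 ⟨by omega, by omega⟩)))
    (mul_pos (hh i (mem_Icc.2 ⟨by omega, by omega⟩)).2.2
      (kst_pos hk (mem_Icc.2 ⟨by omega, by omega⟩)))

end Rates

section Parameterization

variable {n α : ℕ} {kp km k hp hm h : ℕ → ℝ} {e u : ℝ}

lemma sParam_succ (hu : u ≠ 0) {i : ℕ} (hi : 1 ≤ i) :
    sParam n α kp km k hp hm h u (i + 1)
      = sigC n kp km k hp hm h i * u * sParam n α kp km k hp hm h u i := by
  obtain ⟨i, rfl⟩ := Nat.exists_eq_add_of_le' hi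
  rw [sParam, sParam, Nat.add_sub_cancel, Nat.add_sub_cancel, prod_Icc_succ_top (by omega),
    show ((i + 1 + 1 : ℕ) : ℤ) - α - 1 = ((i + 1 : ℕ) : ℤ) - α - 1 + 1 by push_cast; ring,
    zpow_add_one₀ hu]
  ring

lemma cParam_succ (hu : u ≠ 0) {i : ℕ} (hi : 1 ≤ i) :
    cParam n α kp km k hp hm h e u (i + 1)
      = muC n kp km k hp hm h i * u * cParam n α kp km k hp hm h e u i := by
  obtain ⟨i, rfl⟩ := Nat.exists_eq_add_of_le' hi
  rw [cParam, cParam, Nat.add_sub_cancel, Nat.add_sub_cancel, prod_Icc_succ_top (by omega),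
    show ((i + 1 + 1 : ℕ) : ℤ) - α - 1 = ((i + 1 : ℕ) : ℤ) - α - 1 + 1 by push_cast; ring,
    zpow_add_one₀ hu]
  ring

lemma dParam_eq_mul_succ (hu : u ≠ 0) {j : ℕ} (hj : j ≤ n - 2) :
    dParam n α kp km k hp hm h e u j
      = nuC n kp km k hp hm h j * u * dParam n α kp km k hp hm h e u (j + 1) := by
  rw [dParam, dParam, Icc_eq_cons_Ioc hj, prod_cons, ← Icc_add_one_left_eq_Ioc,
    show (n : ℤ) - j - α - 1 = n - (j + 1 : ℕ) - α - 1 + 1 by push_cast; ring,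
    zpow_add_one₀ hu]
  ring

variable (hk : ∀ i ∈ Icc 1 (n - 1), 0 < kp i ∧ 0 < km i ∧ 0 < k i)
  (hh : ∀ j ∈ Icc 1 (n - 1), 0 < hp j ∧ 0 < hm j ∧ 0 < h j) (hα : α ∈ Icc 1 (n - 1))
include hk hh hα

lemma sParam_self : sParam n α kp km k hp hm h u α = k α * kst kp km k α / u := by
  rw [mem_Icc] at hα
  have hP : ∏ x ∈ Icc 1 (α - 1), sigC n kp km k hp hm h x ≠ 0 :=
    (prod_pos fun x hx => sigC_pos hk hh (Icc_subset_Icc le_rfl (by omega) hx)).ne'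
  have hhst := (hst_pos hh (j := n - α) (mem_Icc.2 ⟨by omega, by omega⟩)).ne'
  have hkst := (kst_pos hk (mem_Icc.2 hα)).ne'
  obtain ⟨a, rfl⟩ := Nat.exists_eq_add_of_le' hα.1
  rw [Nat.add_sub_cancel] at hP
  rw [sParam, Nat.add_sub_cancel, prod_Icc_succ_top (by omega), div_mul_cancel_left₀ hP, sigC,
    sub_self, zero_sub, zpow_neg_one]
  field_simp

lemma cParam_self : cParam n α kp km k hp hm h e u α = e / u := by
  rw [mem_Icc] at hα
  rw [cParam,
    div_self (prod_pos fun x hx => muC_pos hk hh (Icc_subset_Icc le_rfl (by omega) hx)).ne',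
    sub_self, zero_sub, zpow_neg_one, one_mul, div_eq_mul_inv]

lemma mul_dParam_sub_self :
    h (n - α) * dParam n α kp km k hp hm h e u (n - α) = k α * (e / u) := by
  rw [mem_Icc] at hα
  have hhα := (hh (n - α) (mem_Icc.2 ⟨by omega, by omega⟩)).2.2.ne'
  rw [dParam,
    div_self (prod_pos fun x hx => nuC_pos hk hh (Icc_subset_Icc (by omega) le_rfl hx)).ne',
    show (n : ℤ) - (n - α : ℕ) - α - 1 = -1 by omega, zpow_neg_one]
  field_simp

lemma sParam_pos (hu : 0 < u) {i : ℕ} (hi : i ≤ n) :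
    0 < sParam n α kp km k hp hm h u i := by
  rw [mem_Icc] at hα
  have hσ : ∀ m ≤ n - 1, 0 < ∏ x ∈ Icc 1 m, sigC n kp km k hp hm h x := fun m hm =>
    prod_pos fun x hx => sigC_pos hk hh (Icc_subset_Icc le_rfl hm hx)
  exact mul_pos (mul_pos (mul_pos (hk α (mem_Icc.2 hα)).2.2
    (hst_pos hh (mem_Icc.2 ⟨by omega, by omega⟩)))
    (div_pos (hσ _ (by omega)) (hσ _ hα.2))) (zpow_pos hu _)

lemma cParam_pos (he : 0 < e) (hu : 0 < u) {i : ℕ} (hi : i ≤ n - 1) :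
    0 < cParam n α kp km k hp hm h e u i := by
  rw [mem_Icc] at hα
  have hμ : ∀ m ≤ n - 2, 0 < ∏ x ∈ Icc 1 m, muC n kp km k hp hm h x := fun m hm =>
    prod_pos fun x hx => muC_pos hk hh (Icc_subset_Icc le_rfl hm hx)
  exact mul_pos (mul_pos (div_pos (hμ _ (by omega)) (hμ _ (by omega))) he) (zpow_pos hu _)

lemma dParam_pos (he : 0 < e) (hu : 0 < u) {j : ℕ} (hj : 1 ≤ j) :
    0 < dParam n α kp km k hp hm h e u j := by
  rw [mem_Icc] at hα
  have hν : ∀ a, 1 ≤ a → 0 < ∏ x ∈ Icc a (n - 2), nuC n kp km k hp hm h x := fun a ha =>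
    prod_pos fun x hx => nuC_pos hk hh (Icc_subset_Icc ha le_rfl hx)
  exact mul_pos (mul_pos (mul_pos (div_pos (hk α (mem_Icc.2 hα)).2.2
    (hh (n - α) (mem_Icc.2 ⟨by omega, by omega⟩)).2.2)
    (div_pos (hν _ hj) (hν _ (by omega)))) he) (zpow_pos hu _)

lemma complex_c_param (hu : u ≠ 0) {i : ℕ} (hi : i ∈ Icc 1 (n - 1)) :
    kp i * sParam n α kp km k hp hm h u i * e
      = (km i + k i) * cParam n α kp km k hp hm h e u i := by
  set s := sParam n α kp km k hp hm h u
  set c := cParam n α kp km k hp hm h e u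
  have hse : Set.EqOn (fun x => s x * e) (fun x => k x * kst kp km k x * c x)
      (Icc 1 (n - 1)) := by
    refine eqOn_Icc_of_succ_eq_mul (r := fun x => sigC n kp km k hp hm h x * u)
      (fun x hx => ?_) (fun x hx => ?_) (fun x hx => ?_) hα ?_
    · rw [mem_Ico] at hx
      exact mul_ne_zero (sigC_pos hk hh (mem_Icc.2 ⟨hx.1, by omega⟩)).ne' hu
    · have hs1 : s (x + 1) = sigC n kp km k hp hm h x * u * s x :=
        sParam_succ hu (mem_Ico.1 hx).1
      simp only [hs1]
      ring
    · rw [mem_Ico] at hx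
      have hc1 : c (x + 1) = muC n kp km k hp hm h x * u * c x := cParam_succ hu hx.1
      have := (hk (x + 1) (mem_Icc.2 ⟨by omega, by omega⟩)).2.2.ne'
      have := (kst_pos hk (mem_Icc.2 ⟨hx.1, by omega⟩)).ne'
      have := (kst_pos hk (i := x + 1) (mem_Icc.2 ⟨by omega, by omega⟩)).ne'
      simp only [hc1, muC, sigC]
      field_simp
    · have hsα : s α = k α * kst kp km k α / u := sParam_self hk hh hα
      have hcα : c α = e / u := cParam_self hk hh hα
      simp only [hsα, hcα]
      ring
  have hsei : s i * e = k i * kst kp km k i * c i := hse hi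
  linear_combination kp i * hsei + c i * mul_kst hk hi

lemma flux_param (hu : u ≠ 0) {i : ℕ} (hi : i ∈ Icc 1 (n - 1)) :
    k i * cParam n α kp km k hp hm h e u i
      = h (n - i) * dParam n α kp km k hp hm h e u (n - i) := by
  set c := cParam n α kp km k hp hm h e u
  set d := dParam n α kp km k hp hm h e u
  refine eqOn_Icc_of_succ_eq_mul (f := fun x => k x * c x) (g := fun x => h (n - x) * d (n - x))
    (r := fun x => hst hp hm h (n - x) / kst kp km k (x + 1) * u)
    (fun x hx => ?_) (fun x hx => ?_) (fun x hx => ?_) hα ?_ hi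
  · rw [mem_Ico] at hx
    exact mul_ne_zero (div_ne_zero (hst_pos hh (mem_Icc.2 ⟨by omega, by omega⟩)).ne'
      (kst_pos hk (mem_Icc.2 ⟨by omega, by omega⟩)).ne') hu
  · rw [mem_Ico] at hx
    have hc1 : c (x + 1) = muC n kp km k hp hm h x * u * c x := cParam_succ hu hx.1
    have := (hk (x + 1) (mem_Icc.2 ⟨by omega, by omega⟩)).2.2.ne'
    have := (kst_pos hk (i := x + 1) (mem_Icc.2 ⟨by omega, by omega⟩)).ne'
    simp only [hc1, muC]
    field_simp
  · rw [mem_Ico] at hx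
    have hd1 : d (n - (x + 1)) = nuC n kp km k hp hm h (n - (x + 1)) * u * d (n - x) := by
      rw [show n - x = n - (x + 1) + 1 by omega]
      exact dParam_eq_mul_succ hu (by omega)
    have := (hh (n - (x + 1)) (mem_Icc.2 ⟨by omega, by omega⟩)).2.2.ne'
    have := (kst_pos hk (i := x + 1) (mem_Icc.2 ⟨by omega, by omega⟩)).ne'
    simp only [hd1, nuC, show n - (x + 1) + 1 = n - x by omega,
      show n - (n - (x + 1)) = x + 1 by omega]
    field_simp
  · have hdα : h (n - α) * d (n - α) = k α * (e / u) := mul_dParam_sub_self hk hh hα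
    have hcα : c α = e / u := cParam_self hk hh hα
    simp only [hdα, hcα]

theorem cmnPositive_param (he : 0 < e) (hu : 0 < u) :
    CMNPositive n n (fun j => n + 1 - j) (sParam n α kp km k hp hm h u) e
      (cParam n α kp km k hp hm h e u) (dParam n α kp km k hp hm h e u) := by
  rw [CMNPositive, union_image_rev_Icc]
  exact ⟨fun i hi => sParam_pos hk hh hα hu (mem_Icc.1 hi).2, he,
    fun i hi => cParam_pos hk hh hα he hu (mem_Icc.1 hi).2,
    fun j hj => dParam_pos hk hh hα he hu (mem_Icc.1 hj).1⟩

end Parameterization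

section Balanced

variable {n α : ℕ} {kp km k hp hm h : ℕ → ℝ}
  (hk : ∀ i ∈ Icc 1 (n - 1), 0 < kp i ∧ 0 < km i ∧ 0 < k i)
  (hh : ∀ j ∈ Icc 1 (n - 1), 0 < hp j ∧ 0 < hm j ∧ 0 < h j)
include hk hh

lemma complex_d_iff_succ {s c d : ℕ → ℝ} {e : ℝ} {i : ℕ} (hi : i ∈ Icc 1 (n - 1))
    (hC : kp i * s i * e = (km i + k i) * c i) (hF : k i * c i = h (n - i) * d (n - i))
    (hcα : c α ≠ 0) :
    hp (n - i) * s (i + 1) * c α = (hm (n - i) + h (n - i)) * d (n - i)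
      ↔ s (i + 1) = sigC n kp km k hp hm h i * (e / c α) * s i := by
  have hni : n - i ∈ Icc 1 (n - 1) := by rw [mem_Icc] at hi ⊢; omega
  have hkp := (hk i hi).1.ne'
  have hhp := (hh (n - i) hni).1.ne'
  have hkst := (kst_pos hk hi).ne'
  have hse : s i * e = k i * kst kp km k i * c i :=
    mul_left_cancel₀ hkp (by linear_combination hC - c i * mul_kst hk hi)
  have key : (hm (n - i) + h (n - i)) * d (n - i)
      = hp (n - i) * (sigC n kp km k hp hm h i * e * s i) := by
    rw [← mul_hst hh hni, sigC]
    field_simp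
    linear_combination (-hst hp hm h (n - i) * kst kp km k i) * hF - hst hp hm h (n - i) * hse
  rw [key, mul_assoc, mul_right_inj' hhp, ← eq_div_iff hcα, mul_div_assoc', div_mul_eq_mul_div]

theorem futileBalanced_param {e u : ℝ} (hα : α ∈ Icc 1 (n - 1)) (he : e ≠ 0)
    (hu : u ≠ 0) :
    FutileBalanced n α kp km k hp hm h (sParam n α kp km k hp hm h u) e
      (cParam n α kp km k hp hm h e u) (dParam n α kp km k hp hm h e u) := by
  refine ⟨fun i hi => complex_c_param hk hh hα hu hi, fun j hj => ?_,
    fun i hi => flux_param hk hh hα hu hi⟩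
  rw [mem_Icc] at hj
  have hi : n - j ∈ Icc 1 (n - 1) := mem_Icc.2 ⟨by omega, by omega⟩
  have hcα : cParam n α kp km k hp hm h e u α = e / u := cParam_self hk hh hα
  have hD := (complex_d_iff_succ hk hh hi (complex_c_param hk hh hα hu hi)
    (flux_param hk hh hα hu hi) (by rw [hcα]; exact div_ne_zero he hu)).2
    (by rw [hcα, div_div_cancel₀ he]; exact sParam_succ hu (mem_Icc.1 hi).1)
  rwa [Nat.sub_sub_self (by omega : j ≤ n), show n - j + 1 = n + 1 - j by omega] at hD

lemma FutileBalanced.succ {s c d : ℕ → ℝ} {e : ℝ}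
    (hbal : FutileBalanced n α kp km k hp hm h s e c d) (hcα : c α ≠ 0) :
    ∀ i ∈ Ico 1 n, s (i + 1) = sigC n kp km k hp hm h i * (e / c α) * s i := by
  intro i hi
  rw [mem_Ico] at hi
  have hi' : i ∈ Icc 1 (n - 1) := mem_Icc.2 ⟨hi.1, by omega⟩
  refine (complex_d_iff_succ hk hh hi' (hbal.complex_c i hi') (hbal.flux i hi') hcα).1 ?_
  have hD := hbal.complex_d (n - i) (mem_Icc.2 ⟨by omega, by omega⟩)
  rwa [show n + 1 - (n - i) = i + 1 by omega] at hD

theorem FutileBalanced.eqOn {s c d s' c' d' : ℕ → ℝ} {e : ℝ} (hα : α ∈ Icc 1 (n - 1))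
    (hbal : FutileBalanced n α kp km k hp hm h s e c d)
    (hbal' : FutileBalanced n α kp km k hp hm h s' e c' d') (he : e ≠ 0) (hcα : c α ≠ 0)
    (hcα' : c' α = c α) :
    Set.EqOn s s' (Icc 1 n) ∧ Set.EqOn c c' (Icc 1 (n - 1))
      ∧ Set.EqOn d d' (Icc 1 (n - 1)) := by
  have hsα : s α = s' α := by
    have hC' := hbal'.complex_c α hα
    rw [hcα'] at hC'
    exact mul_left_cancel₀ (hk α hα).1.ne'
      (mul_right_cancel₀ he ((hbal.complex_c α hα).trans hC'.symm))
  have hs : Set.EqOn s s' (Icc 1 n) := by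
    refine eqOn_Icc_of_succ_eq_mul (fun i hi => ?_) (hbal.succ hk hh hcα) (fun i hi => ?_)
      (Icc_subset_Icc_right (by omega) hα) hsα
    · exact mul_ne_zero (sigC_pos hk hh (by rw [mem_Ico] at hi; rw [mem_Icc]; omega)).ne'
        (div_ne_zero he hcα)
    · rw [hbal'.succ hk hh (hcα' ▸ hcα) i hi, hcα']
  have hc : Set.EqOn c c' (Icc 1 (n - 1)) := fun i hi => by
    have hC := hbal.complex_c i hi
    rw [hs (Icc_subset_Icc_right (by omega) hi)] at hC
    have hpos := hk i hi
    exact mul_left_cancel₀ (by linarith) (hC.symm.trans (hbal'.complex_c i hi))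
  refine ⟨hs, hc, fun j hj => ?_⟩
  rw [mem_coe, mem_Icc] at hj
  have hj' : n - j ∈ Icc 1 (n - 1) := mem_Icc.2 ⟨by omega, by omega⟩
  have hF := hbal.flux (n - j) hj'
  have hF' := hbal'.flux (n - j) hj'
  rw [Nat.sub_sub_self (by omega : j ≤ n), hc hj'] at hF
  rw [Nat.sub_sub_self (by omega : j ≤ n)] at hF'
  exact mul_left_cancel₀ (hh j (mem_Icc.2 hj)).2.2.ne' (hF.symm.trans hF')

end Balanced

theorem futile_cycle_steady_state_parameterization_general
    (n α : ℕ) (hα : α ∈ Finset.Icc 1 (n - 1))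
    (kp km k hp hm h : ℕ → ℝ)
    (hkpos : ∀ i ∈ Finset.Icc 1 (n - 1), 0 < kp i ∧ 0 < km i ∧ 0 < k i)
    (hhpos : ∀ j ∈ Finset.Icc 1 (n - 1), 0 < hp j ∧ 0 < hm j ∧ 0 < h j)
    (hk0 : k 0 = 0) (hkpn : kp n = 0) (hkmn : km n = 0) :
    (∀ (s : ℕ → ℝ) (e : ℝ) (c d : ℕ → ℝ),
        CMNPositive n n (fun j => n + 1 - j) s e c d →
        CMNSteadyState n n α (fun j => n + 1 - j) kp km k hp hm h s e c d →
        (∀ i ∈ Finset.Icc 1 n, s i = sParam n α kp km k hp hm h (e / c α) i)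
          ∧ (∀ i ∈ Finset.Icc 1 (n - 1),
              c i = cParam n α kp km k hp hm h e (e / c α) i)
          ∧ (∀ j ∈ Finset.Icc 1 (n - 1),
              d j = dParam n α kp km k hp hm h e (e / c α) j))
    ∧ (∀ e u : ℝ, 0 < e → 0 < u →
        CMNPositive n n (fun j => n + 1 - j)
          (sParam n α kp km k hp hm h u) e
          (cParam n α kp km k hp hm h e u) (dParam n α kp km k hp hm h e u)
        ∧ CMNSteadyState n n α (fun j => n + 1 - j) kp km k hp hm h
            (sParam n α kp km k hp hm h u) e
            (cParam n α kp km k hp hm h e u) (dParam n α kp km k hp hm h e u)) := by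
  refine ⟨fun s e c d hpos hss => ?_, fun e u he hu =>
    ⟨cmnPositive_param hkpos hhpos hα he hu,
      (cmnSteadyState_iff_futileBalanced hk0 hkpn hkmn).2
        (futileBalanced_param hkpos hhpos hα he.ne' hu.ne')⟩⟩
  have he : 0 < e := hpos.2.1
  have hcα : 0 < c α := hpos.2.2.1 α hα
  have hbal := (cmnSteadyState_iff_futileBalanced hk0 hkpn hkmn).1 hss
  have hparam := futileBalanced_param hkpos hhpos hα he.ne' (div_pos he hcα).ne'
  obtain ⟨hs, hc, hd⟩ := hbal.eqOn hkpos hhpos hα hparam he.ne' hcα.ne'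
    (by rw [cParam_self hkpos hhpos hα, div_div_cancel₀ he.ne'])
  exact ⟨fun i hi => hs hi, fun i hi => hc hi, fun j hj => hd hj⟩

/-- For the `n`-site futile cycle with bifunctional enzyme `C α`:
(i) every positive steady state satisfies the explicit parameterization
`s i = sParam`, `c i = cParam`, `d j = dParam` with `u = e / c α`;
(ii) conversely, for every `e, u > 0` the strictly positive vector given by these
formulas is a positive steady state. -/
theorem futile_cycle_steady_state_parameterization
    (n α : ℕ) (hn : 2 ≤ n) (hα : α ∈ Finset.Icc 1 (n - 1))
    (kp km k hp hm h : ℕ → ℝ)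
    (hkpos : ∀ i ∈ Finset.Icc 1 (n - 1), 0 < kp i ∧ 0 < km i ∧ 0 < k i)
    (hhpos : ∀ j ∈ Finset.Icc 1 (n - 1), 0 < hp j ∧ 0 < hm j ∧ 0 < h j)
    (hk0 : k 0 = 0) (hkpn : kp n = 0) (hkmn : km n = 0) (hh0 : h 0 = 0) :
    (∀ (s : ℕ → ℝ) (e : ℝ) (c d : ℕ → ℝ),
        CMNPositive n n (fun j => n + 1 - j) s e c d →
        CMNSteadyState n n α (fun j => n + 1 - j) kp km k hp hm h s e c d →
        (∀ i ∈ Finset.Icc 1 n, s i = sParam n α kp km k hp hm h (e / c α) i)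
          ∧ (∀ i ∈ Finset.Icc 1 (n - 1),
              c i = cParam n α kp km k hp hm h e (e / c α) i)
          ∧ (∀ j ∈ Finset.Icc 1 (n - 1),
              d j = dParam n α kp km k hp hm h e (e / c α) j))
    ∧ (∀ e u : ℝ, 0 < e → 0 < u →
        CMNPositive n n (fun j => n + 1 - j)
          (sParam n α kp km k hp hm h u) e
          (cParam n α kp km k hp hm h e u) (dParam n α kp km k hp hm h e u)
        ∧ CMNSteadyState n n α (fun j => n + 1 - j) kp km k hp hm h
            (sParam n α kp km k hp hm h u) e
            (cParam n α kp km k hp hm h e u) (dParam n α kp km k hp hm h e u)) :=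
  futile_cycle_steady_state_parameterization_general n α hα kp km k hp hm h hkpos hhpos hk0 hkpn
    hkmn
end

section
/- Let g(u) = ((T_s − a_{n−1})/T_e) u^{n−1} − Σ_{i=0}^{n−2} (a_i/T_e) u^i and h(u) = u^{n−1} (Σ_{i=0}^{n−2} b_i u^i) / (u^{n−1} + Σ_{i=0}^{n−2} q_i u^i), where all a_i, b_i, q_i, T_e are positive constants. Then the equation g(u) = h(u) has a positive solution u > 0 if and only if T_s > a_{n−1}; moreover when T_s > a_{n−1}, the number of positive solutions counted with multiplicity (of the equivalent polynomial equation obtained by clearing the denominator) is odd. -/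
open Polynomial

private lemma multiset_prod_pos17 (s : Multiset ℝ) (h : ∀ x ∈ s, 0 < x) : 0 < s.prod := by
  induction s using Multiset.induction with
  | empty => simp
  | cons a s ih =>
    simp only [Multiset.prod_cons]
    exact mul_pos (h a (Multiset.mem_cons_self a s))
      (ih fun x hx => h x (Multiset.mem_cons_of_mem hx))

open Filter in
private lemma odd_pos_roots17 (P : Polynomial ℝ) (hP0 : P.eval 0 < 0)
    (hlc : 0 < P.leadingCoeff) (hdeg : 0 < P.degree) :
    Odd (Multiset.card (P.roots.filter fun x => 0 < x)) := by
  have hPne : P ≠ 0 := by rintro rfl; simp at hP0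
  obtain ⟨Q, hPQ⟩ := P.prod_multiset_X_sub_C_dvd
  set M : Polynomial ℝ := (P.roots.map fun a => X - C a).prod with hM
  have hMroots : M.roots = P.roots := roots_multiset_prod_X_sub_C _
  have hMmonic : M.Monic := monic_multiset_prod_of_monic _ _ fun a _ => monic_X_sub_C a
  have hQne : Q ≠ 0 := by rintro rfl; rw [mul_zero] at hPQ; exact hPne hPQ
  have hQroot : ∀ r : ℝ, Q.eval r ≠ 0 := by
    intro r hr
    have h1 : P.rootMultiplicity r = M.rootMultiplicity r + Q.rootMultiplicity r := by
      conv_lhs => rw [hPQ]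
      exact rootMultiplicity_mul (hPQ ▸ hPne)
    have h2 : M.rootMultiplicity r = P.rootMultiplicity r := by
      rw [← count_roots, hMroots, count_roots]
    have h4 : 0 < Q.rootMultiplicity r := (rootMultiplicity_pos hQne).2 hr
    omega
  have h1 : ∀ᶠ x : ℝ in atTop, 0 < P.eval x :=
    (P.tendsto_atTop_of_leadingCoeff_nonneg hdeg hlc.le).eventually_gt_atTop 0
  have h2 : ∀ᶠ x : ℝ in atTop, ∀ r ∈ P.roots.toFinset, r < x :=
    P.roots.toFinset.eventually_all.mpr fun r _ => eventually_gt_atTop r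
  obtain ⟨x₀, hx₀P, hx₀r⟩ := (h1.and h2).exists
  have hMx₀ : 0 < M.eval x₀ := by
    rw [hM, eval_multiset_prod, Multiset.map_map]
    refine multiset_prod_pos17 _ fun y hy => ?_
    obtain ⟨r, hr, rfl⟩ := Multiset.mem_map.1 hy
    simp only [Function.comp_apply, eval_sub, eval_X, eval_C]
    have := hx₀r r (Multiset.mem_toFinset.2 hr)
    linarith
  have hQx₀ : 0 < Q.eval x₀ := by
    have h := hx₀P
    rw [hPQ, eval_mul] at h
    nlinarith [lt_or_gt_of_ne (hQroot x₀)]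
  have hQ0 : 0 < Q.eval 0 := by
    rcases lt_or_gt_of_ne (hQroot 0) with hneg | hpos
    · exfalso
      have hc : Continuous fun x => Q.eval x := Q.continuous
      have h0m : (0:ℝ) ∈ Set.uIcc (Q.eval 0) (Q.eval x₀) :=
        Set.mem_uIcc.2 (Or.inl ⟨hneg.le, hQx₀.le⟩)
      obtain ⟨c, _, hc0⟩ := intermediate_value_uIcc hc.continuousOn h0m
      exact hQroot c hc0
    · exact hpos
  have hM0 : M.eval 0 < 0 := by
    have h := hP0
    rw [hPQ, eval_mul] at h
    nlinarith
  have h0notin : (0:ℝ) ∉ P.roots := by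
    intro h
    exact hP0.ne (isRoot_of_mem_roots h)
  set s₁ := P.roots.filter (fun x => 0 < x) with hs₁
  set s₂ := P.roots.filter (fun x => ¬ 0 < x) with hs₂
  have hsplit : s₁ + s₂ = P.roots := Multiset.filter_add_not _ _
  have hEvalM : M.eval 0 = (s₁.map Neg.neg).prod * (s₂.map Neg.neg).prod := by
    rw [hM, eval_multiset_prod, Multiset.map_map]
    have hmapeq : (Multiset.map ((fun p => eval 0 p) ∘ fun a => X - C a) P.roots)
        = (P.roots.map Neg.neg) := by
      simp [Function.comp_def]
    rw [hmapeq]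
    have : (P.roots.map Neg.neg) = ((s₁ + s₂).map Neg.neg) := by rw [hsplit]
    rw [this, Multiset.map_add, Multiset.prod_add]
  have hs₁pos : 0 < s₁.prod :=
    multiset_prod_pos17 _ fun x hx => (Multiset.mem_filter.1 hx).2
  have hs₂pos : 0 < (s₂.map Neg.neg).prod := by
    refine multiset_prod_pos17 _ fun y hy => ?_
    obtain ⟨x, hx, rfl⟩ := Multiset.mem_map.1 hy
    obtain ⟨hxs, hxn⟩ := Multiset.mem_filter.1 hx
    have hxne : x ≠ 0 := fun h => h0notin (h ▸ hxs)
    have : x < 0 := lt_of_le_of_ne (not_lt.1 hxn) hxne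
    linarith
  rw [hEvalM, Multiset.prod_map_neg] at hM0
  rcases Nat.even_or_odd (Multiset.card s₁) with he | ho
  · exfalso
    rw [he.neg_one_pow] at hM0
    nlinarith
  · exact ho

/-- `g(u) = ((T_s - a_{n-1})/T_e) u^{n-1} - ∑_{i=0}^{n-2} (a_i/T_e) u^i`. -/
noncomputable def gFun17 (n : ℕ) (Ts Te : ℝ) (a : ℕ → ℝ) (u : ℝ) : ℝ :=
  ((Ts - a (n - 1)) / Te) * u ^ (n - 1)
    - ∑ i ∈ Finset.range (n - 1), (a i / Te) * u ^ i

/-- `h(u) = u^{n-1} (∑_{i=0}^{n-2} b_i u^i) / (u^{n-1} + ∑_{i=0}^{n-2} q_i u^i)`. -/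
noncomputable def hFun17 (n : ℕ) (b q : ℕ → ℝ) (u : ℝ) : ℝ :=
  u ^ (n - 1) * (∑ i ∈ Finset.range (n - 1), b i * u ^ i)
    / (u ^ (n - 1) + ∑ i ∈ Finset.range (n - 1), q i * u ^ i)

/-- The polynomial obtained by clearing the denominator of `g = h`. -/
noncomputable def clearedPoly17 (n : ℕ) (Ts Te : ℝ) (a b q : ℕ → ℝ) : Polynomial ℝ :=
  (C ((Ts - a (n - 1)) / Te) * X ^ (n - 1)
      - ∑ i ∈ Finset.range (n - 1), C (a i / Te) * X ^ i)
    * (X ^ (n - 1) + ∑ i ∈ Finset.range (n - 1), C (q i) * X ^ i)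
    - X ^ (n - 1) * ∑ i ∈ Finset.range (n - 1), C (b i) * X ^ i

/-- **case `α = n-1`.** With all `a_i, b_i, q_i, T_e` positive,
the equation `g(u) = h(u)` has a positive solution iff `T_s > a_{n-1}`; and when
`T_s > a_{n-1}`, the number of positive roots of the cleared polynomial, counted
with multiplicity, is odd. -/
theorem futile_cycle_alpha_eq_n_sub_one_positive_steady_states
    (n : ℕ) (hn : 2 ≤ n) (Ts Te : ℝ) (hTs : 0 < Ts) (hTe : 0 < Te)
    (a b q : ℕ → ℝ)
    (ha : ∀ i ≤ n - 1, 0 < a i) (hb : ∀ i ≤ n - 2, 0 < b i)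
    (hq : ∀ i ≤ n - 2, 0 < q i) :
    ((∃ u : ℝ, 0 < u ∧ gFun17 n Ts Te a u = hFun17 n b q u) ↔ a (n - 1) < Ts)
    ∧ (a (n - 1) < Ts →
        Odd (Multiset.card
          ((clearedPoly17 n Ts Te a b q).roots.filter fun x => 0 < x))) := by
  have hm1 : 1 ≤ n - 1 := by omega
  have hmne : n - 1 ≠ 0 := by omega
  have hrangene : (Finset.range (n - 1)).Nonempty := Finset.nonempty_range_iff.2 hmne
  have hevalP : ∀ u : ℝ, (clearedPoly17 n Ts Te a b q).eval u =
      (((Ts - a (n - 1)) / Te) * u ^ (n - 1)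
          - ∑ i ∈ Finset.range (n - 1), (a i / Te) * u ^ i)
        * (u ^ (n - 1) + ∑ i ∈ Finset.range (n - 1), q i * u ^ i)
      - u ^ (n - 1) * ∑ i ∈ Finset.range (n - 1), b i * u ^ i := by
    intro u
    simp [clearedPoly17, eval_finset_sum]
  have hDpos : ∀ u : ℝ, 0 < u →
      0 < u ^ (n - 1) + ∑ i ∈ Finset.range (n - 1), q i * u ^ i := by
    intro u hu
    have h1 : 0 < u ^ (n - 1) := pow_pos hu _
    have h2 : 0 ≤ ∑ i ∈ Finset.range (n - 1), q i * u ^ i :=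
      Finset.sum_nonneg fun i hi =>
        (mul_pos (hq i (by have := Finset.mem_range.1 hi; omega)) (pow_pos hu i)).le
    linarith
  have hNpos : ∀ u : ℝ, 0 < u →
      0 < u ^ (n - 1) * ∑ i ∈ Finset.range (n - 1), b i * u ^ i := by
    intro u hu
    refine mul_pos (pow_pos hu _) (Finset.sum_pos (fun i hi => ?_) hrangene)
    exact mul_pos (hb i (by have := Finset.mem_range.1 hi; omega)) (pow_pos hu i)
  have hiff : ∀ u : ℝ, 0 < u →
      (gFun17 n Ts Te a u = hFun17 n b q u ↔
        (clearedPoly17 n Ts Te a b q).eval u = 0) := by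
    intro u hu
    rw [gFun17, hFun17, eq_div_iff (hDpos u hu).ne', hevalP]
    exact sub_eq_zero.symm
  have key : a (n - 1) < Ts →
      Odd (Multiset.card
        ((clearedPoly17 n Ts Te a b q).roots.filter fun x => 0 < x)) := by
    intro hc
    set c : ℝ := (Ts - a (n - 1)) / Te with hcdef
    have hcpos : 0 < c := div_pos (by linarith) hTe
    have hdegsum : ∀ f : ℕ → ℝ,
        (∑ i ∈ Finset.range (n - 1), C (f i) * X ^ i).degree
          < ((n - 1 : ℕ) : WithBot ℕ) := by
      intro f
      refine lt_of_le_of_lt (degree_sum_le _ _) ?_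
      rw [Finset.sup_lt_iff (by exact_mod_cast WithBot.bot_lt_coe (n - 1))]
      intro i hi
      exact lt_of_le_of_lt (degree_C_mul_X_pow_le i _)
        (by exact_mod_cast Finset.mem_range.1 hi)
    set A : Polynomial ℝ := ∑ i ∈ Finset.range (n - 1), C (a i / Te) * X ^ i with hAdef
    set Qp : Polynomial ℝ := ∑ i ∈ Finset.range (n - 1), C (q i) * X ^ i with hQpdef
    set B : Polynomial ℝ := ∑ i ∈ Finset.range (n - 1), C (b i) * X ^ i with hBdef
    set F : Polynomial ℝ := C c * X ^ (n - 1) - A with hFdef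
    set G : Polynomial ℝ := X ^ (n - 1) + Qp with hGdef
    have hdegCX : (C c * X ^ (n - 1)).degree = ((n - 1 : ℕ) : WithBot ℕ) :=
      degree_C_mul_X_pow _ hcpos.ne'
    have hdegF : F.degree = ((n - 1 : ℕ) : WithBot ℕ) := by
      rw [hFdef, degree_sub_eq_left_of_degree_lt (by rw [hdegCX]; exact hdegsum _), hdegCX]
    have hlcF : F.leadingCoeff = c := by
      rw [hFdef, leadingCoeff_sub_of_degree_lt (by rw [hdegCX]; exact hdegsum _),
        leadingCoeff_mul_monic (monic_X_pow _), leadingCoeff_C]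
    have hGmonic : G.Monic := monic_X_pow_add (hdegsum q)
    have hdegG : G.degree = ((n - 1 : ℕ) : WithBot ℕ) := by
      rw [hGdef, degree_add_eq_left_of_degree_lt (by rw [degree_X_pow]; exact hdegsum _),
        degree_X_pow]
    have hdegFG : (F * G).degree = ((2 * (n - 1) : ℕ) : WithBot ℕ) := by
      rw [hGmonic.degree_mul, hdegF, hdegG, ← Nat.cast_add, two_mul]
    have hdegH : (X ^ (n - 1) * B).degree < (F * G).degree := by
      rw [hdegFG]
      refine lt_of_le_of_lt (degree_mul_le _ _) ?_
      rw [degree_X_pow]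
      calc ((n - 1 : ℕ) : WithBot ℕ) + B.degree
          < ((n - 1 : ℕ) : WithBot ℕ) + ((n - 1 : ℕ) : WithBot ℕ) :=
            WithBot.add_lt_add_left WithBot.coe_ne_bot (hdegsum _)
        _ = ((2 * (n - 1) : ℕ) : WithBot ℕ) := by rw [← Nat.cast_add, two_mul]
    have hPeq : clearedPoly17 n Ts Te a b q = F * G - X ^ (n - 1) * B := by
      simp only [clearedPoly17, hFdef, hGdef, hAdef, hQpdef, hBdef, hcdef]
    have hdegP : (clearedPoly17 n Ts Te a b q).degree = ((2 * (n - 1) : ℕ) : WithBot ℕ) := by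
      rw [hPeq, degree_sub_eq_left_of_degree_lt hdegH, hdegFG]
    have hlcP : (clearedPoly17 n Ts Te a b q).leadingCoeff = c := by
      rw [hPeq, leadingCoeff_sub_of_degree_lt hdegH, leadingCoeff_mul_monic hGmonic, hlcF]
    have hdeg : 0 < (clearedPoly17 n Ts Te a b q).degree := by
      rw [hdegP]
      exact_mod_cast Nat.pos_of_ne_zero (by omega)
    have hsum0 : ∀ f : ℕ → ℝ, ∑ i ∈ Finset.range (n - 1), f i * (0:ℝ) ^ i = f 0 := by
      intro f
      rw [Finset.sum_eq_single 0 (fun i _ hne => by simp [zero_pow hne])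
        (fun h => absurd (Finset.mem_range.2 (by omega)) h)]
      simp
    have hSa : (∑ i ∈ Finset.range (n - 1), a i / Te * (0:ℝ) ^ i) = a 0 / Te :=
      hsum0 fun i => a i / Te
    have hSq : (∑ i ∈ Finset.range (n - 1), q i * (0:ℝ) ^ i) = q 0 := hsum0 q
    have hSb : (∑ i ∈ Finset.range (n - 1), b i * (0:ℝ) ^ i) = b 0 := hsum0 b
    have hP0 : (clearedPoly17 n Ts Te a b q).eval 0 < 0 := by
      rw [hevalP, hSa, hSq, hSb, zero_pow hmne]
      have ha0 := ha 0 (by omega)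
      have hq0 := hq 0 (by omega)
      have hd : 0 < a 0 / Te := div_pos ha0 hTe
      nlinarith
    exact odd_pos_roots17 _ hP0 (hlcP ▸ hcpos) hdeg
  refine ⟨⟨?_, ?_⟩, key⟩
  · rintro ⟨u, hu, heq⟩
    have hgpos : 0 < gFun17 n Ts Te a u := by
      rw [heq, hFun17]
      exact div_pos (hNpos u hu) (hDpos u hu)
    rw [gFun17] at hgpos
    have hSa : 0 < ∑ i ∈ Finset.range (n - 1), a i / Te * u ^ i :=
      Finset.sum_pos (fun i hi => mul_pos
        (div_pos (ha i (by have := Finset.mem_range.1 hi; omega)) hTe)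
        (pow_pos hu i)) hrangene
    have hc' : 0 < (Ts - a (n - 1)) / Te := by
      nlinarith [pow_pos hu (n - 1)]
    rcases div_pos_iff.1 hc' with ⟨h, _⟩ | ⟨_, h⟩
    · linarith
    · linarith
  · intro hc
    have hodd := key hc
    have hcard : Multiset.card
        ((clearedPoly17 n Ts Te a b q).roots.filter fun x => 0 < x) ≠ 0 := by
      intro h
      rw [h] at hodd
      simp [Nat.odd_iff] at hodd
    have hne : ((clearedPoly17 n Ts Te a b q).roots.filter fun x => 0 < x) ≠ 0 := by
      intro h
      rw [h] at hcard
      simp at hcard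
    obtain ⟨x, hx⟩ := Multiset.exists_mem_of_ne_zero hne
    obtain ⟨hxroots, hxpos⟩ := Multiset.mem_filter.1 hx
    exact ⟨x, hxpos, (hiff x hxpos).2 (isRoot_of_mem_roots hxroots)⟩
end
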